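/- arXiv:2003.08569 — 8 statements merged into one kernel-verified Lean document; each statement's English description precedes it below -/
import Mathlib

section
/- Let d ≥ 1 be an integer and let 1 ≤ p < q < ∞ be real numbers. Define f : ℝ^d → ℝ by f(x) := |x|^{-d/q}. Then f belongs to the Morrey space M^p_q(ℝ^d), and its Morrey norm equals ‖f‖_{M^p_q} = (ω_{d-1}/d)^{1/q} · (q/(q-p))^{1/p}, where ω_{d-1}/d equals the Lebesgue measure of the unit ball B(0,1) in ℝ^d. -/
open MeasureTheory Metric
open scoped ENNReal

/-- The Morrey norm `‖f‖_{M^p_q}` of a function `f : ℝ^d → ℝ`, valued in `ℝ≥0∞`: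
the supremum over centers `a` and radii `R > 0` of
`|B(a,R)|^{1/q - 1/p} · (∫_{B(a,R)} |f(y)|^p dy)^{1/p}`. -/
noncomputable def morreyNorm (d : ℕ) (p q : ℝ) (f : EuclideanSpace ℝ (Fin d) → ℝ) : ℝ≥0∞ :=
  ⨆ (a : EuclideanSpace ℝ (Fin d)) (R : ℝ) (_ : 0 < R),
    volume (ball a R) ^ (1 / q - 1 / p) *
      (∫⁻ y in ball a R, ENNReal.ofReal (|f y| ^ p)) ^ (1 / p)

section MorreyAux
open Set

variable {d : ℕ}

lemma morrey_aux_set_eq {β : ℝ} (hβ : 0 < β) {t : ℝ} (ht : 0 < t) :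
    {y : EuclideanSpace ℝ (Fin d) | t < ‖y‖ ^ (-β)} =
      ball (0 : EuclideanSpace ℝ (Fin d)) (t ^ (-β)⁻¹) \ {0} := by
  ext y
  simp only [mem_setOf_eq, mem_diff, mem_ball_zero_iff, mem_singleton_iff]
  constructor
  · intro h
    have hy : y ≠ 0 := by
      rintro rfl
      rw [norm_zero, Real.zero_rpow (neg_lt_zero.mpr hβ).ne] at h
      linarith
    exact ⟨(Real.lt_rpow_inv_iff_of_neg (norm_pos_iff.mpr hy) ht
      (neg_lt_zero.mpr hβ)).mpr h, hy⟩
  · rintro ⟨h1, h2⟩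
    exact (Real.lt_rpow_inv_iff_of_neg (norm_pos_iff.mpr h2) ht (neg_lt_zero.mpr hβ)).mp h1

lemma morrey_aux_layercake (hd : 0 < d) {β : ℝ} (hβ : 0 < β)
    (a : EuclideanSpace ℝ (Fin d)) (R : ℝ) :
    (∫⁻ y in ball a R, ENNReal.ofReal (‖y‖ ^ (-β))) =
      ∫⁻ t in Ioi (0:ℝ),
        volume (ball (0 : EuclideanSpace ℝ (Fin d)) (t ^ (-β)⁻¹) ∩ ball a R) := by
  haveI : Nontrivial (EuclideanSpace ℝ (Fin d)) :=
    Module.nontrivial_of_finrank_pos (R := ℝ)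
      (by rw [finrank_euclideanSpace_fin]; exact hd)
  have hm : Measurable fun y : EuclideanSpace ℝ (Fin d) => ‖y‖ ^ (-β) :=
    measurable_norm.pow measurable_const
  rw [lintegral_eq_lintegral_meas_lt _
    (Filter.Eventually.of_forall fun y => Real.rpow_nonneg (norm_nonneg y) _) hm.aemeasurable]
  refine setLIntegral_congr_fun measurableSet_Ioi (fun t ht => ?_)
  rw [Measure.restrict_apply (measurableSet_lt measurable_const hm), morrey_aux_set_eq hβ ht]
  have hseteq : (ball (0 : EuclideanSpace ℝ (Fin d)) (t ^ (-β)⁻¹) \ {0}) ∩ ball a R =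
      (ball (0 : EuclideanSpace ℝ (Fin d)) (t ^ (-β)⁻¹) ∩ ball a R) \ {0} := by
    ext y; simp only [mem_diff, mem_inter_iff, mem_singleton_iff]; tauto
  rw [hseteq, measure_diff_null (measure_singleton 0)]

lemma morrey_aux_mono (hd : 0 < d) {β : ℝ} (hβ : 0 < β)
    (a : EuclideanSpace ℝ (Fin d)) (R : ℝ) :
    (∫⁻ y in ball a R, ENNReal.ofReal (‖y‖ ^ (-β))) ≤
      ∫⁻ y in ball (0 : EuclideanSpace ℝ (Fin d)) R, ENNReal.ofReal (‖y‖ ^ (-β)) := by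
  rw [morrey_aux_layercake hd hβ, morrey_aux_layercake hd hβ]
  refine setLIntegral_mono' measurableSet_Ioi fun t ht => ?_
  set r := t ^ (-β)⁻¹ with hr
  rcases le_total r R with h | h
  · calc volume (ball (0 : EuclideanSpace ℝ (Fin d)) r ∩ ball a R)
        ≤ volume (ball (0 : EuclideanSpace ℝ (Fin d)) r) := measure_mono inter_subset_left
      _ = volume (ball (0 : EuclideanSpace ℝ (Fin d)) r ∩ ball 0 R) := by
          rw [inter_eq_left.mpr (ball_subset_ball h)]
  · calc volume (ball (0 : EuclideanSpace ℝ (Fin d)) r ∩ ball a R)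
        ≤ volume (ball a R) := measure_mono inter_subset_right
      _ = volume (ball (0 : EuclideanSpace ℝ (Fin d)) R) := Measure.addHaar_ball_center volume a R
      _ = volume (ball (0 : EuclideanSpace ℝ (Fin d)) r ∩ ball 0 R) := by
          rw [inter_eq_right.mpr (ball_subset_ball h)]

lemma morrey_aux_value (hd : 0 < d) {β : ℝ} (hβ : 0 < β) (hβd : β < d) {R : ℝ} (hR : 0 < R) :
    (∫⁻ y in ball (0 : EuclideanSpace ℝ (Fin d)) R, ENNReal.ofReal (‖y‖ ^ (-β))) =
      ENNReal.ofReal (R ^ ((d : ℝ) - β) * (d / (d - β))) *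
        volume (ball (0 : EuclideanSpace ℝ (Fin d)) 1) := by
  haveI : Nontrivial (EuclideanSpace ℝ (Fin d)) :=
    Module.nontrivial_of_finrank_pos (R := ℝ) (by rw [finrank_euclideanSpace_fin]; exact hd)
  have hV : volume (ball (0 : EuclideanSpace ℝ (Fin d)) 1) ≠ ⊤ := measure_ball_lt_top.ne
  rw [morrey_aux_layercake hd hβ]
  have hint : ∀ t ∈ Ioi (0:ℝ),
      volume (ball (0 : EuclideanSpace ℝ (Fin d)) (t ^ (-β)⁻¹) ∩ ball 0 R)
        = ENNReal.ofReal (min (t ^ (-β)⁻¹) R ^ d) *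
            volume (ball (0 : EuclideanSpace ℝ (Fin d)) 1) := by
    intro t ht
    have hrp : 0 < t ^ (-β)⁻¹ := Real.rpow_pos_of_pos ht _
    have hmin : ball (0 : EuclideanSpace ℝ (Fin d)) (t ^ (-β)⁻¹) ∩ ball 0 R
        = ball 0 (min (t ^ (-β)⁻¹) R) := by
      ext y; simp [lt_min_iff]
    rw [hmin, Measure.addHaar_ball volume _ (le_min hrp.le hR.le), finrank_euclideanSpace_fin]
  rw [setLIntegral_congr_fun measurableSet_Ioi hint,
    lintegral_mul_const' _ _ hV]
  congr 1
  -- split the integral at T = R ^ (-β)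
  set T := R ^ (-β) with hTdef
  have hT : 0 < T := Real.rpow_pos_of_pos hR _
  set e : ℝ := -((d : ℝ) / β) with hedef
  have hdpos : (0:ℝ) < d := by exact_mod_cast hd
  have he : e < -1 := by
    rw [hedef, neg_lt_neg_iff]
    rw [lt_div_iff₀ hβ]; linarith
  have he1 : e + 1 < 0 := by linarith
  rw [← Set.Ioc_union_Ioi_eq_Ioi hT.le, lintegral_union measurableSet_Ioi Ioc_disjoint_Ioi_same]
  have h1 : (∫⁻ t in Ioc (0:ℝ) T, ENNReal.ofReal (min (t ^ (-β)⁻¹) R ^ d))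
      = ENNReal.ofReal (R ^ d) * ENNReal.ofReal T := by
    rw [setLIntegral_congr_fun measurableSet_Ioc
      (fun t ht => ?_), setLIntegral_const, Real.volume_Ioc, sub_zero]
    have : R ≤ t ^ (-β)⁻¹ :=
      (Real.le_rpow_inv_iff_of_neg hR ht.1 (neg_lt_zero.mpr hβ)).mpr ht.2
    rw [min_eq_right this]
  have h2 : (∫⁻ t in Ioi T, ENNReal.ofReal (min (t ^ (-β)⁻¹) R ^ d))
      = ENNReal.ofReal (-T ^ (e + 1) / (e + 1)) := by
    have hcong : ∀ t ∈ Ioi T, ENNReal.ofReal (min (t ^ (-β)⁻¹) R ^ d)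
        = ENNReal.ofReal (t ^ e) := by
      intro t ht
      have htpos : 0 < t := hT.trans ht
      have hlt : t ^ (-β)⁻¹ < R :=
        (Real.rpow_inv_lt_iff_of_neg htpos hR (neg_lt_zero.mpr hβ)).mpr ht
      rw [min_eq_left hlt.le, ← Real.rpow_natCast (t ^ (-β)⁻¹) d, ← Real.rpow_mul htpos.le]
      congr 2
      rw [hedef, inv_neg]
      field_simp
    rw [setLIntegral_congr_fun measurableSet_Ioi hcong,
      ← ofReal_integral_eq_lintegral_ofReal (integrableOn_Ioi_rpow_of_lt he hT) ?_,
      integral_Ioi_rpow_of_lt he hT]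
    filter_upwards [ae_restrict_mem measurableSet_Ioi] with t ht
    exact Real.rpow_nonneg (hT.trans ht).le _
  rw [h1, h2, ← ENNReal.ofReal_mul (by positivity), ← ENNReal.ofReal_add (by positivity) ?pos]
  case pos =>
    have hnum : -T ^ (e + 1) < 0 := neg_neg_iff_pos.mpr (Real.rpow_pos_of_pos hT _)
    exact (div_pos_iff.mpr (Or.inr ⟨hnum, he1⟩)).le
  congr 1
  have hTe : T ^ (e + 1) = R ^ ((d : ℝ) - β) := by
    rw [hTdef, ← Real.rpow_mul hR.le]
    congr 1
    rw [hedef]; field_simp; ring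
  have hRT : R ^ d * T = R ^ ((d : ℝ) - β) := by
    rw [hTdef, ← Real.rpow_natCast R d, ← Real.rpow_add hR]
    congr 1
  rw [hRT, hTe]
  have he1' : e + 1 = (β - (d:ℝ)) / β := by rw [hedef]; field_simp; ring
  rw [he1']
  have hβd' : β - (d:ℝ) ≠ 0 := by intro h; linarith [sub_eq_zero.mp h]
  have hβd'' : (d:ℝ) - β ≠ 0 := by intro h; linarith [sub_eq_zero.mp h]
  field_simp
  ring

lemma morrey_rpow_helper {R v c : ℝ} (hR : 0 < R) (hv : 0 < v) (hc : 0 < c) (a b σ s : ℝ) :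
    (R ^ a * v) ^ σ * ((R ^ b * c) * v) ^ s
      = R ^ (a * σ + b * s) * (v ^ (σ + s) * c ^ s) := by
  rw [Real.mul_rpow (by positivity) hv.le, Real.mul_rpow (by positivity) hv.le,
    Real.mul_rpow (by positivity) hc.le, ← Real.rpow_mul hR.le, ← Real.rpow_mul hR.le,
    Real.rpow_add hR, Real.rpow_add hv]
  ring

end MorreyAux

section MorreyAux2
open Set

/-- Lemma 3: for `f(x) = |x|^{-d/q}`, `f ∈ M^p_q` with
`‖f‖_{M^p_q} = (ω_{d-1}/d)^{1/q} (q/(q-p))^{1/p}`, where `ω_{d-1}/d = |B(0,1)|`. -/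
theorem morreyNorm_rpow_neg_div (d : ℕ) (hd : 1 ≤ d) (p q : ℝ) (hp : 1 ≤ p) (hpq : p < q)
    (f : EuclideanSpace ℝ (Fin d) → ℝ) (hf : f = fun x => ‖x‖ ^ (-(d / q : ℝ))) :
    morreyNorm d p q f ≠ ⊤ ∧
      morreyNorm d p q f =
        ENNReal.ofReal
          ((volume (ball (0 : EuclideanSpace ℝ (Fin d)) 1)).toReal ^ (1 / q) *
            (q / (q - p)) ^ (1 / p)) := by
  have hp0 : (0:ℝ) < p := lt_of_lt_of_le zero_lt_one hp
  have hq : (0:ℝ) < q := hp0.trans hpq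
  have hd0 : 0 < d := hd
  have hdR : (0:ℝ) < d := by exact_mod_cast hd
  haveI : Nontrivial (EuclideanSpace ℝ (Fin d)) :=
    Module.nontrivial_of_finrank_pos (R := ℝ) (by rw [finrank_euclideanSpace_fin]; exact hd0)
  set β : ℝ := d * p / q with hβdef
  have hβ : 0 < β := div_pos (mul_pos hdR hp0) hq
  have hβd : β < (d:ℝ) := by
    rw [hβdef, div_lt_iff₀ hq]
    exact mul_lt_mul_of_pos_left hpq hdR
  have hsub : (0:ℝ) < (d:ℝ) - β := by linarith
  have hqp : (0:ℝ) < q - p := sub_pos.mpr hpq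
  have hcong : ∀ (a : EuclideanSpace ℝ (Fin d)) (R : ℝ),
      (∫⁻ y in ball a R, ENNReal.ofReal (|f y| ^ p)) =
        ∫⁻ y in ball a R, ENNReal.ofReal (‖y‖ ^ (-β)) := by
    intro a R
    refine lintegral_congr fun y => ?_
    rw [hf]
    simp only []
    rw [abs_of_nonneg (Real.rpow_nonneg (norm_nonneg y) _), ← Real.rpow_mul (norm_nonneg y)]
    congr 2
    rw [hβdef]; ring
  set V := volume (ball (0 : EuclideanSpace ℝ (Fin d)) 1) with hVdef
  have hVt : V ≠ ⊤ := measure_ball_lt_top.ne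
  have hV0 : V ≠ 0 := (measure_ball_pos volume _ one_pos).ne'
  have hv : 0 < V.toReal := ENNReal.toReal_pos hV0 hVt
  have hdiv : (0:ℝ) < (d:ℝ)/((d:ℝ) - β) := div_pos hdR hsub
  have hkey : ∀ R : ℝ, 0 < R →
      volume (ball (0 : EuclideanSpace ℝ (Fin d)) R) ^ (1/q - 1/p) *
        (∫⁻ y in ball (0 : EuclideanSpace ℝ (Fin d)) R, ENNReal.ofReal (‖y‖ ^ (-β))) ^ (1/p)
      = ENNReal.ofReal (V.toReal ^ (1/q) * (q/(q-p)) ^ (1/p)) := by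
    intro R hR
    rw [morrey_aux_value hd0 hβ hβd hR, Measure.addHaar_ball volume _ hR.le,
      finrank_euclideanSpace_fin, ← hVdef]
    have hVv : V = ENNReal.ofReal V.toReal := (ENNReal.ofReal_toReal hVt).symm
    conv_lhs => rw [hVv]
    rw [← ENNReal.ofReal_mul (by positivity),
      ← ENNReal.ofReal_mul (mul_nonneg (Real.rpow_nonneg hR.le _) hdiv.le),
      ENNReal.ofReal_rpow_of_pos (mul_pos (pow_pos hR d) hv),
      ENNReal.ofReal_rpow_of_pos
        (mul_pos (mul_pos (Real.rpow_pos_of_pos hR _) hdiv) hv),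
      ← ENNReal.ofReal_mul (Real.rpow_nonneg (mul_nonneg (pow_nonneg hR.le d) hv.le) _)]
    congr 1
    rw [← Real.rpow_natCast R d, morrey_rpow_helper hR hv hdiv,
      show (d:ℝ) * (1/q - 1/p) + ((d:ℝ) - β) * (1/p) = 0 by rw [hβdef]; field_simp; ring,
      Real.rpow_zero, one_mul,
      show (1/q - 1/p) + 1/p = 1/q by ring]
    congr 2
    rw [div_eq_div_iff hsub.ne' hqp.ne', hβdef]
    field_simp [hq.ne']
  have heq : morreyNorm d p q f =
      ENNReal.ofReal (V.toReal ^ (1/q) * (q/(q-p)) ^ (1/p)) := by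
    simp only [morreyNorm, hcong]
    apply le_antisymm
    · refine iSup_le fun a => iSup_le fun R => iSup_le fun hR => ?_
      calc volume (ball a R) ^ (1/q - 1/p) *
            (∫⁻ y in ball a R, ENNReal.ofReal (‖y‖ ^ (-β))) ^ (1/p)
          ≤ volume (ball (0 : EuclideanSpace ℝ (Fin d)) R) ^ (1/q - 1/p) *
            (∫⁻ y in ball (0 : EuclideanSpace ℝ (Fin d)) R,
              ENNReal.ofReal (‖y‖ ^ (-β))) ^ (1/p) := by
            rw [Measure.addHaar_ball_center volume a R]
            exact mul_le_mul_right
              (ENNReal.rpow_le_rpow (morrey_aux_mono hd0 hβ a R)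
                (one_div_nonneg.mpr hp0.le)) _
        _ = _ := hkey R hR
    · exact le_iSup_of_le (0 : EuclideanSpace ℝ (Fin d))
        (le_iSup_of_le (1:ℝ) (le_iSup_of_le one_pos (hkey 1 one_pos).ge))
  exact ⟨heq ▸ ENNReal.ofReal_ne_top, heq⟩

end MorreyAux2
end

section
/- Let d ≥ 1 be an integer, let 1 ≤ p < q < ∞ be real numbers, and let f(x) := |x|^{-d/q}. For ε ∈ (0,1) and k ∈ ℕ, let f_{ε,k} := f·χ_{{x : ε^{k+1} < |x| < ε^k}} (the restriction of f to the annulus {x : ε^{k+1} < |x| < ε^k}). Then f_{ε,k} belongs to the Morrey space M^p_q(ℝ^d) and ‖f_{ε,k}‖_{M^p_q} ≥ (1 − ε^{d − dp/q})^{1/p} · ‖f‖_{M^p_q}, where ‖f‖_{M^p_q} = |B(0,1)|^{1/q} · (q/(q-p))^{1/p}. -/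
open MeasureTheory Metric
open scoped ENNReal

/-- Corollary 5: for `f(x) = |x|^{-d/q}`, `ε ∈ (0,1)` and `k ∈ ℕ`, the restriction
`f_{ε,k} = f·χ_{{ε^{k+1} < |x| < ε^k}}` belongs to `M^p_q` and
`‖f_{ε,k}‖_{M^p_q} ≥ (1 - ε^{d - dp/q})^{1/p} ‖f‖_{M^p_q}`, where
`‖f‖_{M^p_q} = |B(0,1)|^{1/q} (q/(q-p))^{1/p}`. -/
theorem morreyNorm_indicator_annulus_lower_bound (d : ℕ) (hd : 1 ≤ d) (p q : ℝ)
    (hp : 1 ≤ p) (hpq : p < q) (ε : ℝ) (hε0 : 0 < ε) (hε1 : ε < 1) (k : ℕ)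
    (f g : EuclideanSpace ℝ (Fin d) → ℝ) (hf : f = fun x => ‖x‖ ^ (-(d / q : ℝ)))
    (hg : g = Set.indicator
      {x : EuclideanSpace ℝ (Fin d) | ε ^ (k + 1) < ‖x‖ ∧ ‖x‖ < ε ^ k} f) :
    morreyNorm d p q g ≠ ⊤ ∧
      ENNReal.ofReal
          ((1 - ε ^ ((d : ℝ) - d * p / q)) ^ (1 / p) *
            ((volume (ball (0 : EuclideanSpace ℝ (Fin d)) 1)).toReal ^ (1 / q) *
              (q / (q - p)) ^ (1 / p))) ≤
        morreyNorm d p q g := by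
  have hp0 : (0:ℝ) < p := lt_of_lt_of_le one_pos hp
  have hq0 : (0:ℝ) < q := hp0.trans hpq
  have hd0 : (0:ℝ) < (d:ℝ) := by exact_mod_cast hd
  haveI : Nontrivial (EuclideanSpace ℝ (Fin d)) := by
    have : Nonempty (Fin d) := Fin.pos_iff_nonempty.1 hd
    infer_instance
  set S : Set (EuclideanSpace ℝ (Fin d)) :=
    {x | ε ^ (k + 1) < ‖x‖ ∧ ‖x‖ < ε ^ k} with hS
  set t : ℝ := (-(d / q : ℝ)) * p with ht
  set α : ℝ := (d : ℝ) - d * p / q with hα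
  set c : ℝ := (volume (ball (0 : EuclideanSpace ℝ (Fin d)) 1)).toReal with hc
  have hα0 : 0 < α := by
    rw [hα]
    have : d * p / q < d := by
      rw [div_lt_iff₀ hq0]
      nlinarith
    linarith
  have htα : t + d = α := by rw [ht, hα]; field_simp; ring
  have hc0 : 0 < c := by
    rw [hc]
    exact ENNReal.toReal_pos (measure_ball_pos volume _ one_pos).ne' measure_ball_lt_top.ne
  have hvol1 : volume (ball (0 : EuclideanSpace ℝ (Fin d)) 1) = ENNReal.ofReal c := by
    rw [hc, ENNReal.ofReal_toReal measure_ball_lt_top.ne]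
  have hεk0 : (0:ℝ) < ε ^ k := pow_pos hε0 k
  have hS_meas : MeasurableSet S := by
    exact ((isOpen_lt continuous_const continuous_norm).inter
      (isOpen_lt continuous_norm continuous_const)).measurableSet
  have hS_sub : S ⊆ ball (0 : EuclideanSpace ℝ (Fin d)) (ε ^ k) := by
    intro x hx
    simpa [mem_ball_zero_iff] using hx.2
  -- pointwise identification of the integrand
  have ht_neg : t < 0 := by
    have h1 : 0 < (d:ℝ)/q := div_pos hd0 hq0
    rw [ht]; nlinarith
  have hgp : ∀ y, ENNReal.ofReal (|g y| ^ p)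
      = S.indicator (fun x => ENNReal.ofReal (‖x‖ ^ t)) y := by
    intro y
    by_cases hy : y ∈ S
    · rw [Set.indicator_of_mem hy, hg, Set.indicator_of_mem hy, hf]
      have h0 : (0:ℝ) ≤ ‖y‖ ^ (-(d / q : ℝ)) := Real.rpow_nonneg (norm_nonneg y) _
      rw [abs_of_nonneg h0, ht, Real.rpow_mul (norm_nonneg y)]
    · rw [Set.indicator_of_notMem hy, hg, Set.indicator_of_notMem hy]
      simp [Real.zero_rpow hp0.ne']
  -- pointwise bound
  have hb : ∀ y, ENNReal.ofReal (|g y| ^ p)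
      ≤ (ball (0 : EuclideanSpace ℝ (Fin d)) (ε ^ k)).indicator
          (fun _ => ENNReal.ofReal ((ε ^ (k+1)) ^ t)) y := by
    intro y
    rw [hgp y]
    by_cases hy : y ∈ S
    · rw [Set.indicator_of_mem hy, Set.indicator_of_mem (hS_sub hy)]
      exact ENNReal.ofReal_le_ofReal
        (Real.rpow_le_rpow_of_nonpos (pow_pos hε0 (k+1)) hy.1.le ht_neg.le)
    · rw [Set.indicator_of_notMem hy]
      exact zero_le
  -- the value of the key integral
  set B : ℝ := (d:ℝ) * c * (ε ^ ((k:ℝ) * α) * (1 - ε ^ α) / α) with hBdef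
  have hIoo_sub : Set.Ioo (ε ^ (k+1)) (ε ^ k) ⊆ Set.Ioi (0:ℝ) :=
    fun y hy => (pow_pos hε0 (k+1)).trans hy.1
  have hmeas_rpow : Measurable fun x : EuclideanSpace ℝ (Fin d) => ‖x‖ ^ t := by
    fun_prop
  have hInt : IntegrableOn (fun x : EuclideanSpace ℝ (Fin d) => ‖x‖ ^ t) S := by
    refine Measure.integrableOn_of_bounded (M := (ε ^ (k+1)) ^ t)
      ((measure_mono hS_sub).trans_lt measure_ball_lt_top).ne
      hmeas_rpow.aestronglyMeasurable ?_
    filter_upwards [ae_restrict_mem hS_meas] with x hx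
    rw [Real.norm_eq_abs, abs_of_nonneg (Real.rpow_nonneg (norm_nonneg x) t)]
    exact Real.rpow_le_rpow_of_nonpos (pow_pos hε0 (k+1)) hx.1.le ht_neg.le
  have hcast : ((d-1:ℕ):ℝ) = (d:ℝ) - 1 := by
    have := Nat.cast_sub (R := ℝ) hd; simpa using this
  have hB : (∫ x in S, ‖x‖ ^ t) = B := by
    have h1 : (∫ x in S, ‖x‖ ^ t)
        = ∫ x : EuclideanSpace ℝ (Fin d),
            Set.indicator (Set.Ioo (ε ^ (k+1)) (ε ^ k)) (fun y => y ^ t) ‖x‖ := by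
      rw [← integral_indicator hS_meas]
      refine integral_congr_ae (Filter.Eventually.of_forall fun x => ?_)
      by_cases hx : x ∈ S
      · simp only [Set.indicator_of_mem hx,
          Set.indicator_of_mem (Set.mem_Ioo.2 ⟨hx.1, hx.2⟩)]
      · simp only [Set.indicator_of_notMem hx,
          Set.indicator_of_notMem (fun h => hx (Set.mem_Ioo.1 h))]
    rw [h1, MeasureTheory.integral_fun_norm_addHaar volume
      (Set.indicator (Set.Ioo (ε ^ (k+1)) (ε ^ k)) (fun y => y ^ t))]
    simp only [finrank_euclideanSpace_fin, nsmul_eq_mul, smul_eq_mul]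
    have h5 : ((ε^k:ℝ)) ^ α = ε ^ ((k:ℝ)*α) := by
      rw [← Real.rpow_natCast ε k, ← Real.rpow_mul hε0.le]
    have h6 : ((ε^(k+1):ℝ)) ^ α = ε ^ ((k:ℝ)*α) * ε ^ α := by
      rw [← Real.rpow_natCast ε (k+1), ← Real.rpow_mul hε0.le, ← Real.rpow_add hε0]
      congr 1; push_cast; ring
    have h2 : (∫ y in Set.Ioi (0:ℝ), y ^ (d - 1) *
          Set.indicator (Set.Ioo (ε ^ (k+1)) (ε ^ k)) (fun y => y ^ t) y)
        = ε ^ ((k:ℝ)*α) * (1 - ε ^ α) / α := by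
      have h2a : (∫ y in Set.Ioi (0:ℝ), y ^ (d - 1) *
            Set.indicator (Set.Ioo (ε ^ (k+1)) (ε ^ k)) (fun y => y ^ t) y)
          = ∫ y in Set.Ioi (0:ℝ), Set.indicator (Set.Ioo (ε ^ (k+1)) (ε ^ k))
              (fun y => y ^ (d-1) * y ^ t) y := by
        refine integral_congr_ae (Filter.Eventually.of_forall fun y => ?_)
        simp only [Set.indicator_apply, mul_ite, mul_zero]
      rw [h2a, setIntegral_indicator measurableSet_Ioo, Set.inter_eq_right.2 hIoo_sub]
      have h3 : (∫ y in Set.Ioo (ε^(k+1)) (ε^k), y ^ (d-1) * y ^ t)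
          = ∫ y in Set.Ioo (ε^(k+1)) (ε^k), y ^ ((d:ℝ) - 1 + t) := by
        refine setIntegral_congr_fun measurableSet_Ioo fun y hy => ?_
        have hy0 : 0 < y := hIoo_sub hy
        rw [← Real.rpow_natCast y (d-1), ← Real.rpow_add hy0, hcast]
      have hle : ε ^ (k+1) ≤ ε ^ k := pow_le_pow_of_le_one hε0.le hε1.le (Nat.le_succ k)
      have hexp : (d:ℝ) - 1 + t + 1 = α := by linarith [htα]
      have h4 : (∫ y in Set.Ioo (ε^(k+1)) (ε^k), y ^ ((d:ℝ)-1+t))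
          = ((ε^k) ^ α - (ε^(k+1)) ^ α) / α := by
        rw [← integral_Ioc_eq_integral_Ioo, ← intervalIntegral.integral_of_le hle,
          integral_rpow (Or.inl (by linarith)), hexp]
      rw [h3, h4, h5, h6]; ring
    rw [show volume.real (ball (0 : EuclideanSpace ℝ (Fin d)) 1) = c from rfl, h2, hBdef]; ring
  have hI : (∫⁻ y in ball (0 : EuclideanSpace ℝ (Fin d)) (ε ^ k),
      ENNReal.ofReal (|g y| ^ p)) = ENNReal.ofReal B := by
    calc (∫⁻ y in ball (0 : EuclideanSpace ℝ (Fin d)) (ε ^ k),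
        ENNReal.ofReal (|g y| ^ p))
        = ∫⁻ y in ball (0 : EuclideanSpace ℝ (Fin d)) (ε ^ k),
            S.indicator (fun x => ENNReal.ofReal (‖x‖ ^ t)) y := by
          simp only [hgp]
      _ = ∫⁻ y in S, ENNReal.ofReal (‖y‖ ^ t) := by
          rw [lintegral_indicator hS_meas, Measure.restrict_restrict hS_meas,
            Set.inter_eq_left.2 hS_sub]
      _ = ENNReal.ofReal (∫ y in S, ‖y‖ ^ t) :=
          (ofReal_integral_eq_lintegral_ofReal hInt
            (Filter.Eventually.of_forall fun y => Real.rpow_nonneg (norm_nonneg y) t)).symm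
      _ = ENNReal.ofReal B := by rw [hB]
  constructor
  · -- finiteness
    set V0 : ℝ≥0∞ := volume (ball (0 : EuclideanSpace ℝ (Fin d)) (ε ^ k)) with hV0d
    set M' : ℝ≥0∞ := ENNReal.ofReal ((ε ^ (k+1)) ^ t) with hM'
    have hV0top : V0 ≠ ⊤ := measure_ball_lt_top.ne
    have hp' : (0:ℝ) ≤ 1/p := by positivity
    have hq' : (0:ℝ) ≤ 1/q := by positivity
    have hK : M' ^ (1/p) * V0 ^ (1/q) ≠ ⊤ :=
      ENNReal.mul_ne_top
        (ENNReal.rpow_ne_top_of_nonneg hp' ENNReal.ofReal_ne_top)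
        (ENNReal.rpow_ne_top_of_nonneg hq' hV0top)
    refine ne_top_of_le_ne_top hK ?_
    simp only [morreyNorm]
    refine iSup_le fun a => iSup_le fun R => iSup_le fun hR => ?_
    set V : ℝ≥0∞ := volume (ball a R) with hVd
    have hVtop : V ≠ ⊤ := measure_ball_lt_top.ne
    have hVne : V ≠ 0 := (measure_ball_pos volume a hR).ne'
    have hI1 : (∫⁻ y in ball a R, ENNReal.ofReal (|g y| ^ p)) ≤ M' * V := by
      calc (∫⁻ y in ball a R, ENNReal.ofReal (|g y| ^ p))
          ≤ ∫⁻ _ in ball a R, M' := lintegral_mono fun y => (hb y).trans (by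
              by_cases h : y ∈ ball (0 : EuclideanSpace ℝ (Fin d)) (ε ^ k) <;>
                simp [Set.indicator_apply, h])
        _ = M' * V := by rw [setLIntegral_const]
    have hI2 : (∫⁻ y in ball a R, ENNReal.ofReal (|g y| ^ p)) ≤ M' * V0 := by
      calc (∫⁻ y in ball a R, ENNReal.ofReal (|g y| ^ p))
          ≤ ∫⁻ y in ball a R, (ball (0 : EuclideanSpace ℝ (Fin d)) (ε ^ k)).indicator
              (fun _ => M') y := lintegral_mono hb
        _ ≤ ∫⁻ y, (ball (0 : EuclideanSpace ℝ (Fin d)) (ε ^ k)).indicator (fun _ => M') y :=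
            setLIntegral_le_lintegral _ _
        _ = M' * V0 := by rw [lintegral_indicator measurableSet_ball, setLIntegral_const]
    rcases le_total V V0 with hcase | hcase
    · calc V ^ (1/q - 1/p) * (∫⁻ y in ball a R, ENNReal.ofReal (|g y| ^ p)) ^ (1/p)
          ≤ V ^ (1/q - 1/p) * (M' * V) ^ (1/p) :=
            mul_le_mul_right (ENNReal.rpow_le_rpow hI1 hp') _
        _ = M' ^ (1/p) * (V ^ (1/q - 1/p) * V ^ (1/p)) := by
            rw [ENNReal.mul_rpow_of_nonneg _ _ hp']; ring
        _ = M' ^ (1/p) * V ^ (1/q) := by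
            rw [← ENNReal.rpow_add _ _ hVne hVtop, show 1/q - 1/p + 1/p = 1/q by ring]
        _ ≤ M' ^ (1/p) * V0 ^ (1/q) :=
            mul_le_mul_right (ENNReal.rpow_le_rpow hcase hq') _
    · have hV0ne : V0 ≠ 0 := (measure_ball_pos volume _ hεk0).ne'
      calc V ^ (1/q - 1/p) * (∫⁻ y in ball a R, ENNReal.ofReal (|g y| ^ p)) ^ (1/p)
          ≤ V0 ^ (1/q - 1/p) * (M' * V0) ^ (1/p) := by
            refine mul_le_mul' ?_ (ENNReal.rpow_le_rpow hI2 hp')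
            rw [show 1/q - 1/p = -(1/p - 1/q) by ring, ENNReal.rpow_neg, ENNReal.rpow_neg]
            exact ENNReal.inv_le_inv.2
              (ENNReal.rpow_le_rpow hcase
                (by rw [sub_nonneg]; exact one_div_le_one_div_of_le hp0 hpq.le))
        _ = M' ^ (1/p) * (V0 ^ (1/q - 1/p) * V0 ^ (1/p)) := by
            rw [ENNReal.mul_rpow_of_nonneg _ _ hp']; ring
        _ = M' ^ (1/p) * V0 ^ (1/q) := by
            rw [← ENNReal.rpow_add _ _ hV0ne hV0top, show 1/q - 1/p + 1/p = 1/q by ring]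
  · -- lower bound
    have hqp : (0:ℝ) < q - p := sub_pos.2 hpq
    have hE1 : (0:ℝ) < 1 - ε^α := sub_pos.2 (Real.rpow_lt_one hε0.le hε1 hα0)
    have hek : (0:ℝ) < ε ^ ((k:ℝ)*α) := Real.rpow_pos_of_pos hε0 _
    have hbase : (0:ℝ) < (ε^k)^d * c := by positivity
    have hBpos : 0 < B := by
      rw [hBdef]
      exact mul_pos (mul_pos hd0 hc0) (div_pos (mul_pos hek hE1) hα0)
    have hV0 : volume (ball (0:EuclideanSpace ℝ (Fin d)) (ε^k))
        = ENNReal.ofReal ((ε^k)^d * c) := by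
      rw [Measure.addHaar_ball _ _ hεk0.le, finrank_euclideanSpace_fin, hvol1,
        ← ENNReal.ofReal_mul (by positivity)]
    have hterm : volume (ball (0:EuclideanSpace ℝ (Fin d)) (ε^k)) ^ (1/q - 1/p) *
        (∫⁻ y in ball (0:EuclideanSpace ℝ (Fin d)) (ε^k), ENNReal.ofReal (|g y|^p)) ^ (1/p)
        = ENNReal.ofReal (((ε^k)^d * c) ^ (1/q-1/p) * B ^ (1/p)) := by
      rw [hV0, hI, ENNReal.ofReal_rpow_of_pos hbase, ENNReal.ofReal_rpow_of_pos hBpos,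
        ← ENNReal.ofReal_mul (by positivity)]
    have hqα : q * α = (d:ℝ) * (q - p) := by rw [hα]; field_simp
    have hB2 : B = c * (q/(q-p)) * (ε ^ ((k:ℝ)*α) * (1 - ε^α)) := by
      have hdα : (d:ℝ)/α = q/(q-p) := by
        rw [div_eq_div_iff hα0.ne' hqp.ne']
        linarith [hqα]
      rw [hBdef, ← hdα]; ring
    have hreal : (1 - ε ^ α) ^ (1 / p) * (c ^ (1 / q) * (q / (q - p)) ^ (1 / p))
        = ((ε^k)^d * c) ^ (1/q-1/p) * B ^ (1/p) := by
      have e1 : (((ε^k:ℝ))^d) ^ (1/q-1/p) = ε ^ ((k:ℝ)*(d:ℝ)*(1/q-1/p)) := by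
        rw [← pow_mul, ← Real.rpow_natCast ε (k*d), ← Real.rpow_mul hε0.le]
        congr 1; push_cast; ring
      have e2 : (ε ^ ((k:ℝ)*α)) ^ (1/p) = ε ^ ((k:ℝ)*α*(1/p)) := by
        rw [← Real.rpow_mul hε0.le]
      have e3 : ε ^ ((k:ℝ)*(d:ℝ)*(1/q-1/p)) * ε ^ ((k:ℝ)*α*(1/p)) = 1 := by
        rw [← Real.rpow_add hε0,
          show (k:ℝ)*(d:ℝ)*(1/q-1/p) + (k:ℝ)*α*(1/p) = 0 from by
            rw [hα]; field_simp; ring,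
          Real.rpow_zero]
      have ec : c ^ ((1:ℝ)/q - 1/p) * c ^ ((1:ℝ)/p) = c ^ ((1:ℝ)/q) := by
        rw [← Real.rpow_add hc0]; congr 1; ring
      rw [hB2, Real.mul_rpow (by positivity) hc0.le,
        Real.mul_rpow (by positivity) (by positivity),
        Real.mul_rpow hc0.le (by positivity), Real.mul_rpow hek.le hE1.le,
        e1, e2, ← ec]
      linear_combination (-(1-ε^α)^(1/p) * c^(1/q-1/p) * c^(1/p) * (q/(q-p))^(1/p)) * e3
    calc ENNReal.ofReal
          ((1 - ε ^ α) ^ (1 / p) * (c ^ (1 / q) * (q / (q - p)) ^ (1 / p)))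
        = ENNReal.ofReal (((ε^k)^d * c) ^ (1/q-1/p) * B ^ (1/p)) := by rw [hreal]
      _ = volume (ball (0:EuclideanSpace ℝ (Fin d)) (ε^k)) ^ (1/q - 1/p) *
            (∫⁻ y in ball (0:EuclideanSpace ℝ (Fin d)) (ε^k),
              ENNReal.ofReal (|g y|^p)) ^ (1/p) := hterm.symm
      _ ≤ morreyNorm d p q g := by
          simp only [morreyNorm]
          exact le_iSup_of_le 0 (le_iSup_of_le (ε ^ k) (le_iSup_of_le hεk0 le_rfl))
end

section
/- Let d ≥ 1 be an integer, let 1 ≤ p < q < ∞ be real numbers, and let n ≥ 2 be an integer. Then the Morrey space M^p_q(ℝ^d) is not uniformly non-ℓ¹_n: for every δ ∈ (0,1) there exist measurable functions f₁, f₂, …, f_n : ℝ^d → ℝ with ‖f_i‖_{M^p_q} = 1 for i = 1, …, n, such that ‖f₁ ± f₂ ± ⋯ ± f_n‖_{M^p_q} > n(1 − δ) for all 2^{n−1} choices of signs. -/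
open MeasureTheory Metric
open scoped ENNReal

private lemma mnuAux_inv_mul_le_one {w x : ℝ≥0∞} (hw0 : w ≠ 0) (hwt : w ≠ ⊤) (h : x ≤ w) :
    w⁻¹ * x ≤ 1 := by
  calc w⁻¹ * x ≤ w⁻¹ * w := mul_le_mul_right h _
  _ = 1 := ENNReal.inv_mul_cancel hw0 hwt

private lemma mnuAux_lint_eq {d : ℕ} {p : ℝ} {A : Set (EuclideanSpace ℝ (Fin d))}
    (hA : MeasurableSet A) {c : ℝ≥0∞} (hc : c ≠ ⊤) {g : EuclideanSpace ℝ (Fin d) → ℝ}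
    (hg : ∀ y, ENNReal.ofReal (|g y| ^ p) = c * A.indicator 1 y)
    (B : Set (EuclideanSpace ℝ (Fin d))) :
    ∫⁻ y in B, ENNReal.ofReal (|g y| ^ p) = c * volume (A ∩ B) := by
  simp_rw [hg]
  rw [lintegral_const_mul' _ _ hc, lintegral_indicator_one hA, Measure.restrict_apply hA]

private lemma mnuAux_lint_ball {d : ℕ} {p : ℝ} {g : EuclideanSpace ℝ (Fin d) → ℝ}
    {z : EuclideanSpace ℝ (Fin d)} {c0 : ℝ}
    (hgB : ∀ y ∈ ball z 1, |g y| = c0) :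
    ∫⁻ y in ball z 1, ENNReal.ofReal (|g y| ^ p)
      = ENNReal.ofReal (c0 ^ p) * volume (ball (0 : EuclideanSpace ℝ (Fin d)) 1) := by
  rw [setLIntegral_congr_fun measurableSet_ball
      (fun y hy => by rw [hgB y hy]),
    setLIntegral_const, Measure.addHaar_ball_center]

private lemma mnuAux_calc {p q : ℝ} (hp : 0 < p) {V : ℝ≥0∞} (hV0 : V ≠ 0) (hVt : V ≠ ⊤)
    {c0 : ℝ} (hc0 : 0 < c0) :
    V ^ ((1:ℝ)/q - 1/p) * (ENNReal.ofReal (c0 ^ p) * V) ^ ((1:ℝ)/p)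
      = ENNReal.ofReal c0 * V ^ ((1:ℝ)/q) := by
  rw [← ENNReal.ofReal_rpow_of_pos hc0,
    ENNReal.mul_rpow_of_nonneg _ _ (by positivity), ← ENNReal.rpow_mul]
  have hpp : p * (1/p) = 1 := by field_simp
  rw [hpp, ENNReal.rpow_one, ← mul_assoc, mul_comm (V ^ ((1:ℝ)/q - 1/p)), mul_assoc,
    ← ENNReal.rpow_add _ _ hV0 hVt]
  congr 1
  ring

/-- Theorem 6: the Morrey space `M^p_q(ℝ^d)`, `1 ≤ p < q < ∞`, is not uniformly
non-`ℓ¹_n` for any `n ≥ 2`: for every `δ ∈ (0,1)` there exist measurable `f₁, …, f_n`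
of Morrey norm `1` such that `‖f₁ ± f₂ ± ⋯ ± f_n‖_{M^p_q} > n(1-δ)` for all
`2^{n-1}` choices of signs. -/
theorem morrey_not_uniformly_non_ell1n (d : ℕ) (hd : 1 ≤ d) (p q : ℝ) (hp : 1 ≤ p)
    (hpq : p < q) (n : ℕ) (hn : 2 ≤ n) (δ : ℝ) (hδ0 : 0 < δ) (hδ1 : δ < 1) :
    ∃ f : Fin n → (EuclideanSpace ℝ (Fin d) → ℝ),
      (∀ i, Measurable (f i)) ∧ (∀ i, morreyNorm d p q (f i) = 1) ∧
        ∀ s : Fin n → ℝ, (∀ i, s i = 1 ∨ s i = -1) → s ⟨0, by omega⟩ = 1 →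
          ENNReal.ofReal (n * (1 - δ)) <
            morreyNorm d p q (fun x => ∑ i, s i * f i x) := by
  classical
  have hp0 : (0:ℝ) < p := lt_of_lt_of_le one_pos hp
  have hq0 : (0:ℝ) < q := lt_trans hp0 hpq
  have hα : (0:ℝ) < 1/p - 1/q := sub_pos.2 (one_div_lt_one_div_of_lt hp0 hpq)
  have hd0 : (0:ℝ) < d := by exact_mod_cast hd
  have i0 : Fin d := ⟨0, hd⟩
  haveI : Nontrivial (EuclideanSpace ℝ (Fin d)) := by
    refine nontrivial_of_ne (EuclideanSpace.single i0 (1:ℝ)) 0 fun h => ?_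
    have h2 := congrArg norm h
    rw [EuclideanSpace.norm_single, norm_zero, norm_one] at h2
    exact one_ne_zero h2
  set V : ℝ≥0∞ := volume (ball (0 : EuclideanSpace ℝ (Fin d)) 1) with hVdef
  have hV0 : V ≠ 0 := (measure_ball_pos volume 0 one_pos).ne'
  have hVt : V ≠ ⊤ := measure_ball_lt_top.ne
  set lam : ℝ := V.toReal ^ (-(1/q)) with hlamdef
  have hlam0 : 0 < lam := Real.rpow_pos_of_pos (ENNReal.toReal_pos hV0 hVt) _
  have hoflam : ENNReal.ofReal lam = V ^ (-(1/q)) := by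
    have h1 : ENNReal.ofReal V.toReal ^ (-(1/q)) = ENNReal.ofReal (V.toReal ^ (-(1/q))) :=
      ENNReal.ofReal_rpow_of_pos (ENNReal.toReal_pos hV0 hVt)
    rw [ENNReal.ofReal_toReal hVt] at h1
    exact h1.symm
  have hunit : ENNReal.ofReal lam * V ^ ((1:ℝ)/q) = 1 := by
    rw [hoflam, ← ENNReal.rpow_add _ _ hV0 hVt]
    norm_num
  have hclam : ENNReal.ofReal (lam ^ p) = V ^ (-(p/q)) := by
    rw [← ENNReal.ofReal_rpow_of_pos hlam0, hoflam, ← ENNReal.rpow_mul]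
    congr 1
    ring
  have hcne : V ^ (-(p/q)) ≠ ⊤ := by rw [← hclam]; exact ENNReal.ofReal_ne_top
  -- geometry
  set u : EuclideanSpace ℝ (Fin d) := EuclideanSpace.single i0 (1:ℝ) with hudef
  have hu : ‖u‖ = 1 := by rw [hudef, EuclideanSpace.norm_single, norm_one]
  set enc : (Fin n → Bool) → ℕ := fun t => ((Fintype.equivFin (Fin n → Bool)) t : ℕ) with hencdef
  have henc : Function.Injective enc := fun a b h =>
    (Fintype.equivFin (Fin n → Bool)).injective (Fin.val_injective h)
  set m : ℕ := Fintype.card (Fin n → Bool) with hmdef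
  have hm1 : 1 ≤ m := Fintype.card_pos
  set M : ℝ := max 1 ((m:ℝ) ^ ((1/p) / ((d:ℝ) * (1/p - 1/q)))) with hMdef
  have hM1 : (1:ℝ) ≤ M := le_max_left _ _
  have hM0 : (0:ℝ) < M := lt_of_lt_of_le one_pos hM1
  set D : ℝ := 2 + 2 * M with hDdef
  have hD4 : (4:ℝ) ≤ D := by simp only [hDdef]; linarith
  have hMcard : (m:ℝ) ^ ((1:ℝ)/p) ≤ (M ^ d) ^ ((1:ℝ)/p - 1/q) := by
    have hdα : (0:ℝ) < (d:ℝ) * (1/p - 1/q) := mul_pos hd0 hα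
    have h1 : (m:ℝ) ^ ((1:ℝ)/p)
        = ((m:ℝ) ^ ((1/p) / ((d:ℝ) * (1/p - 1/q)))) ^ ((d:ℝ) * (1/p - 1/q)) := by
      rw [← Real.rpow_mul (Nat.cast_nonneg m)]
      congr 1
      exact (div_mul_cancel₀ _ hdα.ne').symm
    have h2 : ((m:ℝ) ^ ((1/p) / ((d:ℝ) * (1/p - 1/q)))) ^ ((d:ℝ) * (1/p - 1/q))
        ≤ M ^ ((d:ℝ) * (1/p - 1/q)) :=
      Real.rpow_le_rpow (Real.rpow_nonneg (Nat.cast_nonneg m) _) (le_max_right _ _) hdα.le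
    have h3 : M ^ ((d:ℝ) * (1/p - 1/q)) = (M ^ d) ^ ((1:ℝ)/p - 1/q) := by
      rw [← Real.rpow_natCast M d, ← Real.rpow_mul hM0.le]
    rw [h1, ← h3]
    exact h2
  set cen : (Fin n → Bool) → EuclideanSpace ℝ (Fin d) := fun t => (D * enc t) • u with hcendef
  have hdist : ∀ t t', t ≠ t' → D ≤ dist (cen t) (cen t') := by
    intro t t' htt
    have hne : enc t ≠ enc t' := fun h => htt (henc h)
    have habs : (1:ℝ) ≤ |(enc t : ℝ) - (enc t' : ℝ)| := by
      rcases hne.lt_or_gt with h | h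
      · have h' : (enc t : ℝ) + 1 ≤ enc t' := by exact_mod_cast Nat.succ_le_of_lt h
        rw [abs_sub_comm, abs_of_nonneg (by linarith)]; linarith
      · have h' : (enc t' : ℝ) + 1 ≤ enc t := by exact_mod_cast Nat.succ_le_of_lt h
        rw [abs_of_nonneg (by linarith)]; linarith
    have heq : dist (cen t) (cen t') = D * |(enc t : ℝ) - (enc t' : ℝ)| := by
      rw [hcendef]
      simp only [dist_eq_norm, ← sub_smul, norm_smul, Real.norm_eq_abs, hu, mul_one]
      rw [← mul_sub, abs_mul, abs_of_pos (by linarith : (0:ℝ) < D)]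
    rw [heq]
    nlinarith
  have hdisj : ∀ t t', t ≠ t' → ∀ y, y ∈ ball (cen t) 1 → y ∉ ball (cen t') 1 := by
    intro t t' htt y hy hy'
    have h1 := hdist t t' htt
    have h2 := dist_triangle (cen t) y (cen t')
    rw [mem_ball, dist_comm] at hy
    rw [mem_ball] at hy'
    rw [dist_comm y (cen t')] at h2
    nlinarith [dist_comm y (cen t')]
  -- the functions
  set sg : (Fin n → Bool) → Fin n → ℝ := fun t j => if t j then 1 else -1 with hsgdef
  have hsgabs : ∀ t j, |sg t j| = 1 := by
    intro t j
    rw [hsgdef]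
    by_cases h : t j <;> simp [h]
  set f : Fin n → EuclideanSpace ℝ (Fin d) → ℝ := fun j x =>
    ∑ t : Fin n → Bool, Set.indicator (ball (cen t) 1) (fun _ => sg t j * lam) x with hfdef
  set A : Set (EuclideanSpace ℝ (Fin d)) := ⋃ t, ball (cen t) 1 with hAdef
  have hAmeas : MeasurableSet A := MeasurableSet.iUnion fun t => measurableSet_ball
  have hfval : ∀ j t0 y, y ∈ ball (cen t0) 1 → f j y = sg t0 j * lam := by
    intro j t0 y hy
    rw [hfdef]
    refine Finset.sum_eq_single_of_mem t0 (Finset.mem_univ _) (fun t _ hne => ?_) |>.trans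
      (Set.indicator_of_mem hy _)
    exact Set.indicator_of_notMem (hdisj t0 t (fun h => hne h.symm) y hy) _
  have hfzero : ∀ j y, y ∉ A → f j y = 0 := by
    intro j y hy
    rw [hAdef] at hy
    simp only [Set.mem_iUnion, not_exists] at hy
    rw [hfdef]
    exact Finset.sum_eq_zero fun t _ => Set.indicator_of_notMem (hy t) _
  have hgform : ∀ j y, ENNReal.ofReal (|f j y| ^ p)
      = V ^ (-(p/q)) * A.indicator 1 y := by
    intro j y
    by_cases hy : y ∈ A
    · obtain ⟨t0, ht0⟩ := Set.mem_iUnion.1 hy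
      rw [hfval j t0 y ht0, abs_mul, hsgabs, one_mul, abs_of_pos hlam0,
        Set.indicator_of_mem hy, hclam]
      simp
    · rw [hfzero j y hy, Set.indicator_of_notMem hy, abs_zero, Real.zero_rpow hp0.ne',
        mul_zero, ENNReal.ofReal_zero]
  -- upper bound for the Morrey value of each f j on any ball
  have hub : ∀ (g : EuclideanSpace ℝ (Fin d) → ℝ),
      (∀ y, ENNReal.ofReal (|g y| ^ p) = V ^ (-(p/q)) * A.indicator 1 y) →
      ∀ (a : EuclideanSpace ℝ (Fin d)) (R : ℝ), 0 < R →
      volume (ball a R) ^ ((1:ℝ)/q - 1/p) *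
        (∫⁻ y in ball a R, ENNReal.ofReal (|g y| ^ p)) ^ ((1:ℝ)/p) ≤ 1 := by
    intro g hg a R hR
    rw [mnuAux_lint_eq hAmeas hcne hg]
    set W : ℝ≥0∞ := volume (ball a R) with hWdef
    have hW0 : W ≠ 0 := (measure_ball_pos volume a hR).ne'
    have hWt : W ≠ ⊤ := measure_ball_lt_top.ne
    have hexp : (1:ℝ)/q - 1/p = -(1/p - 1/q) := by ring
    rw [hexp, ENNReal.rpow_neg]
    refine mnuAux_inv_mul_le_one
      (ENNReal.rpow_pos (lt_of_le_of_ne zero_le (Ne.symm hW0)) hWt).ne'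
      (ENNReal.rpow_ne_top_of_nonneg hα.le hWt) ?_
    -- it remains: (c * vol(A ∩ B)) ^ (1/p) ≤ W ^ (1/p - 1/q)
    have hcsplit : ∀ Z : ℝ≥0∞, (V ^ (-(p/q)) * Z) ^ ((1:ℝ)/p)
        = V ^ (-(1/q) : ℝ) * Z ^ ((1:ℝ)/p) := by
      intro Z
      have hx : -(p/q) * (1/p) = -(1/q) := by field_simp
      rw [ENNReal.mul_rpow_of_nonneg _ _ (by positivity), ← ENNReal.rpow_mul, hx]
    by_cases hmulti : ∃ t t', t ≠ t' ∧ (ball a R ∩ ball (cen t) 1).Nonempty ∧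
        (ball a R ∩ ball (cen t') 1).Nonempty
    · -- ball meets at least two pieces: R is large
      obtain ⟨t, t', htt, ⟨y, hyB, hyt⟩, ⟨y', hyB', hyt'⟩⟩ := hmulti
      have hRlb : M ≤ R := by
        have hDdef' : D = 2 + 2 * M := hDdef
        linarith [hdist t t' htt, dist_triangle4 (cen t) y y' (cen t'),
          dist_triangle y a y', dist_comm (cen t) y, dist_comm a y',
          mem_ball.1 hyt, mem_ball.1 hyt', mem_ball.1 hyB, mem_ball.1 hyB']
      have hvol : volume (A ∩ ball a R) ≤ (m : ℝ≥0∞) * V := by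
        calc volume (A ∩ ball a R) ≤ volume A := measure_mono Set.inter_subset_left
        _ ≤ ∑ t : Fin n → Bool, volume (ball (cen t) 1) := measure_iUnion_fintype_le _ _
        _ = (m : ℝ≥0∞) * V := by
            simp only [Measure.addHaar_ball_center, ← hVdef, Finset.sum_const,
              Finset.card_univ, nsmul_eq_mul, hmdef]
      have hWlb : ENNReal.ofReal (M ^ d) * V ≤ W := by
        have h1 : volume (ball a M) = ENNReal.ofReal (M ^ d) * V := by
          rw [Measure.addHaar_ball (volume : Measure (EuclideanSpace ℝ (Fin d))) a hM0.le,
            finrank_euclideanSpace_fin,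
            Measure.addHaar_ball_center]
        rw [← h1, hWdef]
        exact measure_mono (ball_subset_ball hRlb)
      calc (V ^ (-(p/q)) * volume (A ∩ ball a R)) ^ ((1:ℝ)/p)
          ≤ (V ^ (-(p/q)) * ((m : ℝ≥0∞) * V)) ^ ((1:ℝ)/p) :=
            ENNReal.rpow_le_rpow (mul_le_mul_right hvol _) (by positivity)
        _ = (m : ℝ≥0∞) ^ ((1:ℝ)/p) * (V ^ (-(1/q) : ℝ) * V ^ ((1:ℝ)/p)) := by
            rw [show V ^ (-(p/q)) * ((m : ℝ≥0∞) * V) = (m : ℝ≥0∞) * (V ^ (-(p/q)) * V) by ring,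
              ENNReal.mul_rpow_of_nonneg _ _ (by positivity), hcsplit]
        _ = (m : ℝ≥0∞) ^ ((1:ℝ)/p) * V ^ ((1:ℝ)/p - 1/q) := by
            rw [← ENNReal.rpow_add _ _ hV0 hVt]
            congr 2
            ring
        _ ≤ ENNReal.ofReal (M ^ d) ^ ((1:ℝ)/p - 1/q) * V ^ ((1:ℝ)/p - 1/q) := by
            refine mul_le_mul_left ?_ _
            have h1 : ((m : ℝ≥0∞)) = ENNReal.ofReal (m : ℝ) := (ENNReal.ofReal_natCast m).symm
            rw [h1, ENNReal.ofReal_rpow_of_pos (by exact_mod_cast hm1.trans_lt' zero_lt_one),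
              ENNReal.ofReal_rpow_of_pos (by positivity)]
            exact ENNReal.ofReal_le_ofReal hMcard
        _ = (ENNReal.ofReal (M ^ d) * V) ^ ((1:ℝ)/p - 1/q) :=
            (ENNReal.mul_rpow_of_nonneg _ _ hα.le).symm
        _ ≤ W ^ ((1:ℝ)/p - 1/q) := ENNReal.rpow_le_rpow hWlb hα.le
    · -- ball meets at most one piece
      have hone : ∀ t t', (ball a R ∩ ball (cen t) 1).Nonempty →
          (ball a R ∩ ball (cen t') 1).Nonempty → t = t' := by
        intro t t' h h'
        by_contra hne
        exact hmulti ⟨t, t', hne, h, h'⟩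
      have hvV : volume (A ∩ ball a R) ≤ V := by
        by_cases hex : ∃ t, (ball a R ∩ ball (cen t) 1).Nonempty
        · obtain ⟨t0, ht0⟩ := hex
          have hsub : A ∩ ball a R ⊆ ball (cen t0) 1 := by
            rintro y ⟨hyA, hyB⟩
            obtain ⟨t, ht⟩ := Set.mem_iUnion.1 hyA
            have := hone t t0 ⟨y, hyB, ht⟩ ht0
            subst this
            exact ht
          calc volume (A ∩ ball a R) ≤ volume (ball (cen t0) 1) := measure_mono hsub
          _ = V := Measure.addHaar_ball_center _ _ _
        · push_neg at hex
          have : A ∩ ball a R = ∅ := by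
            ext y
            simp only [Set.mem_inter_iff, Set.mem_empty_iff_false, iff_false, not_and]
            intro hyA hyB
            obtain ⟨t, ht⟩ := Set.mem_iUnion.1 hyA
            have h5 := hex t
            rw [Set.eq_empty_iff_forall_notMem] at h5
            exact h5 y ⟨hyB, ht⟩
          rw [this]
          simp
      have hvW : volume (A ∩ ball a R) ≤ W := measure_mono Set.inter_subset_right
      rcases le_total W V with hWV | hVW
      · calc (V ^ (-(p/q)) * volume (A ∩ ball a R)) ^ ((1:ℝ)/p)
            ≤ (V ^ (-(p/q)) * W) ^ ((1:ℝ)/p) :=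
              ENNReal.rpow_le_rpow (mul_le_mul_right hvW _) (by positivity)
          _ = V ^ (-(1/q) : ℝ) * W ^ ((1:ℝ)/p) := hcsplit W
          _ ≤ W ^ (-(1/q) : ℝ) * W ^ ((1:ℝ)/p) := by
              refine mul_le_mul_left ?_ _
              rw [ENNReal.rpow_neg, ENNReal.rpow_neg]
              exact ENNReal.inv_le_inv.2 (ENNReal.rpow_le_rpow hWV (by positivity))
          _ = W ^ ((1:ℝ)/p - 1/q) := by
              rw [← ENNReal.rpow_add _ _ hW0 hWt]
              congr 1
              ring
      · calc (V ^ (-(p/q)) * volume (A ∩ ball a R)) ^ ((1:ℝ)/p)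
            ≤ (V ^ (-(p/q)) * V) ^ ((1:ℝ)/p) :=
              ENNReal.rpow_le_rpow (mul_le_mul_right hvV _) (by positivity)
          _ = V ^ (-(1/q) : ℝ) * V ^ ((1:ℝ)/p) := hcsplit V
          _ = V ^ ((1:ℝ)/p - 1/q) := by
              rw [← ENNReal.rpow_add _ _ hV0 hVt]
              congr 1
              ring
          _ ≤ W ^ ((1:ℝ)/p - 1/q) := ENNReal.rpow_le_rpow hVW hα.le
  -- f is measurable
  refine ⟨f, fun j => ?_, fun j => ?_, ?_⟩
  · rw [hfdef]
    exact Finset.measurable_sum _ fun t _ =>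
      (measurable_const.indicator measurableSet_ball)
  · -- Morrey norm of f j equals 1
    refine le_antisymm ?_ ?_
    · refine iSup_le fun a => iSup_le fun R => iSup_le fun hR => ?_
      exact hub (f j) (hgform j) a R hR
    · set t1 : Fin n → Bool := fun _ => true with ht1def
      have hval : volume (ball (cen t1) 1) ^ ((1:ℝ)/q - 1/p) *
          (∫⁻ y in ball (cen t1) 1, ENNReal.ofReal (|f j y| ^ p)) ^ ((1:ℝ)/p) = 1 := by
        rw [mnuAux_lint_ball (fun y hy => by
          rw [hfval j t1 y hy, abs_mul, hsgabs, one_mul, abs_of_pos hlam0]),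
          Measure.addHaar_ball_center, ← hVdef, mnuAux_calc hp0 hV0 hVt hlam0, hunit]
      calc (1:ℝ≥0∞) = volume (ball (cen t1) 1) ^ ((1:ℝ)/q - 1/p) *
          (∫⁻ y in ball (cen t1) 1, ENNReal.ofReal (|f j y| ^ p)) ^ ((1:ℝ)/p) := hval.symm
      _ ≤ morreyNorm d p q (f j) :=
          le_iSup_of_le (cen t1) (le_iSup_of_le 1 (le_iSup_of_le one_pos le_rfl))
  · -- the signed sums
    intro s hs hs0
    set ts : Fin n → Bool := fun j => decide (s j = 1) with htsdef
    have hsg : ∀ j, sg ts j = s j := by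
      intro j
      rcases hs j with h | h
      · simp [hsgdef, htsdef, h, decide_eq_true_eq]
      · simp only [hsgdef, htsdef, h, decide_eq_true_eq]
        rw [if_neg (by norm_num)]
    have hFval : ∀ y ∈ ball (cen ts) 1, (∑ i, s i * f i y) = n * lam := by
      intro y hy
      have h1 : ∀ i, s i * f i y = lam := by
        intro i
        rw [hfval i ts y hy, hsg]
        rcases hs i with h | h <;> rw [h] <;> ring
      rw [Finset.sum_congr rfl fun i _ => h1 i]
      simp [Finset.card_univ, mul_comm]
    have hnl0 : (0:ℝ) < n * lam := by positivity
    have hval : volume (ball (cen ts) 1) ^ ((1:ℝ)/q - 1/p) *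
        (∫⁻ y in ball (cen ts) 1,
          ENNReal.ofReal (|∑ i, s i * f i y| ^ p)) ^ ((1:ℝ)/p) = ENNReal.ofReal n := by
      rw [mnuAux_lint_ball (fun y hy => by rw [hFval y hy, abs_of_pos hnl0]),
        Measure.addHaar_ball_center, ← hVdef, mnuAux_calc hp0 hV0 hVt hnl0,
        ENNReal.ofReal_mul (by positivity), mul_assoc, hunit, mul_one]
    have hlt : ENNReal.ofReal (n * (1 - δ)) < ENNReal.ofReal n := by
      rw [ENNReal.ofReal_lt_ofReal_iff (by positivity)]
      have hn0 : (0:ℝ) < n := by positivity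
      nlinarith
    refine hlt.trans_le ?_
    calc ENNReal.ofReal n = volume (ball (cen ts) 1) ^ ((1:ℝ)/q - 1/p) *
        (∫⁻ y in ball (cen ts) 1,
          ENNReal.ofReal (|∑ i, s i * f i y| ^ p)) ^ ((1:ℝ)/p) := hval.symm
    _ ≤ morreyNorm d p q (fun x => ∑ i, s i * f i x) :=
        le_iSup_of_le (cen ts) (le_iSup_of_le 1 (le_iSup_of_le one_pos le_rfl))
end

section
/- Let d ≥ 1 be an integer and let 1 ≤ p < q < ∞ be real numbers. Then for every δ > 0 there exist measurable functions f, g, h : ℝ^d → ℝ with ‖f‖_{M^p_q} = ‖g‖_{M^p_q} = ‖h‖_{M^p_q} = 1 such that ‖f ± g ± h‖_{M^p_q} > 3(1 − δ) for all four choices of signs; that is, the Morrey space M^p_q(ℝ^d) is not uniformly non-octahedral. -/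
open MeasureTheory Metric
open scoped ENNReal

lemma morreyAux_rpow_ne (x : ℝ≥0∞) (hx0 : x ≠ 0) (hxt : x ≠ ⊤) (y : ℝ) :
    x ^ y ≠ 0 ∧ x ^ y ≠ ⊤ := by
  constructor
  · simp [ENNReal.rpow_eq_zero_iff, hx0, hxt]
  · simp [ENNReal.rpow_eq_top_iff, hx0, hxt]

lemma morreyAux_term_eq (V : ℝ≥0∞) (hV0 : V ≠ 0) (hVt : V ≠ ⊤) (p q : ℝ)
    (hp0 : 0 < p) (hq0 : 0 < q) (k : ℝ≥0∞) (hkt : k ≠ ⊤) :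
    V ^ (1 / q - 1 / p) * ((k ^ p * V ^ (-(1 / q) * p)) * V) ^ (1 / p) = k := by
  have hVA : V ^ (-(1 / q) * p) * V = V ^ (-(1 / q) * p + 1) := by
    rw [ENNReal.rpow_add _ _ hV0 hVt, ENNReal.rpow_one]
  have hkp : k ^ p ≠ ⊤ := ENNReal.rpow_ne_top_of_nonneg hp0.le hkt
  have h1 : ((k ^ p * V ^ (-(1 / q) * p)) * V) ^ (1/p)
      = (k ^ p) ^ (1/p) * (V ^ (-(1 / q) * p + 1)) ^ (1/p) := by
    rw [mul_assoc, hVA, ENNReal.mul_rpow_of_ne_top hkp (morreyAux_rpow_ne V hV0 hVt _).2]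
  rw [h1, ← ENNReal.rpow_mul, ← ENNReal.rpow_mul, mul_one_div_cancel hp0.ne', ENNReal.rpow_one]
  rw [mul_comm k _, ← mul_assoc, ← ENNReal.rpow_add _ _ hV0 hVt]
  have : (1 / q - 1 / p) + (-(1 / q) * p + 1) * (1 / p) = 0 := by field_simp; ring
  rw [this, ENNReal.rpow_zero, one_mul]

lemma morreyAux_term_le (V ρ : ℝ≥0∞) (hV0 : V ≠ 0) (hVt : V ≠ ⊤)
    (hρ0 : ρ ≠ 0) (hρt : ρ ≠ ⊤) (p q : ℝ) (hp0 : 0 < p) (hq0 : 0 < q)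
    (m : ℝ≥0∞) (hm : m ≤ ρ ^ (1 - p / q) * V) :
    (ρ * V) ^ (1 / q - 1 / p) * (V ^ (-(1 / q) * p) * m) ^ (1 / p) ≤ 1 := by
  have h1 : (V ^ (-(1 / q) * p) * m) ^ (1/p)
      ≤ (V ^ (-(1 / q) * p) * (ρ ^ (1 - p / q) * V)) ^ (1/p) :=
    ENNReal.rpow_le_rpow (mul_le_mul_right hm _) (by positivity)
  refine le_trans (mul_le_mul_right h1 _) (le_of_eq ?_)
  have h2 : V ^ (-(1 / q) * p) * (ρ ^ (1 - p / q) * V)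
      = ρ ^ (1 - p / q) * V ^ (-(1 / q) * p + 1) := by
    rw [ENNReal.rpow_add _ _ hV0 hVt, ENNReal.rpow_one]; ring
  rw [h2, ENNReal.mul_rpow_of_ne_top hρt hVt,
    ENNReal.mul_rpow_of_ne_top (morreyAux_rpow_ne ρ hρ0 hρt _).2 (morreyAux_rpow_ne V hV0 hVt _).2,
    ← ENNReal.rpow_mul, ← ENNReal.rpow_mul]
  calc ρ ^ (1/q - 1/p) * V ^ (1/q - 1/p) * (ρ ^ ((1 - p/q) * (1/p)) * V ^ ((-(1/q) * p + 1) * (1/p)))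
      = (ρ ^ (1/q - 1/p) * ρ ^ ((1 - p/q) * (1/p))) * (V ^ (1/q - 1/p) * V ^ ((-(1/q) * p + 1) * (1/p))) := by
        ring
    _ = ρ ^ ((1/q - 1/p) + (1 - p/q) * (1/p)) * V ^ ((1/q - 1/p) + (-(1/q) * p + 1) * (1/p)) := by
        rw [← ENNReal.rpow_add _ _ hρ0 hρt, ← ENNReal.rpow_add _ _ hV0 hVt]
    _ = 1 := by
        rw [show (1/q - 1/p) + (1 - p/q) * (1/p) = 0 by field_simp; ring,
          show (1/q - 1/p) + (-(1/q) * p + 1) * (1/p) = 0 by field_simp; ring]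
        simp

set_option maxHeartbeats 1000000 in
/-- Theorem 2: the Morrey space `M^p_q(ℝ^d)`, `1 ≤ p < q < ∞`, is not uniformly
non-octahedral: for every `δ > 0` there exist measurable `f, g, h` of Morrey norm `1`
such that `‖f ± g ± h‖_{M^p_q} > 3(1-δ)` for all four choices of signs. -/
theorem morrey_not_uniformly_non_octahedral (d : ℕ) (hd : 1 ≤ d) (p q : ℝ) (hp : 1 ≤ p)
    (hpq : p < q) (δ : ℝ) (hδ : 0 < δ) :
    ∃ f g h : EuclideanSpace ℝ (Fin d) → ℝ,
      Measurable f ∧ Measurable g ∧ Measurable h ∧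
      morreyNorm d p q f = 1 ∧ morreyNorm d p q g = 1 ∧ morreyNorm d p q h = 1 ∧
        ∀ s t : ℝ, (s = 1 ∨ s = -1) → (t = 1 ∨ t = -1) →
          ENNReal.ofReal (3 * (1 - δ)) <
            morreyNorm d p q (fun x => f x + s * g x + t * h x) := by
  classical
  haveI : Nonempty (Fin d) := ⟨⟨0, hd⟩⟩
  have hp0 : (0:ℝ) < p := lt_of_lt_of_le one_pos hp
  have hq0 : (0:ℝ) < q := hp0.trans hpq
  have hd0 : (0:ℝ) < (d:ℝ) := by exact_mod_cast hd
  have hθ1 : p / q < 1 := (div_lt_one hq0).2 hpq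
  have hθ0 : 0 < p / q := div_pos hp0 hq0
  -- the volume of the unit ball
  set V : ℝ≥0∞ := volume (ball (0 : EuclideanSpace ℝ (Fin d)) 1) with hVdef
  have hV0 : V ≠ 0 := (measure_ball_pos _ _ one_pos).ne'
  have hVt : V ≠ ⊤ := measure_ball_lt_top.ne
  have hvol : ∀ (a : EuclideanSpace ℝ (Fin d)) {R : ℝ}, 0 ≤ R →
      volume (ball a R) = ENNReal.ofReal (R ^ d) * V := by
    intro a R hR
    rw [hVdef, Measure.addHaar_ball volume a hR, finrank_euclideanSpace_fin]
  have hvol1 : ∀ a : EuclideanSpace ℝ (Fin d), volume (ball a 1) = V := by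
    intro a; rw [hvol a zero_le_one]; simp
  -- the coefficient c
  set c : ℝ := (V ^ (-(1/q))).toReal with hcdef
  have hcV : ENNReal.ofReal c = V ^ (-(1/q)) :=
    ENNReal.ofReal_toReal (morreyAux_rpow_ne V hV0 hVt _).2
  have hc0 : 0 < c := ENNReal.toReal_pos (morreyAux_rpow_ne V hV0 hVt _).1
    (morreyAux_rpow_ne V hV0 hVt _).2
  have hcp : ENNReal.ofReal (c ^ p) = V ^ (-(1/q) * p) := by
    rw [← ENNReal.ofReal_rpow_of_nonneg hc0.le hp0.le, hcV, ← ENNReal.rpow_mul]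
  -- the scale R₀ and separation D
  have hexp : (0:ℝ) < (d:ℝ) * (1 - p/q) := by nlinarith
  set R₀ : ℝ := max 1 (4 ^ (((d:ℝ) * (1 - p/q))⁻¹)) with hR₀def
  have hR₀1 : (1:ℝ) ≤ R₀ := le_max_left _ _
  have hR₀4 : (4:ℝ) ≤ R₀ ^ ((d:ℝ) * (1 - p/q)) := by
    calc (4:ℝ) = ((4:ℝ) ^ (((d:ℝ) * (1 - p/q))⁻¹)) ^ ((d:ℝ) * (1 - p/q)) := by
          rw [← Real.rpow_mul (by norm_num), inv_mul_cancel₀ hexp.ne', Real.rpow_one]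
      _ ≤ R₀ ^ ((d:ℝ) * (1 - p/q)) :=
          Real.rpow_le_rpow (by positivity) (le_max_right _ _) hexp.le
  set D : ℝ := 2 * R₀ + 2 with hDdef
  have hD4 : (4:ℝ) ≤ D := by simp only [hDdef]; linarith
  have hD0 : (0:ℝ) < D := by linarith
  -- the centers
  set z : Fin 4 → EuclideanSpace ℝ (Fin d) :=
    fun j => EuclideanSpace.single ⟨0, hd⟩ ((j : ℕ) * D) with hzdef
  have hzz : ∀ i j : Fin 4, i ≠ j → D ≤ dist (z i) (z j) := by
    intro i j hij
    have hij' : ((i:ℕ):ℤ) ≠ ((j:ℕ):ℤ) := by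
      intro hc; exact hij (Fin.ext (by exact_mod_cast hc))
    have h1z : (1:ℤ) ≤ |((i:ℕ):ℤ) - ((j:ℕ):ℤ)| := Int.one_le_abs (sub_ne_zero.2 hij')
    have h1 : (1:ℝ) ≤ |((i:ℕ):ℝ) - ((j:ℕ):ℝ)| := by exact_mod_cast h1z
    rw [hzdef]
    simp only
    rw [EuclideanSpace.dist_single_same, Real.dist_eq, ← sub_mul, abs_mul, abs_of_pos hD0]
    nlinarith
  have hnotmem : ∀ (j₀ j : Fin 4), j ≠ j₀ → ∀ x ∈ ball (z j₀) 1, x ∉ ball (z j) 1 := by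
    intro j₀ j hj x hx hx'
    rw [mem_ball] at hx hx'
    have h1 := hzz j j₀ hj
    have h2 : dist (z j) (z j₀) ≤ dist (z j) x + dist x (z j₀) := dist_triangle _ _ _
    rw [dist_comm (z j) x] at h2
    linarith
  -- the support set E
  set E : Set (EuclideanSpace ℝ (Fin d)) := ⋃ j, ball (z j) 1 with hEdef
  have hE : MeasurableSet E := MeasurableSet.iUnion fun j => measurableSet_ball
  -- indicator functions and sums
  set ind : Fin 4 → EuclideanSpace ℝ (Fin d) → ℝ :=
    fun j x => if x ∈ ball (z j) 1 then 1 else 0 with hinddef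
  have hindmeas : ∀ j, Measurable (ind j) := fun j =>
    Measurable.ite measurableSet_ball measurable_const measurable_const
  have hsum : ∀ (w : Fin 4 → ℝ) x (j₀ : Fin 4), x ∈ ball (z j₀) 1 →
      ∑ j, w j * ind j x = w j₀ := by
    intro w x j₀ hx
    rw [Finset.sum_eq_single j₀]
    · simp only [hinddef]; rw [if_pos hx, mul_one]
    · intro j _ hj; simp only [hinddef]; rw [if_neg (hnotmem j₀ j hj x hx), mul_zero]
    · intro hmem; exact absurd (Finset.mem_univ j₀) hmem
  have hsum0 : ∀ (w : Fin 4 → ℝ) x, x ∉ E → ∑ j, w j * ind j x = 0 := by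
    intro w x hx
    refine Finset.sum_eq_zero fun j _ => ?_
    have hnm : x ∉ ball (z j) 1 := fun hmem => hx (Set.mem_iUnion.2 ⟨j, hmem⟩)
    simp only [hinddef]; rw [if_neg hnm, mul_zero]
  -- the three functions, as F applied to sign vectors
  set F : (Fin 4 → ℝ) → EuclideanSpace ℝ (Fin d) → ℝ :=
    fun w x => c * ∑ j, w j * ind j x with hFdef
  have hFmeas : ∀ w, Measurable (F w) := fun w =>
    measurable_const.mul (Finset.measurable_sum _ fun j _ => (hindmeas j).const_mul (w j))
  set σ : Fin 4 → ℝ := fun j => if (j:ℕ) ≤ 1 then 1 else -1 with hσdef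
  set τ : Fin 4 → ℝ := fun j => if (j:ℕ) % 2 = 0 then 1 else -1 with hτdef
  -- the generic lower bound for the Morrey norm via one ball
  have norm_ge : ∀ (u : EuclideanSpace ℝ (Fin d) → ℝ) (a : EuclideanSpace ℝ (Fin d))
      (R : ℝ), 0 < R →
      volume (ball a R) ^ (1/q - 1/p) *
        (∫⁻ y in ball a R, ENNReal.ofReal (|u y| ^ p)) ^ (1/p) ≤ morreyNorm d p q u := by
    intro u a R hR
    unfold morreyNorm
    exact le_iSup_of_le a (le_iSup_of_le R (le_iSup_of_le hR le_rfl))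
  have hlow : ∀ (u : EuclideanSpace ℝ (Fin d) → ℝ) (j : Fin 4) (k : ℝ), 0 ≤ k →
      (∀ y ∈ ball (z j) 1, |u y| = k * c) →
      ENNReal.ofReal k ≤ morreyNorm d p q u := by
    intro u j k hk hu
    refine le_trans (le_of_eq ?_) (norm_ge u (z j) 1 one_pos)
    rw [setLIntegral_congr_fun measurableSet_ball
      ((fun y hy => by rw [hu y hy] :
        ∀ y ∈ ball (z j) 1, ENNReal.ofReal (|u y| ^ p)
          = ENNReal.ofReal ((k * c) ^ p))), setLIntegral_const, hvol1]
    have hkc : ENNReal.ofReal ((k * c) ^ p) = (ENNReal.ofReal k) ^ p * V ^ (-(1/q) * p) := by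
      rw [← ENNReal.ofReal_rpow_of_nonneg (by positivity) hp0.le, ENNReal.ofReal_mul hk,
        ENNReal.mul_rpow_of_ne_top ENNReal.ofReal_ne_top ENNReal.ofReal_ne_top,
        ENNReal.ofReal_rpow_of_nonneg hc0.le hp0.le, hcp]
    rw [hkc, morreyAux_term_eq V hV0 hVt p q hp0 hq0 _ ENNReal.ofReal_ne_top]
  -- upper bound
  have hupper : ∀ u : EuclideanSpace ℝ (Fin d) → ℝ,
      (∀ x, ENNReal.ofReal (|u x| ^ p) = E.indicator (fun _ => V ^ (-(1/q) * p)) x) →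
      morreyNorm d p q u ≤ 1 := by
    intro u hu
    unfold morreyNorm
    refine iSup_le fun a => iSup_le fun R => iSup_le fun hR => ?_
    have hint : (∫⁻ y in ball a R, ENNReal.ofReal (|u y| ^ p))
        = V ^ (-(1/q) * p) * volume (E ∩ ball a R) := by
      rw [lintegral_congr fun y => hu y, lintegral_indicator hE, setLIntegral_const,
        Measure.restrict_apply hE]
    rw [hint, hvol a hR.le]
    set ρ : ℝ≥0∞ := ENNReal.ofReal (R ^ d) with hρdef
    have hρ0 : ρ ≠ 0 := by
      simp only [hρdef, ne_eq, ENNReal.ofReal_eq_zero, not_le]; positivity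
    have hρt : ρ ≠ ⊤ := ENNReal.ofReal_ne_top
    refine morreyAux_term_le V ρ hV0 hVt hρ0 hρt p q hp0 hq0 _ ?_
    -- the measure bound
    rcases le_or_gt R 1 with h1 | h1
    · calc volume (E ∩ ball a R) ≤ volume (ball a R) := measure_mono Set.inter_subset_right
        _ = ρ * V := hvol a hR.le
        _ ≤ ρ ^ (1 - p/q) * V := by
            refine mul_le_mul_left ?_ V
            have hρle : ρ ≤ 1 := by
              rw [hρdef]; exact ENNReal.ofReal_le_one.2 (pow_le_one₀ hR.le h1)
            calc ρ = ρ ^ (1:ℝ) := (ENNReal.rpow_one ρ).symm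
              _ ≤ ρ ^ (1 - p/q) := ENNReal.rpow_le_rpow_of_exponent_ge hρle (by linarith)
    rcases le_or_gt R R₀ with h2 | h2
    · -- at most one ball is met
      have hmV : volume (E ∩ ball a R) ≤ V := by
        by_cases hne : ∃ i, (ball (z i) 1 ∩ ball a R).Nonempty
        · obtain ⟨i, y, hy1, hy2⟩ := hne
          have hsub : E ∩ ball a R ⊆ ball (z i) 1 := by
            rintro x ⟨hxE, hxB⟩
            obtain ⟨j, hj⟩ := Set.mem_iUnion.1 hxE
            rcases eq_or_ne j i with rfl | hij
            · exact hj
            · exfalso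
              have hd1 := hzz i j (Ne.symm hij)
              have t1 : dist (z i) (z j) ≤ dist (z i) a + dist a (z j) := dist_triangle _ _ _
              have t2 : dist (z i) a ≤ dist (z i) y + dist y a := dist_triangle _ _ _
              have t3 : dist a (z j) ≤ dist a x + dist x (z j) := dist_triangle _ _ _
              rw [mem_ball] at hy1 hy2 hj hxB
              rw [dist_comm (z i) y] at t2
              rw [dist_comm a x] at t3
              simp only [hDdef] at hd1
              linarith
          calc volume (E ∩ ball a R) ≤ volume (ball (z i) 1) := measure_mono hsub
            _ = V := hvol1 _
        · push_neg at hne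
          have : E ∩ ball a R = ∅ := by
            rw [hEdef, Set.iUnion_inter]
            exact Set.iUnion_eq_empty.2 hne
          rw [this]; simp
      refine le_trans hmV ?_
      have : (1:ℝ≥0∞) ≤ ρ ^ (1 - p/q) := by
        have hρ1 : (1:ℝ≥0∞) ≤ ρ := by
          rw [hρdef, ← ENNReal.ofReal_one]
          exact ENNReal.ofReal_le_ofReal (one_le_pow₀ h1.le)
        calc (1:ℝ≥0∞) = 1 ^ (1 - p/q) := (ENNReal.one_rpow _).symm
          _ ≤ ρ ^ (1 - p/q) := ENNReal.rpow_le_rpow hρ1 (by linarith)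
      calc V = 1 * V := (one_mul V).symm
        _ ≤ ρ ^ (1 - p/q) * V := mul_le_mul_left this V
    · -- big radius: use total mass 4V
      have hm4 : volume (E ∩ ball a R) ≤ 4 * V := by
        calc volume (E ∩ ball a R) ≤ volume E := measure_mono Set.inter_subset_left
          _ ≤ ∑ j : Fin 4, volume (ball (z j) 1) := measure_iUnion_fintype_le _ _
          _ = 4 * V := by simp [hvol1, Finset.sum_const]
      refine le_trans hm4 (mul_le_mul_left ?_ V)
      have h4ρ : (4:ℝ≥0∞) ≤ ρ ^ (1 - p/q) := by
        rw [hρdef, ENNReal.ofReal_rpow_of_nonneg (by positivity) (by linarith)]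
        have hreal : (4:ℝ) ≤ (R ^ d) ^ (1 - p/q) := by
          calc (4:ℝ) ≤ R₀ ^ ((d:ℝ) * (1 - p/q)) := hR₀4
            _ ≤ R ^ ((d:ℝ) * (1 - p/q)) :=
                Real.rpow_le_rpow (by linarith) h2.le hexp.le
            _ = (R ^ d) ^ (1 - p/q) := by
                rw [← Real.rpow_natCast R d, ← Real.rpow_mul (by linarith)]
        calc (4:ℝ≥0∞) = ENNReal.ofReal 4 := by norm_num
          _ ≤ ENNReal.ofReal ((R ^ d) ^ (1 - p/q)) := ENNReal.ofReal_le_ofReal hreal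
      exact h4ρ
  -- pointwise description of |F w|
  have habs : ∀ (w : Fin 4 → ℝ), (∀ j, |w j| = 1) → ∀ x,
      ENNReal.ofReal (|F w x| ^ p) = E.indicator (fun _ => V ^ (-(1/q) * p)) x := by
    intro w hw x
    by_cases hx : x ∈ E
    · obtain ⟨j₀, hj₀⟩ := Set.mem_iUnion.1 hx
      rw [Set.indicator_of_mem hx]
      simp only [hFdef]
      rw [hsum w x j₀ hj₀, abs_mul, abs_of_pos hc0, hw j₀, mul_one, hcp]
    · rw [Set.indicator_of_notMem hx]
      simp only [hFdef]
      rw [hsum0 w x hx, mul_zero, abs_zero, Real.zero_rpow hp0.ne', ENNReal.ofReal_zero]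
  have hwabs1 : ∀ j : Fin 4, |(fun _ : Fin 4 => (1:ℝ)) j| = 1 := fun j => abs_one
  have hwabsσ : ∀ j : Fin 4, |σ j| = 1 := by
    intro j; by_cases hj : (j:ℕ) ≤ 1 <;> simp [hσdef, hj]
  have hwabsτ : ∀ j : Fin 4, |τ j| = 1 := by
    intro j; by_cases hj : (j:ℕ) % 2 = 0 <;> simp [hτdef, hj]
  -- each function has norm exactly 1
  have hnorm1 : ∀ (w : Fin 4 → ℝ), (∀ j, |w j| = 1) → morreyNorm d p q (F w) = 1 := by
    intro w hw
    refine le_antisymm (hupper _ (habs w hw)) ?_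
    have := hlow (F w) 0 1 zero_le_one ?_
    · simpa using this
    · intro y hy
      simp only [hFdef]
      rw [hsum w y 0 hy, abs_mul, abs_of_pos hc0, hw 0, mul_one, one_mul]
  refine ⟨F (fun _ => 1), F σ, F τ, hFmeas _, hFmeas _, hFmeas _,
    hnorm1 _ hwabs1, hnorm1 _ hwabsσ, hnorm1 _ hwabsτ, ?_⟩
  intro s t hs ht
  -- find the matching ball
  have hmatch : ∃ j : Fin 4, σ j = s ∧ τ j = t := by
    rcases hs with rfl | rfl <;> rcases ht with rfl | rfl
    · exact ⟨⟨0, by norm_num⟩, by norm_num [hσdef, hτdef], by norm_num [hσdef, hτdef]⟩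
    · exact ⟨⟨1, by norm_num⟩, by norm_num [hσdef, hτdef], by norm_num [hσdef, hτdef]⟩
    · exact ⟨⟨2, by norm_num⟩, by norm_num [hσdef, hτdef], by norm_num [hσdef, hτdef]⟩
    · exact ⟨⟨3, by norm_num⟩, by norm_num [hσdef, hτdef], by norm_num [hσdef, hτdef]⟩
  obtain ⟨j, hjs, hjt⟩ := hmatch
  have hs1 : s * s = 1 := by rcases hs with rfl | rfl <;> norm_num
  have ht1 : t * t = 1 := by rcases ht with rfl | rfl <;> norm_num
  have hval : ∀ y ∈ ball (z j) 1,
      |F (fun _ => 1) y + s * F σ y + t * F τ y| = 3 * c := by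
    intro y hy
    simp only [hFdef]
    rw [hsum (fun _ => 1) y j hy, hsum σ y j hy, hsum τ y j hy, hjs, hjt]
    have : c * 1 + s * (c * s) + t * (c * t) = 3 * c := by nlinarith
    rw [this, abs_of_pos (by linarith)]
  have h3 := hlow _ j 3 (by norm_num) hval
  refine lt_of_lt_of_le ?_ h3
  rw [ENNReal.ofReal_lt_ofReal_iff (by norm_num)]
  nlinarith
end

section
/- Let d ≥ 1 be an integer and let 1 ≤ p < q < ∞ be real numbers. Then for every δ ∈ (0,1) there exist measurable functions f, g : ℝ^d → ℝ with ‖f‖_{M^p_q} = ‖g‖_{M^p_q} = 1 such that min{‖f + g‖_{M^p_q}, ‖f − g‖_{M^p_q}} > 2(1 − δ); that is, the Morrey space M^p_q(ℝ^d) is not uniformly non-square. -/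
open MeasureTheory Metric
open scoped ENNReal

lemma my_rpow_anti {x y : ℝ≥0∞} {z : ℝ} (hz : z ≤ 0) (hxy : x ≤ y) : y ^ z ≤ x ^ z := by
  rw [show z = -(-z) by ring, ENNReal.rpow_neg y, ENNReal.rpow_neg x]
  exact ENNReal.inv_le_inv.2 (ENNReal.rpow_le_rpow hxy (neg_nonneg.2 hz))

lemma aux_rpow_bound (p q : ℝ) (hp : 1 ≤ p) (hpq : p < q) (W V m : ℝ≥0∞)
    (hW0 : W ≠ 0) (hWt : W ≠ ∞) (hV0 : V ≠ 0) (hVt : V ≠ ∞)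
    (hmW : m ≤ W) (hmV : m ≤ V) :
    W ^ (1/q - 1/p) * m ^ (1/p) ≤ V ^ (1/q) := by
  have hp0 : (0:ℝ) < p := lt_of_lt_of_le one_pos hp
  have hq0 : (0:ℝ) < q := lt_trans hp0 hpq
  have h1p : (0:ℝ) ≤ 1/p := by positivity
  have h1q : (0:ℝ) ≤ 1/q := by positivity
  rcases le_total W V with h | h
  · calc W ^ (1/q - 1/p) * m ^ (1/p) ≤ W ^ (1/q - 1/p) * W ^ (1/p) :=
          mul_le_mul_right (ENNReal.rpow_le_rpow hmW h1p) _
    _ = W ^ (1/q) := by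
          rw [← ENNReal.rpow_add _ _ hW0 hWt]; ring_nf
    _ ≤ V ^ (1/q) := ENNReal.rpow_le_rpow h h1q
  · have hneg : 1/q - 1/p ≤ 0 := by
      have : 1/q < 1/p := one_div_lt_one_div_of_lt hp0 hpq
      linarith
    calc W ^ (1/q - 1/p) * m ^ (1/p) ≤ V ^ (1/q - 1/p) * V ^ (1/p) :=
          mul_le_mul' (my_rpow_anti hneg h) (ENNReal.rpow_le_rpow hmV h1p)
    _ = V ^ (1/q) := by rw [← ENNReal.rpow_add _ _ hV0 hVt]; ring_nf

lemma term_eq (p : ℝ) (hp0 : 0 < p) {d : ℕ} (s : Set (EuclideanSpace ℝ (Fin d)))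
    (hs : MeasurableSet s) (c : ℝ) (B : Set (EuclideanSpace ℝ (Fin d))) :
    (∫⁻ y in B, ENNReal.ofReal (|Set.indicator s (fun _ => c) y| ^ p)) =
      ENNReal.ofReal (|c| ^ p) * volume (s ∩ B) := by
  have hpt : ∀ y, ENNReal.ofReal (|Set.indicator s (fun _ => c) y| ^ p) =
      Set.indicator s (fun _ => ENNReal.ofReal (|c| ^ p)) y := by
    intro y
    by_cases hy : y ∈ s
    · simp [Set.indicator_of_mem hy]
    · simp [Set.indicator_of_notMem hy, Real.zero_rpow hp0.ne']
  simp_rw [hpt]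
  rw [lintegral_indicator hs, setLIntegral_const, Measure.restrict_apply hs]

lemma ofReal_abs_rpow_inv (p : ℝ) (hp0 : 0 < p) (c : ℝ) (hc : 0 < c) :
    (ENNReal.ofReal (|c| ^ p)) ^ (1/p) = ENNReal.ofReal c := by
  rw [abs_of_pos hc, ENNReal.ofReal_rpow_of_pos (Real.rpow_pos_of_pos hc p),
    ← Real.rpow_mul hc.le, mul_one_div_cancel hp0.ne', Real.rpow_one]

lemma aux_far_bound (p q : ℝ) (hp : 1 ≤ p) (hpq : p < q) (V W m : ℝ≥0∞)
    (hV0 : V ≠ 0) (hVt : V ≠ ∞) (hW0 : W ≠ 0) (hWt : W ≠ ∞)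
    (hm : m ≤ 2 * V)
    (hKW : ENNReal.ofReal ((2:ℝ) ^ (1/(p*(1/p-1/q)))) * V ≤ W) :
    V ^ (-(1/q) : ℝ) * (W ^ (1/q - 1/p) * m ^ (1/p)) ≤ 1 := by
  have hp0 : (0:ℝ) < p := lt_of_lt_of_le one_pos hp
  have hq0 : (0:ℝ) < q := hp0.trans hpq
  have ht : (0:ℝ) < 1/p - 1/q := by
    have := one_div_lt_one_div_of_lt hp0 hpq; linarith
  have h1p : (0:ℝ) ≤ 1/p := by positivity
  have hneg : 1/q - 1/p ≤ 0 := by linarith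
  have hKr0 : (0:ℝ) < (2:ℝ) ^ (1/(p*(1/p-1/q))) := Real.rpow_pos_of_pos two_pos _
  have step1 : W ^ (1/q - 1/p) ≤
      (ENNReal.ofReal ((2:ℝ) ^ (1/(p*(1/p-1/q)))) * V) ^ (1/q - 1/p) :=
    my_rpow_anti hneg hKW
  have step2 : m ^ (1/p) ≤ ((2:ℝ≥0∞) * V) ^ (1/p) := ENNReal.rpow_le_rpow hm h1p
  calc V ^ (-(1/q) : ℝ) * (W ^ (1/q - 1/p) * m ^ (1/p))
      ≤ V ^ (-(1/q) : ℝ) *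
        ((ENNReal.ofReal ((2:ℝ) ^ (1/(p*(1/p-1/q)))) * V) ^ (1/q - 1/p) *
          ((2:ℝ≥0∞) * V) ^ (1/p)) := mul_le_mul_right (mul_le_mul' step1 step2) _
    _ = (ENNReal.ofReal ((2:ℝ) ^ (1/(p*(1/p-1/q)))) ^ (1/q - 1/p) * (2:ℝ≥0∞) ^ (1/p)) *
        (V ^ (-(1/q) : ℝ) * (V ^ (1/q - 1/p) * V ^ (1/p))) := by
        rw [ENNReal.mul_rpow_of_ne_top ENNReal.ofReal_ne_top hVt,
          ENNReal.mul_rpow_of_nonneg _ _ h1p]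
        ring
    _ = 1 := by
        have hc : ENNReal.ofReal ((2:ℝ) ^ (1/(p*(1/p-1/q)))) ^ (1/q - 1/p) * (2:ℝ≥0∞) ^ (1/p)
            = 1 := by
          rw [ENNReal.ofReal_rpow_of_pos hKr0,
            show (2:ℝ≥0∞) = ENNReal.ofReal 2 by simp,
            ENNReal.ofReal_rpow_of_pos two_pos,
            ← ENNReal.ofReal_mul (by positivity),
            ← Real.rpow_mul (by norm_num : (0:ℝ) ≤ 2),
            ← Real.rpow_add two_pos]
          have : 1/(p*(1/p-1/q)) * (1/q - 1/p) + 1/p = 0 := by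
            have h1 : p ≠ 0 := hp0.ne'
            have h2 : q ≠ 0 := hq0.ne'
            have h3 : q - p ≠ 0 := sub_ne_zero.2 (ne_of_gt hpq)
            field_simp
            ring
          rw [this, Real.rpow_zero, ENNReal.ofReal_one]
        have hv : V ^ (-(1/q) : ℝ) * (V ^ (1/q - 1/p) * V ^ (1/p)) = 1 := by
          rw [← ENNReal.rpow_add _ _ hV0 hVt, ← ENNReal.rpow_add _ _ hV0 hVt,
            show 1/q - 1/p + 1/p = (1/q : ℝ) by ring, show -(1/q) + 1/q = (0:ℝ) by ring,
            ENNReal.rpow_zero]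
        rw [hc, hv, one_mul]

lemma le_morrey (d : ℕ) (p q : ℝ) (f : EuclideanSpace ℝ (Fin d) → ℝ)
    (a : EuclideanSpace ℝ (Fin d)) {R : ℝ} (hR : 0 < R) :
    volume (ball a R) ^ (1/q - 1/p) *
      (∫⁻ y in ball a R, ENNReal.ofReal (|f y| ^ p)) ^ (1/p) ≤ morreyNorm d p q f :=
  le_iSup_of_le a (le_iSup_of_le R (le_iSup_of_le hR le_rfl))

lemma morreyNorm_congr_abs (d : ℕ) (p q : ℝ) {f g : EuclideanSpace ℝ (Fin d) → ℝ}
    (h : ∀ y, |f y| = |g y|) : morreyNorm d p q f = morreyNorm d p q g := by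
  unfold morreyNorm
  simp_rw [h]

/-- The Morrey space `M^p_q(ℝ^d)`, `1 ≤ p < q < ∞`, is not uniformly non-square:
for every `δ ∈ (0,1)` there exist measurable `f, g` of Morrey norm `1` such that
`min{‖f + g‖_{M^p_q}, ‖f - g‖_{M^p_q}} > 2(1-δ)`. -/
theorem morrey_not_uniformly_nonsquare (d : ℕ) (hd : 1 ≤ d) (p q : ℝ) (hp : 1 ≤ p)
    (hpq : p < q) (δ : ℝ) (hδ0 : 0 < δ) (hδ1 : δ < 1) :
    ∃ f g : EuclideanSpace ℝ (Fin d) → ℝ,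
      Measurable f ∧ Measurable g ∧
      morreyNorm d p q f = 1 ∧ morreyNorm d p q g = 1 ∧
        ENNReal.ofReal (2 * (1 - δ)) <
          min (morreyNorm d p q (fun x => f x + g x))
            (morreyNorm d p q (fun x => f x - g x)) := by
  classical
  have hp0 : (0:ℝ) < p := lt_of_lt_of_le one_pos hp
  have hq0 : (0:ℝ) < q := hp0.trans hpq
  have h1p : (0:ℝ) ≤ 1/p := by positivity
  have ht : (0:ℝ) < 1/p - 1/q := by
    have := one_div_lt_one_div_of_lt hp0 hpq; linarith
  haveI : Nonempty (Fin d) := ⟨⟨0, hd⟩⟩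
  haveI : Nontrivial (EuclideanSpace ℝ (Fin d)) := by infer_instance
  -- the constants
  set Kr := (2:ℝ) ^ (1/(p*(1/p-1/q))) with hKrdef
  have hKr1 : (1:ℝ) ≤ Kr := Real.one_le_rpow one_le_two (by positivity)
  have hKr0 : (0:ℝ) < Kr := lt_of_lt_of_le one_pos hKr1
  set ρ := Kr ^ ((d:ℝ)⁻¹) with hρdef
  have hρ1 : (1:ℝ) ≤ ρ := Real.one_le_rpow hKr1 (by positivity)
  have hρ0 : (0:ℝ) < ρ := lt_of_lt_of_le one_pos hρ1
  set D := 2 + 2*ρ with hDdef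
  set z := EuclideanSpace.single (⟨0, hd⟩ : Fin d) D with hzdef
  have hznorm : ‖z‖ = D := by
    rw [hzdef, EuclideanSpace.norm_single, Real.norm_eq_abs, abs_of_pos (by positivity)]
  set B1 := ball (0 : EuclideanSpace ℝ (Fin d)) 1 with hB1def
  set B2 := ball z 1 with hB2def
  set V := volume B1 with hVdef
  have hV0 : V ≠ 0 := (measure_ball_pos volume 0 one_pos).ne'
  have hVt : V ≠ ⊤ := measure_ball_lt_top.ne
  have hVz : volume B2 = V := by
    rw [hB2def, Measure.addHaar_ball volume z zero_le_one, one_pow, ENNReal.ofReal_one,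
      one_mul, hVdef, hB1def]
  set A := V ^ (-(1/q) : ℝ) with hAdef
  have hA0 : A ≠ 0 := by
    rw [hAdef]; simp [ENNReal.rpow_eq_zero_iff, hV0, hVt]
  have hAt : A ≠ ⊤ := by
    rw [hAdef]; simp [ENNReal.rpow_eq_top_iff, hV0, hVt]
  set α := A.toReal with hαdef
  have hα0 : 0 < α := ENNReal.toReal_pos hA0 hAt
  have hαA : ENNReal.ofReal α = A := ENNReal.ofReal_toReal hAt
  have hAV : A * V ^ (1/q : ℝ) = 1 := by
    rw [hAdef, ← ENNReal.rpow_add _ _ hV0 hVt, neg_add_cancel, ENNReal.rpow_zero]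
  -- separation
  have hsep : ∀ (aa : EuclideanSpace ℝ (Fin d)) (R : ℝ), R ≤ ρ →
      B1 ∩ ball aa R = ∅ ∨ B2 ∩ ball aa R = ∅ := by
    intro aa R hRρ
    by_contra hcon
    push_neg at hcon
    obtain ⟨h1, h2⟩ := hcon
    obtain ⟨x, hx1, hxB⟩ := h1
    obtain ⟨y, hy2, hyB⟩ := h2
    rw [hB1def, mem_ball] at hx1
    rw [hB2def, mem_ball] at hy2
    rw [mem_ball] at hxB hyB
    have hDz : D = dist (0 : EuclideanSpace ℝ (Fin d)) z := by
      rw [dist_zero_left, hznorm]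
    have tri : dist (0 : EuclideanSpace ℝ (Fin d)) z ≤
        dist (0 : EuclideanSpace ℝ (Fin d)) x + dist x y + dist y z :=
      dist_triangle4 _ _ _ _
    have tri2 : dist x y ≤ dist x aa + dist aa y := dist_triangle _ _ _
    have h0x : dist (0 : EuclideanSpace ℝ (Fin d)) x < 1 := by
      rw [dist_comm]; simpa [dist_eq_norm] using hx1
    have hyz : dist y z < 1 := hy2
    have haay : dist aa y < R := by rw [dist_comm]; exact hyB
    rw [hDdef] at hDz
    linarith [hxB]
  have hdisj : B1 ∩ B2 = ∅ := by
    rcases hsep z 1 hρ1 with h | h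
    · rw [← hB2def] at h
      exact h
    · exfalso
      have : z ∈ B2 ∩ ball z 1 := ⟨by rw [hB2def]; exact mem_ball_self one_pos,
        mem_ball_self one_pos⟩
      rw [h] at this
      exact this
  have hnotB2 : ∀ y, y ∈ B1 → y ∉ B2 := by
    intro y h1 h2
    have : y ∈ B1 ∩ B2 := ⟨h1, h2⟩
    rw [hdisj] at this
    exact this
  -- the functions
  set u : EuclideanSpace ℝ (Fin d) → ℝ := Set.indicator B1 (fun _ => α) with hudef
  set v : EuclideanSpace ℝ (Fin d) → ℝ := Set.indicator B2 (fun _ => α) with hvdef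
  have hB1m : MeasurableSet B1 := measurableSet_ball
  have hB2m : MeasurableSet B2 := measurableSet_ball
  have hum : Measurable u := measurable_const.indicator hB1m
  have hvm : Measurable v := measurable_const.indicator hB2m
  -- pointwise identifications
  have hfind : (fun x => u x + v x) = Set.indicator (B1 ∪ B2) (fun _ => α) := by
    funext y
    by_cases h1 : y ∈ B1
    · have h2 : y ∉ B2 := hnotB2 y h1
      simp [hudef, hvdef, Set.indicator_of_mem, Set.indicator_of_notMem, h1, h2]
    · by_cases h2 : y ∈ B2 <;>
        simp [hudef, hvdef, Set.indicator_of_mem, Set.indicator_of_notMem, h1, h2]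
  have hgabs : ∀ y, |u y - v y| = |Set.indicator (B1 ∪ B2) (fun _ => α) y| := by
    intro y
    by_cases h1 : y ∈ B1
    · have h2 : y ∉ B2 := hnotB2 y h1
      simp [hudef, hvdef, Set.indicator_of_mem, Set.indicator_of_notMem, h1, h2]
    · by_cases h2 : y ∈ B2 <;>
        simp [hudef, hvdef, Set.indicator_of_mem, Set.indicator_of_notMem, h1, h2]
  -- generic lower bound at a unit ball contained in the support
  have hterm : ∀ (c : ℝ), 0 < c → ∀ s : Set (EuclideanSpace ℝ (Fin d)), MeasurableSet s →
      ∀ a₀ : EuclideanSpace ℝ (Fin d), s ∩ ball a₀ 1 = ball a₀ 1 →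
      volume (ball a₀ 1) = V →
      ENNReal.ofReal c * V ^ ((1:ℝ)/q) ≤ morreyNorm d p q (Set.indicator s (fun _ => c)) := by
    intro c hc s hs a₀ hss hvol
    have e1 : volume (ball a₀ 1) ^ (1/q - 1/p) *
        (∫⁻ y in ball a₀ 1,
          ENNReal.ofReal (|Set.indicator s (fun _ => c) y| ^ p)) ^ (1/p)
        = ENNReal.ofReal c * V ^ ((1:ℝ)/q) := by
      rw [term_eq p hp0 s hs c (ball a₀ 1), hss, hvol,
        ENNReal.mul_rpow_of_nonneg _ _ h1p, ofReal_abs_rpow_inv p hp0 c hc,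
        mul_left_comm, ← ENNReal.rpow_add _ _ hV0 hVt,
        show (1:ℝ)/q - 1/p + 1/p = 1/q by ring]
    exact e1 ▸ le_morrey d p q _ a₀ one_pos
  -- upper bound for the two-bump function
  have hub : morreyNorm d p q (Set.indicator (B1 ∪ B2) (fun _ => α)) ≤ 1 := by
    unfold morreyNorm
    refine iSup_le fun a => iSup_le fun R => iSup_le fun hR => ?_
    rw [term_eq p hp0 _ (hB1m.union hB2m), ENNReal.mul_rpow_of_nonneg _ _ h1p,
      ofReal_abs_rpow_inv p hp0 α hα0, hαA, mul_left_comm]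
    have hW0 : volume (ball a R) ≠ 0 := (measure_ball_pos volume a hR).ne'
    have hWt : volume (ball a R) ≠ ⊤ := measure_ball_lt_top.ne
    have hsplit : volume ((B1 ∪ B2) ∩ ball a R) ≤
        volume (B1 ∩ ball a R) + volume (B2 ∩ ball a R) := by
      rw [Set.union_inter_distrib_right]; exact measure_union_le _ _
    rcases le_or_gt R ρ with hcase | hcase
    · have hmV : volume ((B1 ∪ B2) ∩ ball a R) ≤ V := by
        rcases hsep a R hcase with he | he
        · refine hsplit.trans ?_
          rw [he, measure_empty, zero_add]
          calc volume (B2 ∩ ball a R) ≤ volume B2 := measure_mono Set.inter_subset_left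
            _ = V := hVz
        · refine hsplit.trans ?_
          rw [he, measure_empty, add_zero]
          calc volume (B1 ∩ ball a R) ≤ volume B1 := measure_mono Set.inter_subset_left
            _ = V := hVdef.symm
      have hmW : volume ((B1 ∪ B2) ∩ ball a R) ≤ volume (ball a R) :=
        measure_mono Set.inter_subset_right
      calc A * (volume (ball a R) ^ ((1:ℝ)/q - 1/p) *
            volume ((B1 ∪ B2) ∩ ball a R) ^ ((1:ℝ)/p))
          ≤ A * V ^ ((1:ℝ)/q) := mul_le_mul_right
            (aux_rpow_bound p q hp hpq _ _ _ hW0 hWt hV0 hVt hmW hmV) _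
        _ = 1 := hAV
    · have hm2 : volume ((B1 ∪ B2) ∩ ball a R) ≤ 2 * V := by
        refine hsplit.trans ?_
        have a1 : volume (B1 ∩ ball a R) ≤ V :=
          (measure_mono Set.inter_subset_left).trans_eq hVdef.symm
        have a2 : volume (B2 ∩ ball a R) ≤ V :=
          (measure_mono Set.inter_subset_left).trans_eq hVz
        calc volume (B1 ∩ ball a R) + volume (B2 ∩ ball a R) ≤ V + V := add_le_add a1 a2
          _ = 2 * V := (two_mul V).symm
      have hdne : (d:ℝ) ≠ 0 := Nat.cast_ne_zero.mpr (by omega)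
      have hWK : ENNReal.ofReal Kr * V ≤ volume (ball a R) := by
        have hb : volume (ball a R) = ENNReal.ofReal (R ^ d) * V := by
          rw [Measure.addHaar_ball volume a (hρ0.trans hcase).le,
            finrank_euclideanSpace_fin, hVdef, hB1def]
        rw [hb]
        refine mul_le_mul_left (ENNReal.ofReal_le_ofReal ?_) V
        calc Kr = ρ ^ d := by
              rw [hρdef, ← Real.rpow_natCast (Kr ^ ((d:ℝ)⁻¹)) d,
                ← Real.rpow_mul hKr0.le, inv_mul_cancel₀ hdne, Real.rpow_one]
          _ ≤ R ^ d := pow_le_pow_left₀ hρ0.le hcase.le d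
      rw [hAdef]
      exact aux_far_bound p q hp hpq V _ _ hV0 hVt hW0 hWt hm2 (hKrdef ▸ hWK)
  have hint : (B1 ∪ B2) ∩ ball (0 : EuclideanSpace ℝ (Fin d)) 1
      = ball (0 : EuclideanSpace ℝ (Fin d)) 1 := by
    rw [← hB1def]
    exact Set.inter_eq_self_of_subset_right Set.subset_union_left
  have hvol0 : volume (ball (0 : EuclideanSpace ℝ (Fin d)) 1) = V := by
    rw [← hB1def]
  have hnorm1 : morreyNorm d p q (Set.indicator (B1 ∪ B2) (fun _ => α)) = 1 := by
    refine le_antisymm hub ?_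
    have h := hterm α hα0 (B1 ∪ B2) (hB1m.union hB2m) 0 hint hvol0
    rwa [hαA, hAV] at h
  refine ⟨fun x => u x + v x, fun x => u x - v x, hum.add hvm, hum.sub hvm, ?_, ?_, ?_⟩
  · rw [hfind]; exact hnorm1
  · exact (morreyNorm_congr_abs d p q hgabs).trans hnorm1
  · -- the nonsquareness inequality
    have hfg1 : ∀ x, (u x + v x) + (u x - v x) = Set.indicator B1 (fun _ => 2*α) x := by
      intro x
      by_cases h1 : x ∈ B1 <;>
        simp [hudef, Set.indicator_of_mem, Set.indicator_of_notMem, h1] <;> ring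
    have hfg2 : ∀ x, (u x + v x) - (u x - v x) = Set.indicator B2 (fun _ => 2*α) x := by
      intro x
      by_cases h2 : x ∈ B2 <;>
        simp [hvdef, Set.indicator_of_mem, Set.indicator_of_notMem, h2] <;> ring
    have h2le : ∀ s : Set (EuclideanSpace ℝ (Fin d)), MeasurableSet s →
        ∀ a₀ : EuclideanSpace ℝ (Fin d), s ∩ ball a₀ 1 = ball a₀ 1 →
        volume (ball a₀ 1) = V →
        (2:ℝ≥0∞) ≤ morreyNorm d p q (Set.indicator s (fun _ => 2*α)) := by
      intro s hs a₀ hss hvol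
      have h := hterm (2*α) (by positivity) s hs a₀ hss hvol
      rwa [ENNReal.ofReal_mul (by norm_num), hαA, mul_assoc, hAV, mul_one,
        ENNReal.ofReal_ofNat] at h
    have hlt : ENNReal.ofReal (2*(1-δ)) < 2 := by
      calc ENNReal.ofReal (2*(1-δ)) < ENNReal.ofReal 2 :=
            (ENNReal.ofReal_lt_ofReal_iff two_pos).2 (by nlinarith)
        _ = 2 := ENNReal.ofReal_ofNat 2
    refine lt_min (hlt.trans_le ?_) (hlt.trans_le ?_)
    · show (2:ℝ≥0∞) ≤ morreyNorm d p q (fun x => (u x + v x) + (u x - v x))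
      rw [funext hfg1]
      refine h2le B1 hB1m 0 ?_ hvol0
      rw [← hB1def, Set.inter_self]
    · show (2:ℝ≥0∞) ≤ morreyNorm d p q (fun x => (u x + v x) - (u x - v x))
      rw [funext hfg2]
      refine h2le B2 hB2m z ?_ ?_
      · rw [← hB2def, Set.inter_self]
      · rw [← hB2def]; exact hVz
end

section
/- Let X be a nontrivial real normed space and let n ≥ 2 be an integer. Then [C_J^{(n)}(X)]² ≤ n · C_NJ^{(n)}(X), where C_J^{(n)}(X) is the n-th James constant of X and C_NJ^{(n)}(X) is the n-th von Neumann–Jordan constant of X. -/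
open scoped ENNReal

/-- The `n`-th James constant of a real normed space `X`:
`C_J^{(n)}(X) = sup{ min_{signs} ‖x₁ ± x₂ ± ⋯ ± x_n‖ : ‖x_i‖ = 1 }`,
where the minimum is over the `2^{n-1}` choices of signs with the first sign `+`. -/
noncomputable def jamesConst (X : Type*) [NormedAddCommGroup X] [NormedSpace ℝ X]
    (n : ℕ) : ℝ :=
  sSup { c : ℝ | ∃ x : Fin n → X, (∀ i, ‖x i‖ = 1) ∧
    c = sInf { r : ℝ | ∃ s : Fin n → ℝ, (∀ i, s i = 1 ∨ s i = -1) ∧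
      (∀ i : Fin n, (i : ℕ) = 0 → s i = 1) ∧ r = ‖∑ i, s i • x i‖ } }

/-- The `n`-th von Neumann–Jordan constant of a real normed space `X`:
`C_NJ^{(n)}(X) = sup{ (∑_{signs} ‖x₁ ± ⋯ ± x_n‖²) / (2^{n-1} ∑ ‖x_i‖²) : x_i ≠ 0 }`,
the sum being over the `2^{n-1}` choices of signs with the first sign `+`. -/
noncomputable def njConst (X : Type*) [NormedAddCommGroup X] [NormedSpace ℝ X]
    (n : ℕ) : ℝ :=
  sSup { c : ℝ | ∃ x : Fin n → X, (∀ i, x i ≠ 0) ∧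
    c = (∑ s ∈ Finset.univ.filter
            (fun s : Fin n → Bool => ∀ i : Fin n, (i : ℕ) = 0 → s i = true),
          ‖∑ i, (if s i then (1 : ℝ) else -1) • x i‖ ^ 2) /
        (2 ^ (n - 1) * ∑ i, ‖x i‖ ^ 2) }

section Aux

variable {X : Type*} [NormedAddCommGroup X] [NormedSpace ℝ X]

private lemma aux_card (k : ℕ) :
    (Finset.univ.filter
      (fun s : Fin (k + 1) → Bool => ∀ i : Fin (k + 1), (i : ℕ) = 0 → s i = true)).card
      = 2 ^ k := by
  have h : (Finset.univ.filter
      (fun s : Fin (k + 1) → Bool => ∀ i : Fin (k + 1), (i : ℕ) = 0 → s i = true)).card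
      = (Finset.univ : Finset (Fin k → Bool)).card := by
    refine Finset.card_bij' (fun s _ => fun j => s j.succ)
      (fun t _ => Fin.cons true t) ?_ ?_ ?_ ?_
    · intro s hs; exact Finset.mem_univ _
    · intro t _
      simp only [Finset.mem_filter, Finset.mem_univ, true_and]
      intro i hi
      have : i = 0 := Fin.ext (by simpa using hi)
      subst this; simp
    · intro s hs
      simp only [Finset.mem_filter, Finset.mem_univ, true_and] at hs
      funext j
      refine Fin.cases ?_ ?_ j
      · simpa using (hs 0 rfl).symm
      · intro j'; simp
    · intro t _; funext j; simp
  rw [h]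
  simp [Finset.card_univ]

private lemma norm_sign_sum_le' {k : ℕ} (x : Fin (k + 1) → X)
    (s : Fin (k + 1) → ℝ) (hs : ∀ i, s i = 1 ∨ s i = -1) :
    ‖∑ i, s i • x i‖ ≤ ∑ i, ‖x i‖ := by
  calc ‖∑ i, s i • x i‖ ≤ ∑ i, ‖s i • x i‖ := norm_sum_le _ _
    _ = ∑ i, ‖x i‖ := by
        refine Finset.sum_congr rfl fun i _ => ?_
        rcases hs i with h | h <;> simp [h, norm_smul]

end Aux

/-- Theorem 8: for any nontrivial real normed space `X` and `n ≥ 2`,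
`[C_J^{(n)}(X)]² ≤ n · C_NJ^{(n)}(X)`. -/
theorem jamesConst_sq_le_njConst (X : Type*) [NormedAddCommGroup X] [NormedSpace ℝ X]
    [Nontrivial X] (n : ℕ) (hn : 2 ≤ n) :
    (jamesConst X n) ^ 2 ≤ n * njConst X n := by
  classical
  obtain ⟨k, rfl⟩ : ∃ k, n = k + 1 := ⟨n - 1, by omega⟩
  set F : Finset (Fin (k + 1) → Bool) := Finset.univ.filter
      (fun s : Fin (k + 1) → Bool => ∀ i : Fin (k + 1), (i : ℕ) = 0 → s i = true) with hF
  have hcard : F.card = 2 ^ k := aux_card k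
  set NJ : Set ℝ := { c : ℝ | ∃ x : Fin (k + 1) → X, (∀ i, x i ≠ 0) ∧
    c = (∑ s ∈ F, ‖∑ i, (if s i then (1 : ℝ) else -1) • x i‖ ^ 2) /
        (2 ^ (k + 1 - 1) * ∑ i, ‖x i‖ ^ 2) } with hNJ
  have hnjdef : njConst X (k + 1) = sSup NJ := rfl
  -- NJ set is bounded above by k+1
  have hNJub : ∀ c ∈ NJ, c ≤ (k + 1 : ℝ) := by
    rintro c ⟨x, hx0, rfl⟩
    have hpos : (0 : ℝ) < ∑ i, ‖x i‖ ^ 2 :=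
      Finset.sum_pos (fun i _ => pow_pos (norm_pos_iff.mpr (hx0 i)) 2)
        ⟨0, Finset.mem_univ _⟩
    have hden : (0 : ℝ) < 2 ^ (k + 1 - 1) * ∑ i, ‖x i‖ ^ 2 :=
      mul_pos (by positivity) hpos
    rw [div_le_iff₀ hden]
    have hterm : ∀ s ∈ F, ‖∑ i, (if s i then (1 : ℝ) else -1) • x i‖ ^ 2
        ≤ (k + 1 : ℝ) * ∑ i, ‖x i‖ ^ 2 := by
      intro s _
      have h1 : ‖∑ i, (if s i then (1 : ℝ) else -1) • x i‖ ≤ ∑ i, ‖x i‖ :=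
        norm_sign_sum_le' x _ (fun i => by by_cases h : s i <;> simp [h])
      have h2 : (∑ i, ‖x i‖) ^ 2 ≤ (k + 1 : ℝ) * ∑ i, ‖x i‖ ^ 2 := by
        have := sq_sum_le_card_mul_sum_sq (s := (Finset.univ : Finset (Fin (k + 1))))
          (f := fun i => ‖x i‖)
        simpa using this
      calc ‖∑ i, (if s i then (1 : ℝ) else -1) • x i‖ ^ 2
          ≤ (∑ i, ‖x i‖) ^ 2 := pow_le_pow_left₀ (norm_nonneg _) h1 2
        _ ≤ (k + 1 : ℝ) * ∑ i, ‖x i‖ ^ 2 := h2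
    calc (∑ s ∈ F, ‖∑ i, (if s i then (1 : ℝ) else -1) • x i‖ ^ 2)
        ≤ ∑ _s ∈ F, (k + 1 : ℝ) * ∑ i, ‖x i‖ ^ 2 := Finset.sum_le_sum hterm
      _ = (F.card : ℝ) * ((k + 1 : ℝ) * ∑ i, ‖x i‖ ^ 2) := by
          rw [Finset.sum_const, nsmul_eq_mul]
      _ = (k + 1 : ℝ) * (2 ^ (k + 1 - 1) * ∑ i, ‖x i‖ ^ 2) := by
          rw [hcard]; push_cast; ring
  have hNJbdd : BddAbove NJ := ⟨(k + 1 : ℝ), hNJub⟩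
  -- key estimate for a family of unit vectors
  have key : ∀ x : Fin (k + 1) → X, (∀ i, ‖x i‖ = 1) →
      (sInf { r : ℝ | ∃ s : Fin (k + 1) → ℝ, (∀ i, s i = 1 ∨ s i = -1) ∧
        (∀ i : Fin (k + 1), (i : ℕ) = 0 → s i = 1) ∧ r = ‖∑ i, s i • x i‖ }) ^ 2
      ≤ (k + 1 : ℝ) * njConst X (k + 1) := by
    intro x hx
    set S : Set ℝ := { r : ℝ | ∃ s : Fin (k + 1) → ℝ, (∀ i, s i = 1 ∨ s i = -1) ∧
      (∀ i : Fin (k + 1), (i : ℕ) = 0 → s i = 1) ∧ r = ‖∑ i, s i • x i‖ } with hS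
    have hSnonneg : ∀ r ∈ S, (0 : ℝ) ≤ r := by
      rintro r ⟨s, _, _, rfl⟩; exact norm_nonneg _
    have hSbdd : BddBelow S := ⟨0, hSnonneg⟩
    set m : ℝ := sInf S with hm
    have hm0 : 0 ≤ m := Real.sInf_nonneg hSnonneg
    have hsum1 : (∑ i, ‖x i‖ ^ 2) = (k + 1 : ℝ) := by
      have : ∀ i, ‖x i‖ ^ 2 = (1 : ℝ) := fun i => by rw [hx i]; norm_num
      simp [this]
    have hmle : ∀ t ∈ F, m ≤ ‖∑ i, (if t i then (1 : ℝ) else -1) • x i‖ := by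
      intro t ht
      refine csInf_le hSbdd ?_
      refine ⟨fun i => if t i then (1 : ℝ) else -1, fun i => by by_cases h : t i <;> simp [h],
        ?_, rfl⟩
      intro i hi
      simp only [Finset.mem_filter, Finset.mem_univ, true_and, hF] at ht
      simp [ht i hi]
    -- the NJ quotient for x
    set q : ℝ := (∑ s ∈ F, ‖∑ i, (if s i then (1 : ℝ) else -1) • x i‖ ^ 2) /
        (2 ^ (k + 1 - 1) * ∑ i, ‖x i‖ ^ 2) with hq
    have hqmem : q ∈ NJ := ⟨x, fun i => by
      intro h; have := hx i; rw [h] at this; simp at this, rfl⟩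
    have hnum : (2 : ℝ) ^ k * m ^ 2 ≤
        ∑ s ∈ F, ‖∑ i, (if s i then (1 : ℝ) else -1) • x i‖ ^ 2 := by
      have : ∀ s ∈ F, m ^ 2 ≤ ‖∑ i, (if s i then (1 : ℝ) else -1) • x i‖ ^ 2 :=
        fun s hs => pow_le_pow_left₀ hm0 (hmle s hs) 2
      calc (2 : ℝ) ^ k * m ^ 2 = (F.card : ℝ) * m ^ 2 := by rw [hcard]; push_cast; ring
        _ = ∑ _s ∈ F, m ^ 2 := by rw [Finset.sum_const, nsmul_eq_mul]
        _ ≤ _ := Finset.sum_le_sum this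
    have hqge : m ^ 2 / (k + 1 : ℝ) ≤ q := by
      rw [hq, hsum1]
      have h2k : (0 : ℝ) < 2 ^ (k + 1 - 1) := by positivity
      have hk1 : (0 : ℝ) < (k + 1 : ℝ) := by positivity
      rw [div_le_div_iff₀ hk1 (mul_pos h2k hk1)]
      calc m ^ 2 * (2 ^ (k + 1 - 1) * (k + 1 : ℝ))
          = ((2 : ℝ) ^ k * m ^ 2) * (k + 1 : ℝ) := by
            simp only [Nat.add_sub_cancel]; ring
        _ ≤ (∑ s ∈ F, ‖∑ i, (if s i then (1 : ℝ) else -1) • x i‖ ^ 2) * (k + 1 : ℝ) := by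
            exact mul_le_mul_of_nonneg_right hnum (le_of_lt hk1)
    have hqle : q ≤ njConst X (k + 1) := by
      rw [hnjdef]; exact le_csSup hNJbdd hqmem
    have : m ^ 2 / (k + 1 : ℝ) ≤ njConst X (k + 1) := le_trans hqge hqle
    calc m ^ 2 = (k + 1 : ℝ) * (m ^ 2 / (k + 1 : ℝ)) := by field_simp
      _ ≤ (k + 1 : ℝ) * njConst X (k + 1) := by
          exact mul_le_mul_of_nonneg_left this (by positivity)
  -- existence of a unit-vector family
  obtain ⟨v, hv⟩ := exists_ne (0 : X)
  set u : X := ‖v‖⁻¹ • v with hu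
  have hunorm : ‖u‖ = 1 := by
    rw [hu, norm_smul, norm_inv, norm_norm, inv_mul_cancel₀ (norm_ne_zero_iff.mpr hv)]
  -- njConst nonneg
  have hCnn : 0 ≤ njConst X (k + 1) := by
    have hx : ∀ i : Fin (k + 1), ‖(fun _ => u) i‖ = 1 := fun _ => hunorm
    have h := key (fun _ => u) hx
    nlinarith [Real.sInf_nonneg (s := { r : ℝ | ∃ s : Fin (k + 1) → ℝ,
      (∀ i, s i = 1 ∨ s i = -1) ∧ (∀ i : Fin (k + 1), (i : ℕ) = 0 → s i = 1) ∧
      r = ‖∑ i, s i • (fun _ : Fin (k+1) => u) i‖ }) (by rintro r ⟨s, _, _, rfl⟩; exact norm_nonneg _),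
      sq_nonneg (sInf { r : ℝ | ∃ s : Fin (k + 1) → ℝ,
      (∀ i, s i = 1 ∨ s i = -1) ∧ (∀ i : Fin (k + 1), (i : ℕ) = 0 → s i = 1) ∧
      r = ‖∑ i, s i • (fun _ : Fin (k+1) => u) i‖ })]
  have hnC : (0 : ℝ) ≤ (k + 1 : ℝ) * njConst X (k + 1) := by positivity
  -- James set
  set J : Set ℝ := { c : ℝ | ∃ x : Fin (k + 1) → X, (∀ i, ‖x i‖ = 1) ∧
    c = sInf { r : ℝ | ∃ s : Fin (k + 1) → ℝ, (∀ i, s i = 1 ∨ s i = -1) ∧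
      (∀ i : Fin (k + 1), (i : ℕ) = 0 → s i = 1) ∧ r = ‖∑ i, s i • x i‖ } } with hJ
  have hjdef : jamesConst X (k + 1) = sSup J := rfl
  have hJub : ∀ c ∈ J, c ≤ Real.sqrt ((k + 1 : ℝ) * njConst X (k + 1)) := by
    rintro c ⟨x, hx, rfl⟩
    have hc0 : (0 : ℝ) ≤ sInf { r : ℝ | ∃ s : Fin (k + 1) → ℝ, (∀ i, s i = 1 ∨ s i = -1) ∧
        (∀ i : Fin (k + 1), (i : ℕ) = 0 → s i = 1) ∧ r = ‖∑ i, s i • x i‖ } :=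
      Real.sInf_nonneg (by rintro r ⟨s, _, _, rfl⟩; exact norm_nonneg _)
    exact (Real.le_sqrt hc0 hnC).mpr (key x hx)
  have hJbdd : BddAbove J := ⟨_, hJub⟩
  have hJmem : sInf { r : ℝ | ∃ s : Fin (k + 1) → ℝ, (∀ i, s i = 1 ∨ s i = -1) ∧
      (∀ i : Fin (k + 1), (i : ℕ) = 0 → s i = 1) ∧
      r = ‖∑ i, s i • (fun _ : Fin (k + 1) => u) i‖ } ∈ J :=
    ⟨fun _ => u, fun _ => hunorm, rfl⟩
  have hJ0 : 0 ≤ jamesConst X (k + 1) := by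
    rw [hjdef]
    refine le_trans ?_ (le_csSup hJbdd hJmem)
    exact Real.sInf_nonneg (by rintro r ⟨s, _, _, rfl⟩; exact norm_nonneg _)
  have hJle : jamesConst X (k + 1) ≤ Real.sqrt ((k + 1 : ℝ) * njConst X (k + 1)) := by
    rw [hjdef]
    exact Real.sSup_le hJub (Real.sqrt_nonneg _)
  calc (jamesConst X (k + 1)) ^ 2
      ≤ Real.sqrt ((k + 1 : ℝ) * njConst X (k + 1)) ^ 2 := pow_le_pow_left₀ hJ0 hJle 2
    _ = (k + 1 : ℝ) * njConst X (k + 1) := Real.sq_sqrt hnC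
    _ = ((k + 1 : ℕ) : ℝ) * njConst X (k + 1) := by push_cast; ring
end

section
/- Let d ≥ 1 be an integer, let 1 ≤ p < q < ∞ be real numbers, and let n ≥ 2 be an integer. Then the n-th James constant of the Morrey space M^p_q(ℝ^d) equals n; that is, sup{ min over all 2^{n−1} choices of signs of ‖f₁ ± f₂ ± ⋯ ± f_n‖_{M^p_q} : f₁, …, f_n measurable with ‖f_i‖_{M^p_q} = 1 for all i } = n. -/
open MeasureTheory Metric
open scoped ENNReal

namespace MorreyAux

noncomputable abbrev Euc (d : ℕ) := EuclideanSpace ℝ (Fin d)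

noncomputable def V1 (d : ℕ) : ℝ≥0∞ := volume (ball (0 : Euc d) 1)

lemma V1_def (d : ℕ) : volume (ball (0 : Euc d) 1) = V1 d := rfl

lemma V1_pos (d : ℕ) : 0 < V1 d := measure_ball_pos _ _ one_pos

lemma V1_ne_top (d : ℕ) : V1 d ≠ ∞ := measure_ball_lt_top.ne

/-- The normalizing constant `c = |B(0,1)|^{-1/q}`. -/
noncomputable def cconst (d : ℕ) (q : ℝ) : ℝ := (V1 d).toReal ^ (-(1/q))

lemma cconst_pos (d : ℕ) (q : ℝ) : 0 < cconst d q :=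
  Real.rpow_pos_of_pos (ENNReal.toReal_pos (V1_pos d).ne' (V1_ne_top d)) _

lemma ofReal_cconst (d : ℕ) (q : ℝ) :
    ENNReal.ofReal (cconst d q) = (V1 d) ^ (-(1/q)) := by
  rw [cconst, ← ENNReal.ofReal_rpow_of_pos (ENNReal.toReal_pos (V1_pos d).ne' (V1_ne_top d)),
    ENNReal.ofReal_toReal (V1_ne_top d)]

lemma vol_ball_eq {d : ℕ} (a : Euc d) (R : ℝ) :
    volume (ball a R) = volume (ball (0 : Euc d) R) :=
  Measure.addHaar_ball_center _ _ _

/-- antitonicity of `x ^ α` for `α ≤ 0` in `ℝ≥0∞`. -/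
lemma rpow_anti {x y : ℝ≥0∞} {α : ℝ} (hα : α ≤ 0) (hxy : x ≤ y) : y ^ α ≤ x ^ α := by
  rw [show y ^ α = (y ^ (-α))⁻¹ by rw [← ENNReal.rpow_neg, neg_neg],
    show x ^ α = (x ^ (-α))⁻¹ by rw [← ENNReal.rpow_neg, neg_neg]]
  exact ENNReal.inv_le_inv.mpr (ENNReal.rpow_le_rpow hxy (neg_nonneg.mpr hα))

variable {d : ℕ} {p q : ℝ}

/-- The single-ball quotient bound. -/
lemma step2 (hp : 1 ≤ p) (hpq : p < q) {M : ℝ} (hM : 0 ≤ M) (b z : Euc d) {R : ℝ} (hR : 0 < R) :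
    volume (ball b R) ^ (1/q - 1/p) *
      (ENNReal.ofReal ((M * cconst d q) ^ p) * volume (ball b R ∩ ball z 1)) ^ (1/p)
      ≤ ENNReal.ofReal M := by
  have hp0 : 0 < p := lt_of_lt_of_le one_pos hp
  have hq0 : 0 < q := hp0.trans hpq
  have hW0 : volume (ball b R) ≠ 0 := (measure_ball_pos _ _ hR).ne'
  have hWt : volume (ball b R) ≠ ∞ := measure_ball_lt_top.ne
  have hIW : volume (ball b R ∩ ball z 1) ≤ volume (ball b R) :=
    measure_mono Set.inter_subset_left
  have hIV : volume (ball b R ∩ ball z 1) ≤ V1 d := by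
    refine (measure_mono Set.inter_subset_right).trans_eq (vol_ball_eq z 1)
  have h1 : ENNReal.ofReal ((M * cconst d q) ^ p) ^ (1/p)
      = ENNReal.ofReal M * ENNReal.ofReal (cconst d q) := by
    rw [← ENNReal.ofReal_rpow_of_nonneg (x := M * cconst d q) (p := p) (mul_nonneg hM (cconst_pos d q).le) hp0.le, ← ENNReal.rpow_mul,
      mul_one_div_cancel hp0.ne', ENNReal.rpow_one, ENNReal.ofReal_mul hM]
  have key : volume (ball b R) ^ (1/q - 1/p) * (volume (ball b R ∩ ball z 1)) ^ (1/p)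
      ≤ (V1 d) ^ (1/q) := by
    rcases le_total (volume (ball b R)) (V1 d) with h | h
    · calc volume (ball b R) ^ (1/q - 1/p) * (volume (ball b R ∩ ball z 1)) ^ (1/p)
          ≤ volume (ball b R) ^ (1/q - 1/p) * volume (ball b R) ^ (1/p) :=
            mul_le_mul_right (ENNReal.rpow_le_rpow hIW (by positivity)) _
        _ = volume (ball b R) ^ (1/q) := by
            rw [← ENNReal.rpow_add _ _ hW0 hWt]; congr 1; ring
        _ ≤ (V1 d) ^ (1/q) := ENNReal.rpow_le_rpow h (by positivity)
    · have hα : 1/q - 1/p ≤ 0 := by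
        have h1 : 1/q ≤ 1/p := one_div_le_one_div_of_le hp0 hpq.le
        linarith
      calc volume (ball b R) ^ (1/q - 1/p) * (volume (ball b R ∩ ball z 1)) ^ (1/p)
          ≤ (V1 d) ^ (1/q - 1/p) * (V1 d) ^ (1/p) :=
            mul_le_mul' (rpow_anti hα h) (ENNReal.rpow_le_rpow hIV (by positivity))
        _ = (V1 d) ^ (1/q) := by
            rw [← ENNReal.rpow_add _ _ (V1_pos d).ne' (V1_ne_top d)]; congr 1; ring
  calc volume (ball b R) ^ (1/q - 1/p) *
      (ENNReal.ofReal ((M * cconst d q) ^ p) * volume (ball b R ∩ ball z 1)) ^ (1/p)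
      = ENNReal.ofReal M * (ENNReal.ofReal (cconst d q) *
          (volume (ball b R) ^ (1/q - 1/p) * (volume (ball b R ∩ ball z 1)) ^ (1/p))) := by
        rw [ENNReal.mul_rpow_of_nonneg _ _ (by positivity : (0:ℝ) ≤ 1/p), h1]; ring
    _ ≤ ENNReal.ofReal M * (ENNReal.ofReal (cconst d q) * (V1 d) ^ (1/q)) := by gcongr
    _ = ENNReal.ofReal M := by
        rw [ofReal_cconst, ← ENNReal.rpow_add _ _ (V1_pos d).ne' (V1_ne_top d),
          neg_add_cancel, ENNReal.rpow_zero, mul_one]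

/-- The integral of the `p`-th power of a disjoint sum of scaled indicators. -/
lemma step1 {ι : Type} [Fintype ι] (hp0 : 0 < p) (x : ι → Euc d)
    (hdisj : ∀ σ τ : ι, σ ≠ τ → Disjoint (ball (x σ) 1) (ball (x τ) 1)) (a : ι → ℝ)
    (B : Set (Euc d)) (hB : MeasurableSet B) :
    ∫⁻ y in B, ENNReal.ofReal
        (|∑ σ, a σ * (Set.indicator (ball (x σ) 1) (fun _ => cconst d q) y)| ^ p)
      = ∑ σ, ENNReal.ofReal ((|a σ| * cconst d q) ^ p) * volume (B ∩ ball (x σ) 1) := by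
  classical
  have hpt : ∀ y, ENNReal.ofReal
      (|∑ σ, a σ * (Set.indicator (ball (x σ) 1) (fun _ => cconst d q) y)| ^ p)
      = ∑ σ, Set.indicator (ball (x σ) 1)
          (fun _ => ENNReal.ofReal ((|a σ| * cconst d q) ^ p)) y := by
    intro y
    by_cases hy : ∃ σ, y ∈ ball (x σ) 1
    · obtain ⟨σ₀, hσ₀⟩ := hy
      have huniq : ∀ τ, τ ≠ σ₀ → y ∉ ball (x τ) 1 := fun τ hτ h =>
        Set.disjoint_left.mp (hdisj τ σ₀ hτ) h hσ₀
      have hsum : ∑ σ, a σ * (Set.indicator (ball (x σ) 1) (fun _ => cconst d q) y)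
          = a σ₀ * cconst d q := by
        rw [Finset.sum_eq_single σ₀]
        · rw [Set.indicator_of_mem hσ₀]
        · intro τ _ hτ
          rw [Set.indicator_of_notMem (huniq τ hτ), mul_zero]
        · exact fun h => absurd (Finset.mem_univ σ₀) h
      rw [hsum, Finset.sum_eq_single σ₀]
      · rw [Set.indicator_of_mem hσ₀, abs_mul, abs_of_nonneg (cconst_pos d q).le]
      · intro τ _ hτ
        rw [Set.indicator_of_notMem (huniq τ hτ)]
      · exact fun h => absurd (Finset.mem_univ σ₀) h
    · push_neg at hy
      have hsum : ∑ σ, a σ * (Set.indicator (ball (x σ) 1) (fun _ => cconst d q) y) = 0 := by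
        apply Finset.sum_eq_zero
        intro τ _
        rw [Set.indicator_of_notMem (hy τ), mul_zero]
      rw [hsum]
      rw [abs_zero, Real.zero_rpow hp0.ne', ENNReal.ofReal_zero]
      symm
      apply Finset.sum_eq_zero
      intro τ _
      rw [Set.indicator_of_notMem (hy τ)]
  calc ∫⁻ y in B, ENNReal.ofReal
        (|∑ σ, a σ * (Set.indicator (ball (x σ) 1) (fun _ => cconst d q) y)| ^ p)
      = ∫⁻ y in B, ∑ σ, Set.indicator (ball (x σ) 1)
          (fun _ => ENNReal.ofReal ((|a σ| * cconst d q) ^ p)) y := by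
        simp only [hpt]
    _ = ∑ σ, ∫⁻ y in B, Set.indicator (ball (x σ) 1)
          (fun _ => ENNReal.ofReal ((|a σ| * cconst d q) ^ p)) y :=
        lintegral_finset_sum _ (fun σ _ => measurable_const.indicator measurableSet_ball)
    _ = ∑ σ, ENNReal.ofReal ((|a σ| * cconst d q) ^ p) * volume (B ∩ ball (x σ) 1) := by
        refine Finset.sum_congr rfl fun σ _ => ?_
        rw [lintegral_indicator measurableSet_ball, setLIntegral_const,
          Measure.restrict_apply measurableSet_ball, Set.inter_comm]

lemma scalar_rpow (hp0 : 0 < p) {M : ℝ} (hM : 0 ≤ M) :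
    ENNReal.ofReal ((M * cconst d q) ^ p) ^ (1/p)
      = ENNReal.ofReal M * ENNReal.ofReal (cconst d q) := by
  rw [← ENNReal.ofReal_rpow_of_nonneg (x := M * cconst d q) (p := p)
    (mul_nonneg hM (cconst_pos d q).le) hp0.le, ← ENNReal.rpow_mul,
    mul_one_div_cancel hp0.ne', ENNReal.rpow_one, ENNReal.ofReal_mul hM]

lemma le_morreyNorm (f : Euc d → ℝ) (b : Euc d) {R : ℝ} (hR : 0 < R) :
    volume (ball b R) ^ (1/q - 1/p) *
      (∫⁻ y in ball b R, ENNReal.ofReal (|f y| ^ p)) ^ (1/p) ≤ morreyNorm d p q f := by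
  unfold morreyNorm
  exact le_iSup_of_le b (le_iSup_of_le R (le_iSup_of_le hR le_rfl))

lemma main_norm {ι : Type} [Fintype ι] (hp : 1 ≤ p) (hpq : p < q)
    (x : ι → Euc d) (D : ℝ) (hD2 : 2 < D)
    (hx : ∀ σ τ : ι, σ ≠ τ → D ≤ dist (x σ) (x τ))
    (hDbig : volume (ball (0 : Euc d) ((D-2)/2)) ^ (1/q - 1/p) *
       ((Fintype.card ι : ℝ≥0∞) ^ (1/p) * ENNReal.ofReal (cconst d q) * (V1 d) ^ (1/p)) ≤ 1)
    (a : ι → ℝ) (M : ℝ) (hM : ∀ σ, |a σ| ≤ M) (σs : ι) (hM2 : |a σs| = M) :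
    morreyNorm d p q (fun y => ∑ σ, a σ * (Set.indicator (ball (x σ) 1) (fun _ => cconst d q) y))
      = ENNReal.ofReal M := by
  classical
  have hp0 : 0 < p := lt_of_lt_of_le one_pos hp
  have hM0 : 0 ≤ M := hM2 ▸ abs_nonneg _
  have hdisj : ∀ σ τ : ι, σ ≠ τ → Disjoint (ball (x σ) 1) (ball (x τ) 1) := fun σ τ h =>
    ball_disjoint_ball (by linarith [hx σ τ h])
  apply le_antisymm
  · unfold morreyNorm
    refine iSup_le fun b => iSup_le fun R => iSup_le fun hR => ?_
    rw [step1 hp0 x hdisj a (ball b R) measurableSet_ball]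
    by_cases hcross : ∃ σ τ : ι, σ ≠ τ ∧ (ball b R ∩ ball (x σ) 1).Nonempty ∧
        (ball b R ∩ ball (x τ) 1).Nonempty
    · obtain ⟨σ, τ, hst, ⟨y1, hy1⟩, ⟨y2, hy2⟩⟩ := hcross
      have hRbig : (D - 2)/2 ≤ R := by
        have h1 := hx σ τ hst
        have h2 : dist (x σ) (x τ) ≤ dist (x σ) y1 + dist y1 y2 + dist y2 (x τ) :=
          dist_triangle4 _ _ _ _
        have h3 : dist y1 y2 ≤ dist y1 b + dist b y2 := dist_triangle _ _ _
        have h4 : dist y1 b < R := mem_ball.mp hy1.1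
        have h5 : dist b y2 < R := by rw [dist_comm]; exact mem_ball.mp hy2.1
        have h6 : dist (x σ) y1 < 1 := by rw [dist_comm]; exact mem_ball.mp hy1.2
        have h7 : dist y2 (x τ) < 1 := mem_ball.mp hy2.2
        linarith
      have hWlow : volume (ball (0 : Euc d) ((D-2)/2)) ≤ volume (ball b R) := by
        rw [vol_ball_eq b R]; exact measure_mono (ball_subset_ball hRbig)
      have hsum_le : ∑ σ', ENNReal.ofReal ((|a σ'| * cconst d q) ^ p) *
            volume (ball b R ∩ ball (x σ') 1)
          ≤ (Fintype.card ι : ℝ≥0∞) * (ENNReal.ofReal ((M * cconst d q) ^ p) * V1 d) := by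
        calc ∑ σ', ENNReal.ofReal ((|a σ'| * cconst d q) ^ p) *
              volume (ball b R ∩ ball (x σ') 1)
            ≤ ∑ _σ' : ι, ENNReal.ofReal ((M * cconst d q) ^ p) * V1 d := by
              refine Finset.sum_le_sum fun σ' _ => mul_le_mul' ?_ ?_
              · exact ENNReal.ofReal_le_ofReal (Real.rpow_le_rpow
                  (mul_nonneg (abs_nonneg _) (cconst_pos d q).le)
                  (mul_le_mul_of_nonneg_right (hM σ') (cconst_pos d q).le) hp0.le)
              · exact (measure_mono Set.inter_subset_right).trans_eq (vol_ball_eq _ 1)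
          _ = (Fintype.card ι : ℝ≥0∞) * (ENNReal.ofReal ((M * cconst d q) ^ p) * V1 d) := by
              rw [Finset.sum_const, Finset.card_univ, nsmul_eq_mul]
      calc volume (ball b R) ^ (1/q - 1/p) * (∑ σ', ENNReal.ofReal ((|a σ'| * cconst d q) ^ p) *
            volume (ball b R ∩ ball (x σ') 1)) ^ (1/p)
          ≤ volume (ball (0 : Euc d) ((D-2)/2)) ^ (1/q - 1/p) *
            ((Fintype.card ι : ℝ≥0∞) * (ENNReal.ofReal ((M * cconst d q) ^ p) * V1 d)) ^ (1/p) := by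
            refine mul_le_mul' (rpow_anti ?_ hWlow) (ENNReal.rpow_le_rpow hsum_le (one_div_nonneg.mpr hp0.le))
            have h1 : 1/q ≤ 1/p := one_div_le_one_div_of_le hp0 hpq.le
            linarith
        _ = ENNReal.ofReal M * (volume (ball (0 : Euc d) ((D-2)/2)) ^ (1/q - 1/p) *
              ((Fintype.card ι : ℝ≥0∞) ^ (1/p) * ENNReal.ofReal (cconst d q) * (V1 d) ^ (1/p))) := by
            rw [ENNReal.mul_rpow_of_nonneg _ _ (by positivity : (0:ℝ) ≤ 1/p),
              ENNReal.mul_rpow_of_nonneg _ _ (by positivity : (0:ℝ) ≤ 1/p), scalar_rpow hp0 hM0]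
            ring
        _ ≤ ENNReal.ofReal M * 1 := mul_le_mul_right hDbig _
        _ = ENNReal.ofReal M := mul_one _
    · push_neg at hcross
      by_cases hone : ∃ σ : ι, (ball b R ∩ ball (x σ) 1).Nonempty
      · obtain ⟨σ₀, hσ₀⟩ := hone
        have hzero : ∀ τ, τ ≠ σ₀ → volume (ball b R ∩ ball (x τ) 1) = 0 := by
          intro τ hτ
          rw [hcross σ₀ τ (Ne.symm hτ) hσ₀, measure_empty]
        rw [Finset.sum_eq_single σ₀ (fun τ _ hτ => by rw [hzero τ hτ, mul_zero])
          (fun h => absurd (Finset.mem_univ σ₀) h)]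
        exact (step2 hp hpq (abs_nonneg (a σ₀)) b (x σ₀) hR).trans
          (ENNReal.ofReal_le_ofReal (hM σ₀))
      · push_neg at hone
        have hz : ∀ σ : ι, volume (ball b R ∩ ball (x σ) 1) = 0 := fun σ => by
          rw [hone σ, measure_empty]
        simp only [hz, mul_zero, Finset.sum_const_zero]
        rw [ENNReal.zero_rpow_of_pos (by positivity), mul_zero]
        exact zero_le
  · have hval : volume (ball (x σs) 1) ^ (1/q - 1/p) *
        (∫⁻ y in ball (x σs) 1, ENNReal.ofReal
          (|∑ σ, a σ * (Set.indicator (ball (x σ) 1) (fun _ => cconst d q) y)| ^ p)) ^ (1/p)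
        = ENNReal.ofReal M := by
      rw [step1 hp0 x hdisj a (ball (x σs) 1) measurableSet_ball]
      rw [Finset.sum_eq_single σs]
      · rw [Set.inter_self, vol_ball_eq (x σs) 1, V1_def, hM2,
          ENNReal.mul_rpow_of_nonneg _ _ (by positivity : (0:ℝ) ≤ 1/p), scalar_rpow hp0 hM0,
          ofReal_cconst]
        rw [show (V1 d) ^ (1/q - 1/p) *
            (ENNReal.ofReal M * V1 d ^ (-(1/q)) * V1 d ^ (1/p))
            = ENNReal.ofReal M * (V1 d ^ (1/q - 1/p) * V1 d ^ (-(1/q)) * V1 d ^ (1/p)) from by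
          ring]
        rw [← ENNReal.rpow_add _ _ (V1_pos d).ne' (V1_ne_top d),
          ← ENNReal.rpow_add _ _ (V1_pos d).ne' (V1_ne_top d),
          show 1/q - 1/p + -(1/q) + 1/p = 0 from by ring, ENNReal.rpow_zero, mul_one]
      · intro τ _ hτ
        rw [Set.disjoint_iff_inter_eq_empty.mp (hdisj σs τ (Ne.symm hτ)), measure_empty, mul_zero]
      · exact fun h => absurd (Finset.mem_univ σs) h
    exact hval.symm.trans_le (le_morreyNorm _ (x σs) one_pos)

lemma exists_D (hd : 1 ≤ d) (hp : 1 ≤ p) (hpq : p < q) (N : ℕ) :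
    ∃ D : ℝ, 2 < D ∧ volume (ball (0 : Euc d) ((D-2)/2)) ^ (1/q - 1/p) *
      ((N : ℝ≥0∞) ^ (1/p) * ENNReal.ofReal (cconst d q) * (V1 d) ^ (1/p)) ≤ 1 := by
  have hp0 : 0 < p := lt_of_lt_of_le one_pos hp
  have hq0 : 0 < q := hp0.trans hpq
  have hβ : 0 < 1/p - 1/q := by
    have := one_div_lt_one_div_of_lt hp0 hpq
    linarith
  set β := 1/p - 1/q with hβdef
  set P := (N : ℝ≥0∞) ^ (1/p) * ENNReal.ofReal (cconst d q) * (V1 d) ^ (1/p) with hP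
  have hPtop : P ≠ ∞ := by
    apply ENNReal.mul_ne_top
    apply ENNReal.mul_ne_top
    · exact ENNReal.rpow_ne_top_of_nonneg (one_div_nonneg.mpr hp0.le) (ENNReal.natCast_ne_top N)
    · exact ENNReal.ofReal_ne_top
    · exact ENNReal.rpow_ne_top_of_nonneg (one_div_nonneg.mpr hp0.le) (V1_ne_top d)
  set K := P * ((V1 d) ^ β)⁻¹ with hK
  have hV1β0 : (V1 d) ^ β ≠ 0 := (ENNReal.rpow_pos (V1_pos d) (V1_ne_top d)).ne'
  have hV1βt : (V1 d) ^ β ≠ ∞ := ENNReal.rpow_ne_top_of_nonneg hβ.le (V1_ne_top d)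
  have hKtop : K ≠ ∞ := ENNReal.mul_ne_top hPtop (ENNReal.inv_ne_top.mpr hV1β0)
  set r : ℝ := max 1 ((K.toReal + 1) ^ (1/β)) with hr
  have hr1 : 1 ≤ r := le_max_left _ _
  refine ⟨2*r + 2, by linarith, ?_⟩
  have hhalf : (2*r + 2 - 2)/2 = r := by ring
  rw [hhalf]
  have hvol : volume (ball (0 : Euc d) r) = ENNReal.ofReal (r ^ d) * V1 d := by
    rw [Measure.addHaar_ball_of_pos volume (0 : Euc d) (by linarith : (0:ℝ) < r),
      finrank_euclideanSpace_fin, V1_def]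
  have hKle : K ≤ ENNReal.ofReal r ^ β := by
    have h1 : ENNReal.ofReal ((K.toReal + 1) ^ (1/β)) ≤ ENNReal.ofReal r :=
      ENNReal.ofReal_le_ofReal (le_max_right _ _)
    have h2 : (ENNReal.ofReal ((K.toReal + 1) ^ (1/β))) ^ β = ENNReal.ofReal (K.toReal + 1) := by
      rw [ENNReal.ofReal_rpow_of_nonneg (Real.rpow_nonneg (by positivity) _) hβ.le,
        ← Real.rpow_mul (by positivity), one_div_mul_cancel hβ.ne', Real.rpow_one]
    calc K = ENNReal.ofReal K.toReal := (ENNReal.ofReal_toReal hKtop).symm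
      _ ≤ ENNReal.ofReal (K.toReal + 1) := ENNReal.ofReal_le_ofReal (by linarith)
      _ = (ENNReal.ofReal ((K.toReal + 1) ^ (1/β))) ^ β := h2.symm
      _ ≤ (ENNReal.ofReal r) ^ β := ENNReal.rpow_le_rpow h1 hβ.le
  have hrd : ENNReal.ofReal r ≤ ENNReal.ofReal (r ^ d) :=
    ENNReal.ofReal_le_ofReal (le_self_pow₀ hr1 (by omega))
  have hVβ : P ≤ volume (ball (0 : Euc d) r) ^ β := by
    calc P = K * (V1 d) ^ β := by rw [hK, mul_assoc, ENNReal.inv_mul_cancel hV1β0 hV1βt, mul_one]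
      _ ≤ ENNReal.ofReal (r ^ d) ^ β * (V1 d) ^ β :=
          mul_le_mul_left (hKle.trans (ENNReal.rpow_le_rpow hrd hβ.le)) _
      _ = volume (ball (0 : Euc d) r) ^ β := by
          rw [hvol, ENNReal.mul_rpow_of_nonneg _ _ hβ.le]
  have hexp : 1/q - 1/p = -β := by rw [hβdef]; ring
  rw [hexp, ENNReal.rpow_neg]
  rcases eq_or_ne P 0 with h0 | h0
  · rw [h0, mul_zero]
    exact zero_le
  · calc (volume (ball (0 : Euc d) r) ^ β)⁻¹ * P ≤ P⁻¹ * P :=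
        mul_le_mul_left (ENNReal.inv_le_inv.mpr hVβ) _
      _ = 1 := ENNReal.inv_mul_cancel h0 hPtop

lemma inner_eq (hp0 : 0 < p) (f : Euc d → ℝ) (μ : Measure (Euc d)) :
    (∫⁻ y, ENNReal.ofReal (|f y| ^ p) ∂μ) ^ (1/p) = eLpNorm f (ENNReal.ofReal p) μ := by
  rw [eLpNorm_eq_eLpNorm' (by simp [hp0, hp0.le]) ENNReal.ofReal_ne_top, eLpNorm',
    ENNReal.toReal_ofReal hp0.le]
  congr 1
  refine lintegral_congr fun y => ?_
  rw [Real.enorm_eq_ofReal_abs, ENNReal.ofReal_rpow_of_nonneg (abs_nonneg _) hp0.le]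

lemma morreyNorm_add_le (hp : 1 ≤ p) {f g : Euc d → ℝ} (hf : Measurable f) (hg : Measurable g) :
    morreyNorm d p q (fun y => f y + g y) ≤ morreyNorm d p q f + morreyNorm d p q g := by
  have hp0 : 0 < p := lt_of_lt_of_le one_pos hp
  conv_lhs => unfold morreyNorm
  refine iSup_le fun b => iSup_le fun R => iSup_le fun hR => ?_
  have tri : (∫⁻ y in ball b R, ENNReal.ofReal (|f y + g y| ^ p)) ^ (1/p)
      ≤ (∫⁻ y in ball b R, ENNReal.ofReal (|f y| ^ p)) ^ (1/p)
        + (∫⁻ y in ball b R, ENNReal.ofReal (|g y| ^ p)) ^ (1/p) := by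
    rw [inner_eq hp0 f, inner_eq hp0 g, show (fun y => ENNReal.ofReal (|f y + g y| ^ p))
      = fun y => ENNReal.ofReal (|(f + g) y| ^ p) from rfl, inner_eq hp0 (f + g)]
    exact eLpNorm_add_le hf.aestronglyMeasurable hg.aestronglyMeasurable
      (ENNReal.one_le_ofReal.mpr hp)
  calc volume (ball b R) ^ (1/q - 1/p) *
        (∫⁻ y in ball b R, ENNReal.ofReal (|f y + g y| ^ p)) ^ (1/p)
      ≤ volume (ball b R) ^ (1/q - 1/p) *
        ((∫⁻ y in ball b R, ENNReal.ofReal (|f y| ^ p)) ^ (1/p)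
          + (∫⁻ y in ball b R, ENNReal.ofReal (|g y| ^ p)) ^ (1/p)) := mul_le_mul_right tri _
    _ = volume (ball b R) ^ (1/q - 1/p) * (∫⁻ y in ball b R, ENNReal.ofReal (|f y| ^ p)) ^ (1/p)
        + volume (ball b R) ^ (1/q - 1/p) *
          (∫⁻ y in ball b R, ENNReal.ofReal (|g y| ^ p)) ^ (1/p) := mul_add _ _ _
    _ ≤ morreyNorm d p q f + morreyNorm d p q g :=
        add_le_add (le_morreyNorm f b hR) (le_morreyNorm g b hR)

lemma morreyNorm_zero (hp0 : 0 < p) : morreyNorm d p q (fun _ : Euc d => (0:ℝ)) = 0 := by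
  refine le_antisymm ?_ zero_le
  unfold morreyNorm
  refine iSup_le fun b => iSup_le fun R => iSup_le fun hR => ?_
  simp only [abs_zero, Real.zero_rpow hp0.ne', ENNReal.ofReal_zero, lintegral_const,
    zero_mul, ENNReal.zero_rpow_of_pos (one_div_pos.mpr hp0), mul_zero, le_refl]

lemma morreyNorm_sum_le (hp : 1 ≤ p) {ι : Type} (t : Finset ι) (g : ι → Euc d → ℝ)
    (hg : ∀ i, Measurable (g i)) :
    morreyNorm d p q (fun y => ∑ i ∈ t, g i y) ≤ ∑ i ∈ t, morreyNorm d p q (g i) := by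
  classical
  have hp0 : 0 < p := lt_of_lt_of_le one_pos hp
  induction t using Finset.induction with
  | empty => simp [morreyNorm_zero hp0]
  | insert _ _ hnot ih =>
    rename_i j t0
    rw [Finset.sum_insert hnot]
    refine le_trans (le_trans (le_of_eq ?_) (morreyNorm_add_le hp (hg j)
      (t0.measurable_sum fun i _ => hg i))) (add_le_add le_rfl ih)
    congr 1
    funext y
    rw [Finset.sum_insert hnot]

end MorreyAux

open MorreyAux in
/-- The `n`-th James constant of the Morrey space `M^p_q(ℝ^d)`, `1 ≤ p < q < ∞`,
equals `n`: the supremum, over measurable `f₁, …, f_n` with `‖f_i‖_{M^p_q} = 1`, of the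
minimum of `‖f₁ ± f₂ ± ⋯ ± f_n‖_{M^p_q}` over all `2^{n-1}` choices of signs, is `n`. -/
theorem morrey_nth_jamesConst (d : ℕ) (hd : 1 ≤ d) (p q : ℝ) (hp : 1 ≤ p) (hpq : p < q)
    (n : ℕ) (hn : 2 ≤ n) :
    sSup { c : ℝ≥0∞ | ∃ f : Fin n → (EuclideanSpace ℝ (Fin d) → ℝ),
        (∀ i, Measurable (f i)) ∧ (∀ i, morreyNorm d p q (f i) = 1) ∧
        c = sInf { r : ℝ≥0∞ | ∃ s : Fin n → ℝ, (∀ i, s i = 1 ∨ s i = -1) ∧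
          (∀ i : Fin n, (i : ℕ) = 0 → s i = 1) ∧
          r = morreyNorm d p q (fun x => ∑ i, s i * f i x) } } = (n : ℝ≥0∞) := by
  classical
  have hp0 : 0 < p := lt_of_lt_of_le one_pos hp
  apply le_antisymm
  · refine sSup_le fun c hc => ?_
    obtain ⟨f, hmeas, hnorm, rfl⟩ := hc
    refine sInf_le_of_le (b := morreyNorm d p q (fun x => ∑ i, (1:ℝ) * f i x))
      ⟨fun _ => 1, fun i => Or.inl rfl, fun i _ => rfl, rfl⟩ ?_
    have heq : (fun x => ∑ i, (1:ℝ) * f i x) = fun x => ∑ i, f i x := by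
      funext x; simp
    rw [heq]
    calc morreyNorm d p q (fun x => ∑ i, f i x) ≤ ∑ i : Fin n, morreyNorm d p q (f i) :=
        morreyNorm_sum_le hp Finset.univ f hmeas
      _ = (n : ℝ≥0∞) := by simp [hnorm]
  · obtain ⟨D, hD2, hDbig⟩ := exists_D (d := d) (p := p) (q := q) hd hp hpq
      (Fintype.card (Fin n → Bool))
    set e : EuclideanSpace ℝ (Fin d) := EuclideanSpace.single (⟨0, hd⟩ : Fin d) (1:ℝ) with he
    have hnorme : ‖e‖ = 1 := by rw [he, EuclideanSpace.norm_single]; norm_num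
    set k := Fintype.equivFin (Fin n → Bool) with hk
    set x : (Fin n → Bool) → EuclideanSpace ℝ (Fin d) := fun σ => (D * ((k σ : ℕ) : ℝ)) • e
      with hxdef
    have hdist : ∀ σ τ, σ ≠ τ → D ≤ dist (x σ) (x τ) := by
      intro σ τ hστ
      have hne : (k σ : ℕ) ≠ (k τ : ℕ) := fun h => hστ (k.injective (Fin.ext h))
      have h1 : (1:ℝ) ≤ |((k σ : ℕ) : ℝ) - ((k τ : ℕ) : ℝ)| := by
        rcases lt_or_gt_of_ne hne with h | h
        · have h' : (k σ : ℕ) + 1 ≤ (k τ : ℕ) := h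
          have h'' := (Nat.cast_le (α := ℝ)).mpr h'
          push_cast at h''
          rw [abs_sub_comm, abs_of_nonneg (by linarith)]
          linarith
        · have h' : (k τ : ℕ) + 1 ≤ (k σ : ℕ) := h
          have h'' := (Nat.cast_le (α := ℝ)).mpr h'
          push_cast at h''
          rw [abs_of_nonneg (by linarith)]
          linarith
      rw [hxdef, dist_eq_norm, ← sub_smul, norm_smul, hnorme, mul_one, Real.norm_eq_abs,
        ← mul_sub, abs_mul, abs_of_nonneg (by linarith : (0:ℝ) ≤ D)]
      nlinarith
    set f : Fin n → EuclideanSpace ℝ (Fin d) → ℝ := fun i y =>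
      ∑ σ : Fin n → Bool, (if σ i then (1:ℝ) else -1) *
        Set.indicator (ball (x σ) 1) (fun _ => cconst d q) y with hfdef
    have hmeas : ∀ i, Measurable (f i) := fun i =>
      Finset.measurable_sum _ fun σ _ =>
        (measurable_const.indicator measurableSet_ball).const_mul _
    have hnorm : ∀ i, morreyNorm d p q (f i) = 1 := by
      intro i
      have h := main_norm hp hpq x D hD2 hdist hDbig
        (fun σ => if σ i then (1:ℝ) else -1) 1
        (fun σ => by rcases Bool.dichotomy (σ i) with h | h <;> simp [h])
        (fun _ => true) (by simp)
      rw [hfdef]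
      simpa using h
    have hsInf : ∀ r ∈ {r : ℝ≥0∞ | ∃ s : Fin n → ℝ, (∀ i, s i = 1 ∨ s i = -1) ∧
        (∀ i : Fin n, (i : ℕ) = 0 → s i = 1) ∧
        r = morreyNorm d p q (fun y => ∑ i, s i * f i y)}, r = (n : ℝ≥0∞) := by
      rintro r ⟨s, hs, hs0, rfl⟩
      have hfun : (fun y => ∑ i, s i * f i y) = fun y => ∑ σ : Fin n → Bool,
          (∑ i, s i * (if σ i then (1:ℝ) else -1)) *
            Set.indicator (ball (x σ) 1) (fun _ => cconst d q) y := by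
        funext y
        rw [hfdef]
        simp only [Finset.mul_sum, Finset.sum_mul]
        rw [Finset.sum_comm]
        exact Finset.sum_congr rfl fun σ _ => Finset.sum_congr rfl fun i _ => by ring
      have hval : ∀ i, s i * (if (if s i = 1 then true else false) then (1:ℝ) else -1) = 1 := by
        intro i
        rcases hs i with h | h
        · rw [h, if_pos rfl]
          norm_num
        · rw [h, if_neg (by norm_num : ¬ (-1:ℝ) = 1), if_neg (by simp)]
          norm_num
      have hMbound : ∀ σ : Fin n → Bool, |∑ i, s i * (if σ i then (1:ℝ) else -1)| ≤ (n:ℝ) := by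
        intro σ
        calc |∑ i, s i * (if σ i then (1:ℝ) else -1)|
            ≤ ∑ i, |s i * (if σ i then (1:ℝ) else -1)| := Finset.abs_sum_le_sum_abs _ _
          _ = ∑ _i : Fin n, (1:ℝ) := by
              refine Finset.sum_congr rfl fun i _ => ?_
              rcases hs i with h | h <;> rcases Bool.dichotomy (σ i) with hb | hb <;>
                simp [h, hb]
          _ = (n:ℝ) := by simp
      have hMval : |∑ i, s i * (if (fun j => if s j = 1 then true else false) i then (1:ℝ)
          else -1)| = (n:ℝ) := by
        have : ∑ i, s i * (if (fun j => if s j = 1 then true else false) i then (1:ℝ) else -1)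
            = (n:ℝ) := by
          rw [Finset.sum_congr rfl fun i _ => hval i]
          simp
        rw [this, abs_of_nonneg (by positivity)]
      rw [hfun, main_norm hp hpq x D hD2 hdist hDbig _ (n:ℝ) hMbound
        (fun j => if s j = 1 then true else false) hMval]
      exact ENNReal.ofReal_natCast n
    have hmem : morreyNorm d p q (fun y => ∑ i, (1:ℝ) * f i y) ∈ {r : ℝ≥0∞ |
        ∃ s : Fin n → ℝ, (∀ i, s i = 1 ∨ s i = -1) ∧
        (∀ i : Fin n, (i : ℕ) = 0 → s i = 1) ∧
        r = morreyNorm d p q (fun y => ∑ i, s i * f i y)} :=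
      ⟨fun _ => 1, fun i => Or.inl rfl, fun i _ => rfl, rfl⟩
    have hInfEq : sInf {r : ℝ≥0∞ | ∃ s : Fin n → ℝ, (∀ i, s i = 1 ∨ s i = -1) ∧
        (∀ i : Fin n, (i : ℕ) = 0 → s i = 1) ∧
        r = morreyNorm d p q (fun y => ∑ i, s i * f i y)} = (n : ℝ≥0∞) :=
      le_antisymm ((sInf_le hmem).trans_eq (hsInf _ hmem)) (le_sInf fun r hr => (hsInf r hr).ge)
    exact le_sSup ⟨f, hmeas, hnorm, hInfEq.symm⟩
end

section
/- Let d ≥ 1 be an integer and let 1 ≤ p < q < ∞ be real numbers. Then the von Neumann–Jordan constant of the Morrey space M^p_q(ℝ^d) equals 2; that is, sup{ (‖f + g‖²_{M^p_q} + ‖f − g‖²_{M^p_q}) / (2(‖f‖²_{M^p_q} + ‖g‖²_{M^p_q})) : f, g measurable with 0 < ‖f‖_{M^p_q} < ∞ and 0 < ‖g‖_{M^p_q} < ∞ } = 2. -/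
open MeasureTheory Metric
open scoped ENNReal

section helpers
variable {d : ℕ} {p q : ℝ}

lemma rpow_ne_zero_ne_top {x : ℝ≥0∞} (h0 : x ≠ 0) (ht : x ≠ ⊤) (r : ℝ) :
    x ^ r ≠ 0 ∧ x ^ r ≠ ⊤ := by
  constructor
  · simp [ENNReal.rpow_eq_zero_iff, h0, ht]
  · simp [ENNReal.rpow_eq_top_iff, h0, ht]

lemma morreyNorm_congr (f g : EuclideanSpace ℝ (Fin d) → ℝ) (h : ∀ y, |f y| = |g y|) :
    morreyNorm d p q f = morreyNorm d p q g := by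
  unfold morreyNorm; simp only [h]


/-- per-ball estimate for a unit ball indicator -/
lemma perBall (hp : 1 ≤ p) (hpq : p < q) (b a : EuclideanSpace ℝ (Fin d)) (R : ℝ) (hR : 0 < R) :
    volume (ball a R) ^ (1/q - 1/p) * volume (ball b 1 ∩ ball a R) ^ (1/p)
      ≤ volume (ball (0 : EuclideanSpace ℝ (Fin d)) 1) ^ (1/q) := by
  have hp0 : (0:ℝ) < p := lt_of_lt_of_le one_pos hp
  have hq0 : (0:ℝ) < q := lt_trans hp0 hpq
  have hα : 1/q - 1/p ≤ 0 := by
    have : 1/q ≤ 1/p := one_div_le_one_div_of_le hp0 (le_of_lt hpq)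
    linarith
  set c := volume (ball (0 : EuclideanSpace ℝ (Fin d)) 1) with hc
  have hvtrans : volume (ball a R) = volume (ball (0 : EuclideanSpace ℝ (Fin d)) R) :=
    Measure.addHaar_ball_center volume a R
  set vR := volume (ball (0 : EuclideanSpace ℝ (Fin d)) R) with hvR
  have hvR0 : vR ≠ 0 := (measure_ball_pos volume _ hR).ne'
  have hvRt : vR ≠ ⊤ := measure_ball_lt_top.ne
  have hc0 : c ≠ 0 := (measure_ball_pos volume _ one_pos).ne'
  have hct : c ≠ ⊤ := measure_ball_lt_top.ne
  have hsum : 1/q - 1/p + 1/p = 1/q := by ring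
  rw [hvtrans]
  rcases le_total R 1 with h1 | h1
  · -- R ≤ 1 : intersection ≤ vR, and vR ≤ c
    have hint : volume (ball b 1 ∩ ball a R) ≤ vR := by
      rw [hvtrans] at *
      calc volume (ball b 1 ∩ ball a R) ≤ volume (ball a R) :=
            measure_mono Set.inter_subset_right
        _ = vR := Measure.addHaar_ball_center volume a R
    have hvc : vR ≤ c := by
      rw [hvR, hc]
      exact measure_mono (ball_subset_ball h1)
    calc vR ^ (1/q - 1/p) * volume (ball b 1 ∩ ball a R) ^ (1/p)
        ≤ vR ^ (1/q - 1/p) * vR ^ (1/p) :=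
          mul_le_mul_right (ENNReal.rpow_le_rpow hint (by positivity)) _
      _ = vR ^ (1/q) := by rw [← ENNReal.rpow_add _ _ hvR0 hvRt, hsum]
      _ ≤ c ^ (1/q) := ENNReal.rpow_le_rpow hvc (by positivity)
  · -- 1 ≤ R : intersection ≤ c, and vR ≥ c so vR^α ≤ c^α
    have hint : volume (ball b 1 ∩ ball a R) ≤ c := by
      calc volume (ball b 1 ∩ ball a R) ≤ volume (ball b 1) :=
            measure_mono Set.inter_subset_left
        _ = c := Measure.addHaar_ball_center volume b 1
    have hvc : c ≤ vR := by
      rw [hvR, hc]; exact measure_mono (ball_subset_ball h1)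
    have hneg : vR ^ (1/q - 1/p) ≤ c ^ (1/q - 1/p) := by
      rw [show (1/q - 1/p) = -(1/p - 1/q) by ring, ENNReal.rpow_neg, ENNReal.rpow_neg]
      exact ENNReal.inv_le_inv.mpr (ENNReal.rpow_le_rpow hvc (by have := one_div_le_one_div_of_le hp0 hpq.le; linarith))
    calc vR ^ (1/q - 1/p) * volume (ball b 1 ∩ ball a R) ^ (1/p)
        ≤ c ^ (1/q - 1/p) * c ^ (1/p) :=
          mul_le_mul' hneg (ENNReal.rpow_le_rpow hint (by positivity))
      _ = c ^ (1/q) := by rw [← ENNReal.rpow_add _ _ hc0 hct, hsum]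


lemma indicator_int (w : EuclideanSpace ℝ (Fin d) → ℝ) (κ : ℝ≥0∞)
    (b : EuclideanSpace ℝ (Fin d))
    (hw : ∀ y, ENNReal.ofReal (|w y| ^ p) = (ball b 1).indicator (fun _ => κ) y)
    (a : EuclideanSpace ℝ (Fin d)) (R : ℝ) :
    ∫⁻ y in ball a R, ENNReal.ofReal (|w y| ^ p) = κ * volume (ball b 1 ∩ ball a R) := by
  simp only [hw]
  rw [lintegral_indicator_const measurableSet_ball, Measure.restrict_apply measurableSet_ball]

lemma singleNorm (hp : 1 ≤ p) (hpq : p < q)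
    (b : EuclideanSpace ℝ (Fin d)) (w : EuclideanSpace ℝ (Fin d) → ℝ) (κ : ℝ≥0∞)
    (hw : ∀ y, ENNReal.ofReal (|w y| ^ p) = (ball b 1).indicator (fun _ => κ) y) :
    morreyNorm d p q w = κ ^ (1/p) * volume (ball (0 : EuclideanSpace ℝ (Fin d)) 1) ^ (1/q) := by
  have hp0 : (0:ℝ) < p := lt_of_lt_of_le one_pos hp
  set c := volume (ball (0 : EuclideanSpace ℝ (Fin d)) 1) with hc
  have hc0 : c ≠ 0 := (measure_ball_pos volume _ one_pos).ne'
  have hct : c ≠ ⊤ := measure_ball_lt_top.ne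
  have hsum : 1/q - 1/p + 1/p = 1/q := by ring
  apply le_antisymm
  · rw [morreyNorm]
    apply iSup_le; intro a; apply iSup_le; intro R; apply iSup_le; intro hR
    rw [indicator_int w κ b hw a R,
      ENNReal.mul_rpow_of_nonneg _ _ (by positivity : (0:ℝ) ≤ 1/p), mul_left_comm]
    exact mul_le_mul_right (perBall hp hpq b a R hR) _
  · have key : κ ^ (1/p) * c ^ (1/q)
        = volume (ball b 1) ^ (1/q - 1/p)
          * (∫⁻ y in ball b 1, ENNReal.ofReal (|w y| ^ p)) ^ (1/p) := by
      rw [indicator_int w κ b hw b 1, Set.inter_self,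
        Measure.addHaar_ball_center volume b 1,
        ENNReal.mul_rpow_of_nonneg _ _ (by positivity : (0:ℝ) ≤ 1/p), mul_left_comm,
        ← ENNReal.rpow_add _ _ hc0 hct, hsum]
    rw [morreyNorm, key]
    exact le_iSup_of_le b (le_iSup_of_le 1 (le_iSup_of_le one_pos le_rfl))

lemma morreyNorm_add_le (hp : 1 ≤ p) (f g : EuclideanSpace ℝ (Fin d) → ℝ)
    (hf : Measurable f) (hg : Measurable g) :
    morreyNorm d p q (fun x => f x + g x) ≤ morreyNorm d p q f + morreyNorm d p q g := by
  have hp0 : (0:ℝ) < p := lt_of_lt_of_le one_pos hp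
  rw [morreyNorm]
  apply iSup_le; intro a; apply iSup_le; intro R; apply iSup_le; intro hR
  have hF : Measurable fun y => ENNReal.ofReal |f y| :=
    (measurable_abs.comp hf).ennreal_ofReal
  have hG : Measurable fun y => ENNReal.ofReal |g y| :=
    (measurable_abs.comp hg).ennreal_ofReal
  have key : (∫⁻ y in ball a R, ENNReal.ofReal (|f y + g y| ^ p)) ^ (1/p)
      ≤ (∫⁻ y in ball a R, ENNReal.ofReal (|f y| ^ p)) ^ (1/p)
        + (∫⁻ y in ball a R, ENNReal.ofReal (|g y| ^ p)) ^ (1/p) := by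
    have h1 : ∀ y, ENNReal.ofReal (|f y + g y| ^ p)
        ≤ ((fun y => ENNReal.ofReal |f y|) + fun y => ENNReal.ofReal |g y|) y ^ p := by
      intro y
      calc ENNReal.ofReal (|f y + g y| ^ p)
          = ENNReal.ofReal |f y + g y| ^ p :=
            (ENNReal.ofReal_rpow_of_nonneg (abs_nonneg _) hp0.le).symm
        _ ≤ ENNReal.ofReal (|f y| + |g y|) ^ p :=
            ENNReal.rpow_le_rpow (ENNReal.ofReal_le_ofReal (abs_add_le _ _)) hp0.le
        _ = ((fun y => ENNReal.ofReal |f y|) + fun y => ENNReal.ofReal |g y|) y ^ p := by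
            rw [ENNReal.ofReal_add (abs_nonneg _) (abs_nonneg _)]; rfl
    have h2 : ∀ y, ENNReal.ofReal (|f y| ^ p) = ENNReal.ofReal |f y| ^ p := fun y =>
      (ENNReal.ofReal_rpow_of_nonneg (abs_nonneg _) hp0.le).symm
    have h3 : ∀ y, ENNReal.ofReal (|g y| ^ p) = ENNReal.ofReal |g y| ^ p := fun y =>
      (ENNReal.ofReal_rpow_of_nonneg (abs_nonneg _) hp0.le).symm
    simp only [h2, h3]
    calc (∫⁻ y in ball a R, ENNReal.ofReal (|f y + g y| ^ p)) ^ (1/p)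
        ≤ (∫⁻ y in ball a R,
            ((fun y => ENNReal.ofReal |f y|) + fun y => ENNReal.ofReal |g y|) y ^ p) ^ (1/p) :=
          ENNReal.rpow_le_rpow (lintegral_mono h1) (by positivity)
      _ ≤ _ := ENNReal.lintegral_Lp_add_le hF.aemeasurable hG.aemeasurable hp
  calc volume (ball a R) ^ (1/q - 1/p)
        * (∫⁻ y in ball a R, ENNReal.ofReal (|f y + g y| ^ p)) ^ (1/p)
      ≤ volume (ball a R) ^ (1/q - 1/p)
        * ((∫⁻ y in ball a R, ENNReal.ofReal (|f y| ^ p)) ^ (1/p)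
          + (∫⁻ y in ball a R, ENNReal.ofReal (|g y| ^ p)) ^ (1/p)) :=
        mul_le_mul_right key _
    _ = volume (ball a R) ^ (1/q - 1/p)
          * (∫⁻ y in ball a R, ENNReal.ofReal (|f y| ^ p)) ^ (1/p)
        + volume (ball a R) ^ (1/q - 1/p)
          * (∫⁻ y in ball a R, ENNReal.ofReal (|g y| ^ p)) ^ (1/p) := mul_add _ _ _
    _ ≤ morreyNorm d p q f + morreyNorm d p q g := by
        apply add_le_add
        · rw [morreyNorm]
          exact le_iSup_of_le a (le_iSup_of_le R (le_iSup_of_le hR le_rfl))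
        · rw [morreyNorm]
          exact le_iSup_of_le a (le_iSup_of_le R (le_iSup_of_le hR le_rfl))

lemma existsR0 (hd : 1 ≤ d) (hp : 1 ≤ p) (hpq : p < q) (Ci : ℝ≥0∞) (hCit : Ci ≠ ⊤) :
    ∃ R0 : ℝ, 1 ≤ R0 ∧ ∀ (a : EuclideanSpace ℝ (Fin d)) (R : ℝ), R0 ≤ R →
      volume (ball a R) ^ (1/q - 1/p) * Ci ^ (1/p)
        ≤ volume (ball (0 : EuclideanSpace ℝ (Fin d)) 1) ^ (1/q) := by
  have hp0 : (0:ℝ) < p := lt_of_lt_of_le one_pos hp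
  have hq0 : (0:ℝ) < q := lt_trans hp0 hpq
  haveI : Nonempty (Fin d) := ⟨⟨0, hd⟩⟩
  haveI : Nontrivial (EuclideanSpace ℝ (Fin d)) := by infer_instance
  set β := 1/p - 1/q with hβ
  have hβ0 : 0 < β := by
    have : 1/q < 1/p := one_div_lt_one_div_of_lt hp0 hpq
    simp only [hβ]; linarith
  set c := volume (ball (0 : EuclideanSpace ℝ (Fin d)) 1) with hc
  have hc0 : c ≠ 0 := (measure_ball_pos volume _ one_pos).ne'
  have hct : c ≠ ⊤ := measure_ball_lt_top.ne
  rcases eq_or_ne Ci 0 with rfl | hCi0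
  · refine ⟨1, le_rfl, fun a R hR => ?_⟩
    rw [ENNReal.zero_rpow_of_pos (by positivity)]
    simp
  have hCip : Ci ^ (1/p) ≠ 0 ∧ Ci ^ (1/p) ≠ ⊤ := rpow_ne_zero_ne_top hCi0 hCit _
  have hcq : c ^ (1/q) ≠ 0 ∧ c ^ (1/q) ≠ ⊤ := rpow_ne_zero_ne_top hc0 hct _
  have hcβ : c ^ β ≠ 0 ∧ c ^ β ≠ ⊤ := rpow_ne_zero_ne_top hc0 hct _
  set Y := Ci ^ (1/p) * (c ^ (1/q))⁻¹ with hY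
  have hYt : Y ≠ ⊤ := ENNReal.mul_ne_top hCip.2 (ENNReal.inv_ne_top.mpr hcq.1)
  have hY0 : Y ≠ 0 := by
    simp only [hY, mul_ne_zero_iff]
    exact ⟨hCip.1, ENNReal.inv_ne_zero.mpr hcq.2⟩
  set Z := Y * (c ^ β)⁻¹ with hZ
  have hZt : Z ≠ ⊤ := ENNReal.mul_ne_top hYt (ENNReal.inv_ne_top.mpr hcβ.1)
  refine ⟨max 1 ((Z.toReal + 1) ^ β⁻¹), le_max_left _ _, fun a R hR => ?_⟩
  have hR1 : (1:ℝ) ≤ R := le_trans (le_max_left _ _) hR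
  have hRpos : (0:ℝ) ≤ R := by linarith
  have hvol : volume (ball a R)
      = ENNReal.ofReal (R ^ d) * c := by
    rw [Measure.addHaar_ball volume a hRpos, hc]
    congr 2
    simp
  have hZR : Z.toReal + 1 ≤ (R ^ d) ^ β := by
    have h0 : (0:ℝ) ≤ (Z.toReal + 1) ^ β⁻¹ := by positivity
    have hRd : (Z.toReal + 1) ^ β⁻¹ ≤ R ^ d := by
      calc (Z.toReal + 1) ^ β⁻¹ ≤ R := le_trans (le_max_right _ _) hR
        _ ≤ R ^ d := le_self_pow₀ hR1 (by omega)
    calc Z.toReal + 1 = ((Z.toReal + 1) ^ β⁻¹) ^ β := by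
          rw [← Real.rpow_mul (by positivity), inv_mul_cancel₀ hβ0.ne', Real.rpow_one]
      _ ≤ (R ^ d) ^ β := Real.rpow_le_rpow h0 hRd hβ0.le
  have hvY : Y ≤ volume (ball a R) ^ β := by
    rw [hvol, ENNReal.mul_rpow_of_nonneg _ _ hβ0.le,
      ENNReal.ofReal_rpow_of_nonneg (by positivity) hβ0.le]
    calc Y = Z * c ^ β := by
          rw [hZ, mul_assoc, ENNReal.inv_mul_cancel hcβ.1 hcβ.2, mul_one]
      _ ≤ ENNReal.ofReal ((R ^ d) ^ β) * c ^ β := by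
          apply mul_le_mul_left
          calc Z = ENNReal.ofReal Z.toReal := (ENNReal.ofReal_toReal hZt).symm
            _ ≤ ENNReal.ofReal ((R ^ d) ^ β) :=
              ENNReal.ofReal_le_ofReal (by linarith)
  have hexp : 1/q - 1/p = -β := by simp only [hβ]; ring
  rw [hexp, ENNReal.rpow_neg]
  calc (volume (ball a R) ^ β)⁻¹ * Ci ^ (1/p)
      ≤ Y⁻¹ * Ci ^ (1/p) := mul_le_mul_left (ENNReal.inv_le_inv.mpr hvY) _
    _ = ((Ci ^ (1/p))⁻¹ * c ^ (1/q)) * Ci ^ (1/p) := by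
        rw [hY, ENNReal.mul_inv (Or.inl hCip.1) (Or.inl hCip.2), inv_inv]
    _ = ((Ci ^ (1/p))⁻¹ * Ci ^ (1/p)) * c ^ (1/q) := by ring
    _ = c ^ (1/q) := by rw [ENNReal.inv_mul_cancel hCip.1 hCip.2, one_mul]

lemma sumNorm (hp : 1 ≤ p) (hpq : p < q) (R0 : ℝ) (hR01 : 1 ≤ R0)
    (hR0 : ∀ (a : EuclideanSpace ℝ (Fin d)) (R : ℝ), R0 ≤ R →
      volume (ball a R) ^ (1/q - 1/p)
        * (ENNReal.ofReal (2 ^ p) * (2 * volume (ball (0 : EuclideanSpace ℝ (Fin d)) 1))) ^ (1/p)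
        ≤ volume (ball (0 : EuclideanSpace ℝ (Fin d)) 1) ^ (1/q))
    (z : EuclideanSpace ℝ (Fin d)) (hz : 2 * R0 + 2 ≤ ‖z‖)
    (w : EuclideanSpace ℝ (Fin d) → ℝ)
    (hw1 : ∀ y, y ∉ ball z 1 →
      ENNReal.ofReal (|w y| ^ p) = (ball (0 : EuclideanSpace ℝ (Fin d)) 1).indicator (fun _ => (1:ℝ≥0∞)) y)
    (hw2 : ∀ y, y ∉ ball (0 : EuclideanSpace ℝ (Fin d)) 1 →
      ENNReal.ofReal (|w y| ^ p) = (ball z 1).indicator (fun _ => (1:ℝ≥0∞)) y)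
    (hw3 : ∀ y, ENNReal.ofReal (|w y| ^ p) ≤ ENNReal.ofReal (2 ^ p)) :
    morreyNorm d p q w = volume (ball (0 : EuclideanSpace ℝ (Fin d)) 1) ^ (1/q) := by
  have hp0 : (0:ℝ) < p := lt_of_lt_of_le one_pos hp
  set c := volume (ball (0 : EuclideanSpace ℝ (Fin d)) 1) with hc
  have hc0 : c ≠ 0 := (measure_ball_pos volume _ one_pos).ne'
  have hct : c ≠ ⊤ := measure_ball_lt_top.ne
  have hsum : 1/q - 1/p + 1/p = 1/q := by ring
  have hind0 : Measurable ((ball (0 : EuclideanSpace ℝ (Fin d)) 1).indicator (fun _ => (1:ℝ≥0∞))) :=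
    measurable_const.indicator measurableSet_ball
  have hindz : Measurable ((ball z 1).indicator (fun _ => (1:ℝ≥0∞))) :=
    measurable_const.indicator measurableSet_ball
  apply le_antisymm
  · rw [morreyNorm]
    apply iSup_le; intro a; apply iSup_le; intro R; apply iSup_le; intro hR
    by_cases h1 : ball a R ∩ ball z 1 = ∅
    · -- w agrees with the unit-ball indicator on ball a R
      have hcongr : ∫⁻ y in ball a R, ENNReal.ofReal (|w y| ^ p)
          = ∫⁻ y in ball a R,
              (ball (0 : EuclideanSpace ℝ (Fin d)) 1).indicator (fun _ => (1:ℝ≥0∞)) y := by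
        refine setLIntegral_congr_fun measurableSet_ball (fun y hy => ?_)
        exact hw1 y (fun hyz => Set.eq_empty_iff_forall_notMem.mp h1 y ⟨hy, hyz⟩)
      rw [hcongr, lintegral_indicator_const measurableSet_ball,
        Measure.restrict_apply measurableSet_ball, one_mul]
      exact perBall hp hpq 0 a R hR
    · by_cases h2 : ball a R ∩ ball (0 : EuclideanSpace ℝ (Fin d)) 1 = ∅
      · have hcongr : ∫⁻ y in ball a R, ENNReal.ofReal (|w y| ^ p)
            = ∫⁻ y in ball a R, (ball z 1).indicator (fun _ => (1:ℝ≥0∞)) y := by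
          refine setLIntegral_congr_fun measurableSet_ball (fun y hy => ?_)
          exact hw2 y (fun hy0 => Set.eq_empty_iff_forall_notMem.mp h2 y ⟨hy, hy0⟩)
        rw [hcongr, lintegral_indicator_const measurableSet_ball,
          Measure.restrict_apply measurableSet_ball, one_mul]
        exact perBall hp hpq z a R hR
      · -- mixed case: R must be large
        obtain ⟨x, hxa, hx0⟩ := Set.nonempty_iff_ne_empty.mpr h2
        obtain ⟨y', hya, hyz⟩ := Set.nonempty_iff_ne_empty.mpr h1
        have hRbig : R0 ≤ R := by
          have h3 : ‖z‖ ≤ dist z y' + dist y' a + dist a x + dist x 0 := by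
            calc ‖z‖ = dist z 0 := (dist_zero_right z).symm
              _ ≤ dist z y' + dist y' x + dist x 0 := dist_triangle4 _ _ _ _
              _ ≤ dist z y' + dist y' a + dist a x + dist x 0 := by
                  linarith [dist_triangle y' a x]
          have e1 : dist z y' < 1 := by rw [dist_comm]; exact mem_ball.mp hyz
          have e2 : dist y' a < R := mem_ball.mp hya
          have e3 : dist a x < R := by rw [dist_comm]; exact mem_ball.mp hxa
          have e4 : dist x 0 < 1 := by
            have := mem_ball.mp hx0; rwa [dist_zero_right] at this ⊢
          nlinarith [hz]
        have hpt : ∀ y, ENNReal.ofReal (|w y| ^ p)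
            ≤ ENNReal.ofReal (2 ^ p) *
              ((ball (0 : EuclideanSpace ℝ (Fin d)) 1).indicator (fun _ => (1:ℝ≥0∞)) y
                + (ball z 1).indicator (fun _ => (1:ℝ≥0∞)) y) := by
          intro y
          by_cases hy0 : y ∈ ball (0 : EuclideanSpace ℝ (Fin d)) 1
          · rw [Set.indicator_of_mem hy0]
            calc ENNReal.ofReal (|w y| ^ p) ≤ ENNReal.ofReal (2 ^ p) := hw3 y
              _ = ENNReal.ofReal (2 ^ p) * 1 := (mul_one _).symm
              _ ≤ _ := mul_le_mul_right le_self_add _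
          · by_cases hyz' : y ∈ ball z 1
            · rw [Set.indicator_of_mem hyz']
              calc ENNReal.ofReal (|w y| ^ p) ≤ ENNReal.ofReal (2 ^ p) := hw3 y
                _ = ENNReal.ofReal (2 ^ p) * 1 := (mul_one _).symm
                _ ≤ _ := mul_le_mul_right le_add_self _
            · rw [hw1 y hyz', Set.indicator_of_notMem hy0]
              exact zero_le
        have key : ∫⁻ y in ball a R, ENNReal.ofReal (|w y| ^ p)
            ≤ ENNReal.ofReal (2 ^ p) * (2 * c) := by
          calc ∫⁻ y in ball a R, ENNReal.ofReal (|w y| ^ p)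
              ≤ ∫⁻ y in ball a R, ENNReal.ofReal (2 ^ p) *
                ((ball (0 : EuclideanSpace ℝ (Fin d)) 1).indicator (fun _ => (1:ℝ≥0∞)) y
                  + (ball z 1).indicator (fun _ => (1:ℝ≥0∞)) y) := lintegral_mono hpt
            _ = ENNReal.ofReal (2 ^ p) * ∫⁻ y in ball a R,
                ((ball (0 : EuclideanSpace ℝ (Fin d)) 1).indicator (fun _ => (1:ℝ≥0∞)) y
                  + (ball z 1).indicator (fun _ => (1:ℝ≥0∞)) y) :=
                lintegral_const_mul _ (hind0.add hindz)
            _ ≤ ENNReal.ofReal (2 ^ p) * (2 * c) := by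
                apply mul_le_mul_right
                rw [lintegral_add_left hind0, two_mul]
                apply add_le_add
                · rw [lintegral_indicator_const measurableSet_ball,
                    Measure.restrict_apply measurableSet_ball, one_mul]
                  exact le_trans (measure_mono Set.inter_subset_left) le_rfl
                · rw [lintegral_indicator_const measurableSet_ball,
                    Measure.restrict_apply measurableSet_ball, one_mul]
                  calc volume (ball z 1 ∩ ball a R) ≤ volume (ball z 1) :=
                        measure_mono Set.inter_subset_left
                    _ = c := Measure.addHaar_ball_center volume z 1
        calc volume (ball a R) ^ (1/q - 1/p)
              * (∫⁻ y in ball a R, ENNReal.ofReal (|w y| ^ p)) ^ (1/p)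
            ≤ volume (ball a R) ^ (1/q - 1/p)
              * (ENNReal.ofReal (2 ^ p) * (2 * c)) ^ (1/p) :=
              mul_le_mul_right (ENNReal.rpow_le_rpow key (by positivity)) _
          _ ≤ c ^ (1/q) := hR0 a R hRbig
  · -- lower bound: evaluate at the unit ball centered at 0
    have hdisj : ∀ y, y ∈ ball (0 : EuclideanSpace ℝ (Fin d)) 1 → y ∉ ball z 1 := by
      intro y hy hyz
      have h1 : ‖y‖ < 1 := mem_ball_zero_iff.mp hy
      have h2 : dist y z < 1 := mem_ball.mp hyz
      have : ‖z‖ ≤ ‖y‖ + dist y z := by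
        calc ‖z‖ = dist z 0 := (dist_zero_right z).symm
          _ ≤ dist z y + dist y 0 := dist_triangle _ _ _
          _ = ‖y‖ + dist y z := by rw [dist_comm z y, dist_zero_right]; ring
      nlinarith [hz, hR01]
    have hcongr : ∫⁻ y in ball (0 : EuclideanSpace ℝ (Fin d)) 1,
        ENNReal.ofReal (|w y| ^ p) = c := by
      have : ∫⁻ y in ball (0 : EuclideanSpace ℝ (Fin d)) 1, ENNReal.ofReal (|w y| ^ p)
          = ∫⁻ _ in ball (0 : EuclideanSpace ℝ (Fin d)) 1, (1:ℝ≥0∞) := by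
        refine setLIntegral_congr_fun measurableSet_ball (fun y hy => ?_)
        rw [hw1 y (hdisj y hy), Set.indicator_of_mem hy]
      rw [this, setLIntegral_one]
    have key : c ^ (1/q)
        = volume (ball (0 : EuclideanSpace ℝ (Fin d)) 1) ^ (1/q - 1/p)
          * (∫⁻ y in ball (0 : EuclideanSpace ℝ (Fin d)) 1,
              ENNReal.ofReal (|w y| ^ p)) ^ (1/p) := by
      rw [hcongr, ← hc, ← ENNReal.rpow_add _ _ hc0 hct, hsum]
    rw [morreyNorm, key]
    exact le_iSup_of_le 0 (le_iSup_of_le 1 (le_iSup_of_le one_pos le_rfl))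
end helpers

/-- Theorem 1 (first part): for `1 ≤ p < q < ∞`, the von Neumann–Jordan constant of the
Morrey space `M^p_q(ℝ^d)` equals `2`:
`sup{ (‖f+g‖² + ‖f-g‖²)/(2(‖f‖² + ‖g‖²)) : 0 < ‖f‖, ‖g‖ < ∞ } = 2`. -/
theorem morrey_njConst_eq_two (d : ℕ) (hd : 1 ≤ d) (p q : ℝ) (hp : 1 ≤ p) (hpq : p < q) :
    sSup { c : ℝ | ∃ f g : EuclideanSpace ℝ (Fin d) → ℝ,
        Measurable f ∧ Measurable g ∧
        (0 < morreyNorm d p q f ∧ morreyNorm d p q f ≠ ⊤) ∧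
        (0 < morreyNorm d p q g ∧ morreyNorm d p q g ≠ ⊤) ∧
        c = ((morreyNorm d p q (fun x => f x + g x)).toReal ^ 2 +
              (morreyNorm d p q (fun x => f x - g x)).toReal ^ 2) /
            (2 * ((morreyNorm d p q f).toReal ^ 2 + (morreyNorm d p q g).toReal ^ 2)) }
      = (2 : ℝ) := by
  have hp0 : (0:ℝ) < p := lt_of_lt_of_le one_pos hp
  set S := { c : ℝ | ∃ f g : EuclideanSpace ℝ (Fin d) → ℝ,
        Measurable f ∧ Measurable g ∧
        (0 < morreyNorm d p q f ∧ morreyNorm d p q f ≠ ⊤) ∧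
        (0 < morreyNorm d p q g ∧ morreyNorm d p q g ≠ ⊤) ∧
        c = ((morreyNorm d p q (fun x => f x + g x)).toReal ^ 2 +
              (morreyNorm d p q (fun x => f x - g x)).toReal ^ 2) /
            (2 * ((morreyNorm d p q f).toReal ^ 2 + (morreyNorm d p q g).toReal ^ 2)) } with hS
  -- upper bound
  have hub : ∀ x ∈ S, x ≤ 2 := by
    rintro x ⟨f, g, hf, hg, ⟨hf0, hft⟩, ⟨hg0, hgt⟩, rfl⟩
    have tri1 : morreyNorm d p q (fun x => f x + g x)
        ≤ morreyNorm d p q f + morreyNorm d p q g := morreyNorm_add_le hp f g hf hg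
    have tri2 : morreyNorm d p q (fun x => f x - g x)
        ≤ morreyNorm d p q f + morreyNorm d p q g := by
      have h1 : morreyNorm d p q (fun x => f x - g x)
          = morreyNorm d p q (fun x => f x + (-g x)) :=
        morreyNorm_congr _ _ (fun y => by rw [sub_eq_add_neg])
      have h2 := morreyNorm_add_le (q := q) hp f (fun x => -g x) hf hg.neg
      have h3 : morreyNorm d p q (fun x => -g x) = morreyNorm d p q g :=
        morreyNorm_congr _ _ (fun y => abs_neg _)
      rw [h1]; rwa [h3] at h2
    have hFGt : morreyNorm d p q f + morreyNorm d p q g ≠ ⊤ :=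
      ENNReal.add_ne_top.mpr ⟨hft, hgt⟩
    set F := (morreyNorm d p q f).toReal with hF
    set G := (morreyNorm d p q g).toReal with hG
    set A := (morreyNorm d p q (fun x => f x + g x)).toReal with hA
    set B := (morreyNorm d p q (fun x => f x - g x)).toReal with hB
    have hFpos : 0 < F := ENNReal.toReal_pos hf0.ne' hft
    have hGpos : 0 < G := ENNReal.toReal_pos hg0.ne' hgt
    have hA0 : 0 ≤ A := ENNReal.toReal_nonneg
    have hB0 : 0 ≤ B := ENNReal.toReal_nonneg
    have hAle : A ≤ F + G := by
      have := ENNReal.toReal_mono hFGt tri1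
      rwa [ENNReal.toReal_add hft hgt] at this
    have hBle : B ≤ F + G := by
      have := ENNReal.toReal_mono hFGt tri2
      rwa [ENNReal.toReal_add hft hgt] at this
    have hden : 0 < 2 * (F ^ 2 + G ^ 2) := by nlinarith
    rw [div_le_iff₀ hden]
    nlinarith [sq_nonneg (F - G), sq_nonneg (F + G)]
  -- construction showing 2 ∈ S
  have hmem : (2:ℝ) ∈ S := by
    set c := volume (ball (0 : EuclideanSpace ℝ (Fin d)) 1) with hc
    have hc0 : c ≠ 0 := (measure_ball_pos volume _ one_pos).ne'
    have hct : c ≠ ⊤ := measure_ball_lt_top.ne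
    have hcq : c ^ (1/q) ≠ 0 ∧ c ^ (1/q) ≠ ⊤ := rpow_ne_zero_ne_top hc0 hct _
    have hCit : ENNReal.ofReal (2 ^ p) * (2 * c) ≠ ⊤ :=
      ENNReal.mul_ne_top ENNReal.ofReal_ne_top
        (ENNReal.mul_ne_top (by simp) hct)
    obtain ⟨R0, hR01, hR0⟩ := existsR0 hd hp hpq (ENNReal.ofReal (2 ^ p) * (2 * c)) hCit
    set i0 : Fin d := ⟨0, hd⟩ with hi0
    set z : EuclideanSpace ℝ (Fin d) := EuclideanSpace.single i0 (2 * R0 + 2) with hz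
    have hznorm : ‖z‖ = 2 * R0 + 2 := by
      rw [hz, EuclideanSpace.norm_single, Real.norm_eq_abs, abs_of_pos (by linarith)]
    set u : EuclideanSpace ℝ (Fin d) → ℝ :=
      (ball (0 : EuclideanSpace ℝ (Fin d)) 1).indicator (fun _ => (1:ℝ)) with hu
    set v : EuclideanSpace ℝ (Fin d) → ℝ :=
      (ball z 1).indicator (fun _ => (1:ℝ)) with hv
    have hum : Measurable u := measurable_const.indicator measurableSet_ball
    have hvm : Measurable v := measurable_const.indicator measurableSet_ball
    -- pointwise unit-ball values
    have hval : ∀ (b : EuclideanSpace ℝ (Fin d)) (y : EuclideanSpace ℝ (Fin d)) (s : ℝ), 0 < s →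
        ENNReal.ofReal (|s * (ball b 1).indicator (fun _ => (1:ℝ)) y| ^ p)
          = (ball b 1).indicator (fun _ => ENNReal.ofReal (s ^ p)) y := by
      intro b y s hs
      by_cases hy : y ∈ ball b 1
      · rw [Set.indicator_of_mem hy, Set.indicator_of_mem hy, mul_one,
          abs_of_pos hs]
      · rw [Set.indicator_of_notMem hy, Set.indicator_of_notMem hy, mul_zero,
          abs_zero, Real.zero_rpow hp0.ne', ENNReal.ofReal_zero]
    -- the two functions
    refine ⟨fun y => u y + v y, fun y => u y - v y, hum.add hvm, hum.sub hvm, ?_⟩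
    -- compute the four norms
    have hub01 : ∀ y, 0 ≤ u y ∧ u y ≤ 1 := by
      intro y
      by_cases hy : y ∈ ball (0 : EuclideanSpace ℝ (Fin d)) 1 <;>
        simp [hu, Set.indicator_of_mem, Set.indicator_of_notMem, hy]
    have hvb01 : ∀ y, 0 ≤ v y ∧ v y ≤ 1 := by
      intro y
      by_cases hy : y ∈ ball z 1 <;>
        simp [hv, Set.indicator_of_mem, Set.indicator_of_notMem, hy]
    have habs2 : ∀ w : EuclideanSpace ℝ (Fin d) → ℝ, (∀ y, |w y| ≤ 2) →
        ∀ y, ENNReal.ofReal (|w y| ^ p) ≤ ENNReal.ofReal (2 ^ p) := by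
      intro w hw y
      exact ENNReal.ofReal_le_ofReal (Real.rpow_le_rpow (abs_nonneg _) (hw y) hp0.le)
    -- norm of f = u + v
    have hnf : morreyNorm d p q (fun y => u y + v y) = c ^ (1/q) := by
      refine sumNorm hp hpq R0 hR01 hR0 z (le_of_eq hznorm.symm) _ ?_ ?_ ?_
      · intro y hyz
        have hv0 : v y = 0 := Set.indicator_of_notMem hyz _
        have : ENNReal.ofReal (|u y + v y| ^ p)
            = ENNReal.ofReal (|1 * u y| ^ p) := by rw [hv0, add_zero, one_mul]
        rw [this, hval 0 y 1 one_pos]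
        by_cases hy : y ∈ ball (0 : EuclideanSpace ℝ (Fin d)) 1 <;>
          simp [Set.indicator_of_mem, Set.indicator_of_notMem, hy, Real.one_rpow]
      · intro y hy0
        have hu0 : u y = 0 := Set.indicator_of_notMem hy0 _
        have : ENNReal.ofReal (|u y + v y| ^ p)
            = ENNReal.ofReal (|1 * v y| ^ p) := by rw [hu0, zero_add, one_mul]
        rw [this, hval z y 1 one_pos]
        by_cases hy : y ∈ ball z 1 <;>
          simp [Set.indicator_of_mem, Set.indicator_of_notMem, hy, Real.one_rpow]
      · refine habs2 _ (fun y => ?_)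
        have h1 := hub01 y; have h2 := hvb01 y
        rw [abs_le]; constructor <;> nlinarith [h1.1, h1.2, h2.1, h2.2]
    -- norm of g = u - v
    have hng : morreyNorm d p q (fun y => u y - v y) = c ^ (1/q) := by
      refine sumNorm hp hpq R0 hR01 hR0 z (le_of_eq hznorm.symm) _ ?_ ?_ ?_
      · intro y hyz
        have hv0 : v y = 0 := Set.indicator_of_notMem hyz _
        have : ENNReal.ofReal (|u y - v y| ^ p)
            = ENNReal.ofReal (|1 * u y| ^ p) := by rw [hv0, sub_zero, one_mul]
        rw [this, hval 0 y 1 one_pos]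
        by_cases hy : y ∈ ball (0 : EuclideanSpace ℝ (Fin d)) 1 <;>
          simp [Set.indicator_of_mem, Set.indicator_of_notMem, hy, Real.one_rpow]
      · intro y hy0
        have hu0 : u y = 0 := Set.indicator_of_notMem hy0 _
        have : ENNReal.ofReal (|u y - v y| ^ p)
            = ENNReal.ofReal (|1 * v y| ^ p) := by
          rw [hu0, zero_sub, abs_neg, one_mul]
        rw [this, hval z y 1 one_pos]
        by_cases hy : y ∈ ball z 1 <;>
          simp [Set.indicator_of_mem, Set.indicator_of_notMem, hy, Real.one_rpow]
      · refine habs2 _ (fun y => ?_)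
        have h1 := hub01 y; have h2 := hvb01 y
        rw [abs_le]; constructor <;> nlinarith [h1.1, h1.2, h2.1, h2.2]
    -- norm of f + g = 2u
    have htwo : (ENNReal.ofReal (2 ^ p)) ^ (1/p) = 2 := by
      rw [← ENNReal.ofReal_rpow_of_nonneg (by norm_num : (0:ℝ) ≤ 2) hp0.le,
        ← ENNReal.rpow_mul, mul_one_div_cancel hp0.ne', ENNReal.rpow_one]
      norm_num
    have hnfg : morreyNorm d p q (fun x => (u x + v x) + (u x - v x)) = 2 * c ^ (1/q) := by
      have heq : morreyNorm d p q (fun x => (u x + v x) + (u x - v x))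
          = morreyNorm d p q (fun x => 2 * u x) :=
        morreyNorm_congr _ _ (fun y => by ring_nf)
      rw [heq, singleNorm hp hpq 0 _ (ENNReal.ofReal (2 ^ p))
        (fun y => hval 0 y 2 two_pos), htwo]
    have hnfg' : morreyNorm d p q (fun x => (u x + v x) - (u x - v x)) = 2 * c ^ (1/q) := by
      have heq : morreyNorm d p q (fun x => (u x + v x) - (u x - v x))
          = morreyNorm d p q (fun x => 2 * v x) :=
        morreyNorm_congr _ _ (fun y => by ring_nf)
      rw [heq, singleNorm hp hpq z _ (ENNReal.ofReal (2 ^ p))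
        (fun y => hval z y 2 two_pos), htwo]
    have hcqpos : 0 < c ^ (1/q) := pos_iff_ne_zero.mpr hcq.1
    refine ⟨⟨?_, ?_⟩, ⟨?_, ?_⟩, ?_⟩
    · rw [hnf]; exact hcqpos
    · rw [hnf]; exact hcq.2
    · rw [hng]; exact hcqpos
    · rw [hng]; exact hcq.2
    · rw [hnf, hng, hnfg, hnfg']
      set m := (c ^ (1/q)).toReal with hm
      have hmpos : 0 < m := ENNReal.toReal_pos hcq.1 hcq.2
      have h2m : ((2 : ℝ≥0∞) * c ^ (1/q)).toReal = 2 * m := by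
        rw [ENNReal.toReal_mul, ENNReal.toReal_ofNat, hm]
      rw [h2m]
      rw [eq_div_iff (by nlinarith)]
      ring
  exact le_antisymm (csSup_le ⟨2, hmem⟩ hub) (le_csSup ⟨2, hub⟩ hmem)
end
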